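/- arXiv:math/0503720 — 4 statements merged into one kernel-verified Lean document; each statement's English description precedes it below -/
import Mathlib

section
/- Let λ ∈ Λ and let D be a ball (open or closed) contained in K(Q_λ, B). Then: (1) all points of D have the same itinerary under Q_λ, i.e. for every n ≥ 0 and all z, w ∈ D, Q_λ^n(z) ∈ B_0 ⇔ Q_λ^n(w) ∈ B_0 and Q_λ^n(z) ∈ B_1 ⇔ Q_λ^n(w) ∈ B_1; and (2) if this common itinerary θ ∈ {0,1}^ℕ is not preperiodic under the one-sided shift (i.e. there are no n > m ≥ 0 with θ_{k+n−m} = θ_k for all k ≥ m), then the sets Q_λ^n(D), n ≥ 0, are pairwise disjoint and D is not attracted to an attracting periodic point: for every k ≥ 1 and every z₀ with Q_λ^k(z₀) = z₀ and |(Q_λ^k)'(z₀)| < 1, no point x ∈ D satisfies min_{0≤j<k} |Q_λ^n(x) − Q_λ^j(z₀)| → 0 as n → ∞. -/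
open Filter Metric

/-- The polynomial family `P_λ(z) = (λ/p)·z^p + (1 − λ/p)·z^{p+1}`. -/
noncomputable def Pfam {K : Type*} [NontriviallyNormedField K] (p : ℕ) (lam z : K) : K :=
  lam / (p : K) * z ^ p + (1 - lam / (p : K)) * z ^ (p + 1)

/-- Evaluation at `z` of the power series with coefficients `a`. -/
noncomputable def Qser {K : Type*} [NontriviallyNormedField K] (a : ℕ → K) (z : K) : K :=
  ∑' i, a i * z ^ i

/-- The perturbed map `Q*_λ = P_λ + Q`. -/
noncomputable def Qstar {K : Type*} [NontriviallyNormedField K] (p : ℕ) (a : ℕ → K)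
    (lam z : K) : K :=
  Pfam p lam z + Qser a z

/-- The conjugated map `Q_λ(z) = Q*_λ(z + h(λ) − 1) − h(λ) + 1`. -/
noncomputable def Qconj {K : Type*} [NontriviallyNormedField K] (p : ℕ) (a : ℕ → K)
    (h : K → K) (lam z : K) : K :=
  Qstar p a lam (z + h lam - 1) - h lam + 1


namespace S14

variable {K : Type*} [NontriviallyNormedField K] [IsUltrametricDist K]

lemma nadd_le (x y : K) : ‖x + y‖ ≤ max ‖x‖ ‖y‖ :=
  IsUltrametricDist.norm_add_le_max x y

lemma nadd_eq {x y : K} (hlt : ‖y‖ < ‖x‖) : ‖x + y‖ = ‖x‖ := by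
  rw [IsUltrametricDist.norm_add_eq_max_of_norm_ne_norm (ne_of_gt hlt)]
  exact max_eq_left hlt.le

lemma nsub_le (x y : K) : ‖x - y‖ ≤ max ‖x‖ ‖y‖ := by
  rw [sub_eq_add_neg]
  simpa using nadd_le x (-y)

lemma nsub_eq {x y : K} (hlt : ‖y‖ < ‖x‖) : ‖x - y‖ = ‖x‖ := by
  rw [sub_eq_add_neg]
  exact nadd_eq (by simpa using hlt)

lemma pow_diff_le {x z : K} {t : ℝ} (hx : ‖x‖ ≤ t) (hz : ‖z‖ ≤ t) (n : ℕ) :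
    ‖x ^ (n + 1) - z ^ (n + 1)‖ ≤ ‖x - z‖ * t ^ n := by
  have ht : 0 ≤ t := le_trans (norm_nonneg x) hx
  induction n with
  | zero => simp
  | succ n ih =>
    have key : x ^ (n + 2) - z ^ (n + 2) = x ^ (n + 1) * (x - z) + z * (x ^ (n + 1) - z ^ (n + 1)) := by
      ring
    rw [key]
    refine le_trans (nadd_le _ _) (max_le ?_ ?_)
    · rw [norm_mul, norm_pow]
      calc ‖x‖ ^ (n+1) * ‖x - z‖ ≤ t ^ (n+1) * ‖x - z‖ := by
            exact mul_le_mul_of_nonneg_right (pow_le_pow_left₀ (norm_nonneg x) hx _) (norm_nonneg _)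
        _ = ‖x - z‖ * t ^ (n+1) := by ring
    · rw [norm_mul]
      calc ‖z‖ * ‖x ^ (n+1) - z ^ (n+1)‖ ≤ t * (‖x - z‖ * t ^ n) := by
            exact mul_le_mul hz ih (norm_nonneg _) ht
        _ = ‖x - z‖ * t ^ (n+1) := by ring

lemma ntrans_lt {A B : K} {r : ℝ} (h1 : ‖A‖ < r) (h2 : ‖A - B‖ < r) : ‖B‖ < r := by
  have : B = A - (A - B) := by ring
  rw [this]
  exact lt_of_le_of_lt (nsub_le _ _) (max_lt h1 h2)

lemma unit_norm {x : K} (hx : ‖x - 1‖ < 1) : ‖x‖ = 1 := by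
  have : x = 1 + (x - 1) := by ring
  rw [this, nadd_eq (by simpa using hx), norm_one]

lemma mul_one_unit {m : ℝ} {A B : K} (hA : ‖A - 1‖ ≤ m) (hB : ‖B - 1‖ ≤ m) (hA1 : ‖A‖ ≤ 1) :
    ‖A * B - 1‖ ≤ m := by
  have key : A * B - 1 = A * (B - 1) + (A - 1) := by ring
  rw [key]
  refine le_trans (nadd_le _ _) (max_le ?_ hA)
  rw [norm_mul]
  calc ‖A‖ * ‖B - 1‖ ≤ 1 * m := mul_le_mul hA1 hB (norm_nonneg _) zero_le_one
    _ = m := one_mul m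

lemma pow_one_unit {m : ℝ} {A : K} (hA : ‖A - 1‖ ≤ m) (hA1 : ‖A‖ ≤ 1) (hm : 0 ≤ m) :
    ∀ j : ℕ, ‖A ^ j - 1‖ ≤ m := by
  intro j
  induction j with
  | zero => simpa using hm
  | succ j ih =>
    have : A ^ (j + 1) = A * A ^ j := by ring
    rw [this]
    exact mul_one_unit hA ih hA1

lemma prod_one_unit {m : ℝ} {A B : K} (hA : ‖A - 1‖ ≤ m) (hB : ‖B - 1‖ ≤ m)
    (hA1 : ‖A‖ ≤ 1) (hB1 : ‖B‖ ≤ 1) (hm : 0 ≤ m) (j l : ℕ) :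
    ‖A ^ j * B ^ l - 1‖ ≤ m := by
  have h1 : ‖A ^ j - 1‖ ≤ m := pow_one_unit hA hA1 hm j
  have h2 : ‖B ^ l - 1‖ ≤ m := pow_one_unit hB hB1 hm l
  have h3 : ‖A ^ j‖ ≤ 1 := by
    rw [norm_pow]; exact pow_le_one₀ (norm_nonneg _) hA1
  exact mul_one_unit h1 h2 h3

lemma exists_golden [IsAlgClosed K] : ∃ g : K, ‖g‖ = 1 ∧ ‖g - 1‖ = 1 ∧ ‖g + 1‖ = 1 := by
  have hdeg : (Polynomial.C (1:K) * Polynomial.X ^ 2 + Polynomial.C (-1) * Polynomial.X +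
      Polynomial.C (-1)).degree = 2 := Polynomial.degree_quadratic one_ne_zero
  obtain ⟨g, hg⟩ := IsAlgClosed.exists_root _ (by rw [hdeg]; decide)
  have hroot : g ^ 2 = g + 1 := by
    have := hg
    simp only [Polynomial.IsRoot, Polynomial.eval_add, Polynomial.eval_mul, Polynomial.eval_pow,
      Polynomial.eval_C, Polynomial.eval_X] at this
    linear_combination this
  have hgle : ‖g‖ ≤ 1 := by
    by_contra hgt
    push_neg at hgt
    have h1 : ‖g ^ 2‖ = ‖g‖ ^ 2 := norm_pow g 2
    have h2 : ‖g + 1‖ ≤ max ‖g‖ 1 := by simpa using nadd_le g 1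
    rw [hroot] at h1
    have : max ‖g‖ 1 = ‖g‖ := max_eq_left hgt.le
    rw [this] at h2
    nlinarith [norm_nonneg g]
  have hg1le : ‖g - 1‖ ≤ 1 := le_trans (nsub_le g 1) (by simp [hgle])
  have hmul : g * (g - 1) = 1 := by linear_combination hroot
  have hprod : ‖g‖ * ‖g - 1‖ = 1 := by rw [← norm_mul, hmul, norm_one]
  have hg_eq : ‖g‖ = 1 := by nlinarith [norm_nonneg g, norm_nonneg (g - 1)]
  have hg1_eq : ‖g - 1‖ = 1 := by nlinarith
  refine ⟨g, hg_eq, hg1_eq, ?_⟩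
  have : g + 1 = g ^ 2 := hroot.symm
  rw [this, norm_pow, hg_eq, one_pow]

section Poly

variable [IsAlgClosed K]

lemma rootfree {s : ℝ} (hs : 0 < s) :
    ∀ d : ℕ, ∀ F : Polynomial K, F.natDegree = d → 0 < d →
      (∀ ξ : K, F.IsRoot ξ → s < ‖ξ‖) → ∀ i, 1 ≤ i → ‖F.coeff i‖ * s ^ i < ‖F.coeff 0‖ := by
  intro d
  induction d using Nat.strong_induction_on with
  | _ d IH =>
    intro F hFd hd hroots i hi
    have hF0 : F ≠ 0 := by
      rintro rfl
      simp at hFd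
      omega
    have hdeg0 : F.degree ≠ 0 := by
      rw [Polynomial.degree_eq_natDegree hF0, hFd]
      exact_mod_cast Nat.pos_iff_ne_zero.mp hd
    obtain ⟨ξ, hξ⟩ := IsAlgClosed.exists_root F hdeg0
    obtain ⟨G, hG⟩ := Polynomial.dvd_iff_isRoot.mpr hξ
    have hG0 : G ≠ 0 := by
      rintro rfl
      rw [mul_zero] at hG
      exact hF0 hG
    have hnd : d = 1 + G.natDegree := by
      rw [← hFd, hG, Polynomial.natDegree_mul (Polynomial.X_sub_C_ne_zero ξ) hG0,
        Polynomial.natDegree_X_sub_C]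
    have hsξ : s < ‖ξ‖ := hroots ξ hξ
    have hξ0 : 0 < ‖ξ‖ := hs.trans hsξ
    have hc0 : F.coeff 0 = -ξ * G.coeff 0 := by
      rw [hG, Polynomial.mul_coeff_zero]
      congr 1
      simp
    have hn0 : ‖F.coeff 0‖ = ‖ξ‖ * ‖G.coeff 0‖ := by
      rw [hc0, norm_mul, norm_neg]
    have hcS : ∀ j : ℕ, F.coeff (j + 1) = G.coeff j - ξ * G.coeff (j + 1) := by
      intro j
      rw [hG, sub_mul, Polynomial.coeff_sub, Polynomial.coeff_X_mul, Polynomial.coeff_C_mul]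
    obtain ⟨j, rfl⟩ : ∃ j, i = j + 1 := ⟨i - 1, by omega⟩
    rcases Nat.eq_zero_or_pos G.natDegree with hGd | hGd
    · -- G constant
      have hGc : ∀ l, 1 ≤ l → G.coeff l = 0 := fun l hl =>
        Polynomial.coeff_eq_zero_of_natDegree_lt (by omega)
      have hGc0 : G.coeff 0 ≠ 0 := by
        intro h0
        apply hG0
        have := Polynomial.eq_C_of_natDegree_eq_zero hGd
        rw [this, h0, map_zero]
      rcases Nat.eq_zero_or_pos j with rfl | hj
      · rw [hcS, hGc 1 le_rfl, mul_zero, sub_zero, hn0, pow_one]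
        calc ‖G.coeff 0‖ * s < ‖G.coeff 0‖ * ‖ξ‖ :=
              mul_lt_mul_of_pos_left hsξ (norm_pos_iff.mpr hGc0)
          _ = ‖ξ‖ * ‖G.coeff 0‖ := mul_comm _ _
      · rw [hcS, hGc j hj, hGc (j+1) (by omega), mul_zero, sub_zero, norm_zero, zero_mul, hn0]
        exact mul_pos hξ0 (norm_pos_iff.mpr hGc0)
    · -- G nonconstant
      have IHG := IH G.natDegree (by omega) G rfl hGd (fun η hη => hroots η (by
        rw [Polynomial.IsRoot, hG, Polynomial.eval_mul, hη, mul_zero]))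
      have hGc0pos : 0 < ‖G.coeff 0‖ :=
        lt_of_le_of_lt (by positivity) (IHG 1 le_rfl)
      have hbound : ‖F.coeff (j+1)‖ * s ^ (j+1) ≤
          max (‖G.coeff j‖ * s ^ (j+1)) (‖ξ‖ * ‖G.coeff (j+1)‖ * s ^ (j+1)) := by
        rw [← max_mul_of_nonneg _ _ (pow_nonneg hs.le _)]
        refine mul_le_mul_of_nonneg_right ?_ (pow_nonneg hs.le _)
        rw [hcS]
        refine le_trans (nsub_le _ _) ?_
        rw [norm_mul]
      refine lt_of_le_of_lt hbound (max_lt ?_ ?_)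
      · rcases Nat.eq_zero_or_pos j with rfl | hj
        · rw [pow_one, hn0]
          calc ‖G.coeff 0‖ * s < ‖G.coeff 0‖ * ‖ξ‖ := mul_lt_mul_of_pos_left hsξ hGc0pos
            _ = ‖ξ‖ * ‖G.coeff 0‖ := mul_comm _ _
        · have h1 : ‖G.coeff j‖ * s ^ j < ‖G.coeff 0‖ := IHG j hj
          have : ‖G.coeff j‖ * s ^ (j+1) = (‖G.coeff j‖ * s ^ j) * s := by ring
          rw [this, hn0]
          calc (‖G.coeff j‖ * s ^ j) * s < ‖G.coeff 0‖ * s := mul_lt_mul_of_pos_right h1 hs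
            _ < ‖G.coeff 0‖ * ‖ξ‖ := mul_lt_mul_of_pos_left hsξ hGc0pos
            _ = ‖ξ‖ * ‖G.coeff 0‖ := mul_comm _ _
      · have h1 : ‖G.coeff (j+1)‖ * s ^ (j+1) < ‖G.coeff 0‖ := IHG (j+1) (by omega)
        rw [mul_assoc, hn0]
        exact mul_lt_mul_of_pos_left h1 hξ0

lemma poly_onto {s σ : ℝ} (hs : 0 < s) (F : Polynomial K) (N : ℕ)
    (hσat : ∃ I, 1 ≤ I ∧ I ≤ N ∧ σ = ‖F.coeff I‖ * s ^ I)
    (b : K) (hb : ‖b - F.coeff 0‖ ≤ σ) :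
    ∃ w : K, ‖w‖ ≤ s ∧ F.eval w = b := by
  obtain ⟨I, hI1, hIN, hIσ⟩ := hσat
  by_cases hFI : F.coeff I = 0
  · have hσ0 : σ = 0 := by rw [hIσ, hFI, norm_zero, zero_mul]
    have hb0 : b = F.coeff 0 := by
      rw [hσ0] at hb
      have := le_antisymm hb (norm_nonneg _)
      rwa [norm_eq_zero, sub_eq_zero] at this
    exact ⟨0, by simpa using hs.le, by rw [← Polynomial.coeff_zero_eq_eval_zero, hb0]⟩
  · by_contra hno
    push_neg at hno
    set Hq : Polynomial K := F - Polynomial.C b with hHq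
    have hHc0 : Hq.coeff 0 = F.coeff 0 - b := by
      simp [hHq]
    have hHci : ∀ i, 1 ≤ i → Hq.coeff i = F.coeff i := by
      intro i hi
      simp [hHq, Polynomial.coeff_C, Nat.pos_iff_ne_zero.mp hi]
    have hHI : Hq.coeff I ≠ 0 := by rw [hHci I hI1]; exact hFI
    have hdeg : 0 < Hq.natDegree :=
      lt_of_lt_of_le (by omega) (Polynomial.le_natDegree_of_ne_zero hHI)
    have hroots : ∀ ξ : K, Hq.IsRoot ξ → s < ‖ξ‖ := by
      intro ξ hξ
      by_contra hle
      push_neg at hle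
      have := hξ
      simp only [Polynomial.IsRoot, hHq, Polynomial.eval_sub, Polynomial.eval_C] at this
      exact hno ξ hle (sub_eq_zero.mp this)
    have key := rootfree hs Hq.natDegree Hq rfl hdeg hroots I hI1
    rw [hHci I hI1, hHc0, ← hIσ] at key
    rw [norm_sub_rev] at hb
    exact absurd (lt_of_lt_of_le key hb) (lt_irrefl σ)

lemma poly_incr {s σ : ℝ} (hs : 0 ≤ s) (hσ0 : 0 ≤ σ) (F : Polynomial K) (N : ℕ)
    (hdeg : F.natDegree ≤ N)
    (hσup : ∀ i, 1 ≤ i → i ≤ N → ‖F.coeff i‖ * s ^ i ≤ σ) :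
    ∀ w : K, ‖w‖ ≤ s → ‖F.eval w - F.coeff 0‖ ≤ σ := by
  intro w hw
  have hev : F.eval w = ∑ i ∈ Finset.range (N + 1), F.coeff i * w ^ i :=
    Polynomial.eval_eq_sum_range' (by omega) w
  have hsplit : ∑ i ∈ Finset.range (N + 1), F.coeff i * w ^ i =
      (∑ i ∈ Finset.range N, F.coeff (i+1) * w ^ (i+1)) + F.coeff 0 := by
    rw [Finset.sum_range_succ']
    simp
  rw [hev, hsplit, add_sub_cancel_right]
  refine IsUltrametricDist.norm_sum_le_of_forall_le_of_nonneg hσ0 ?_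
  intro i hi
  rw [Finset.mem_range] at hi
  calc ‖F.coeff (i+1) * w ^ (i+1)‖ = ‖F.coeff (i+1)‖ * ‖w‖ ^ (i+1) := by rw [norm_mul, norm_pow]
    _ ≤ ‖F.coeff (i+1)‖ * s ^ (i+1) :=
        mul_le_mul_of_nonneg_left (pow_le_pow_left₀ (norm_nonneg w) hw _) (norm_nonneg _)
    _ ≤ σ := hσup (i+1) (by omega) (by omega)

end Poly
section Dyn

variable {p : ℕ} {a : ℕ → K} {h : K → K} {lam : K} {rhat C : ℝ}

structure Hyp (p : ℕ) (a : ℕ → K) (h : K → K) (lam : K) (rhat C : ℝ) : Prop where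
  hp : p.Prime
  hpn : ‖(p : K)‖ = (p : ℝ)⁻¹
  hr : 1 < rhat
  ha : ∀ i, ‖a i‖ * rhat ^ i ≤ C
  hC1 : C < 1
  hl : ‖lam - 1‖ < 1
  hh : ‖h lam - 1‖ ≤ ‖Qser a 1‖ / p
  hfix : Qstar p a lam (h lam) = h lam

variable [CompleteSpace K]
variable (H : Hyp p a h lam rhat C)
include H

lemma Hyp.p2 : 2 ≤ p := H.hp.two_le

lemma Hyp.pR1 : (1 : ℝ) < p := by exact_mod_cast H.hp.one_lt

lemma Hyp.pR0 : (0 : ℝ) < p := lt_trans one_pos H.pR1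

lemma Hyp.rh0 : (0 : ℝ) < rhat := lt_trans one_pos H.hr

lemma Hyp.C0 : 0 ≤ C := le_trans (norm_nonneg (a 0)) (by simpa using H.ha 0)

lemma Hyp.haC (i : ℕ) : ‖a i‖ ≤ C / rhat ^ i :=
  (le_div_iff₀ (pow_pos H.rh0 i)).mpr (H.ha i)

lemma Hyp.haC1 (i : ℕ) : ‖a i‖ ≤ C := by
  refine le_trans (H.haC i) ?_
  exact div_le_self H.C0 (one_le_pow₀ H.hr.le)

lemma Hyp.nlam : ‖lam‖ = 1 := by
  have : lam = 1 + (lam - 1) := by ring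
  rw [this, nadd_eq (by simpa using H.hl), norm_one]

lemma Hyp.nlamp : ‖lam / (p : K)‖ = p := by
  rw [norm_div, H.nlam, H.hpn, one_div, inv_inv]

lemma Hyp.nlamp1 : ‖1 - lam / (p : K)‖ = p := by
  have h1 : ‖(1 : K)‖ < ‖lam / (p : K)‖ := by
    rw [norm_one, H.nlamp]; exact H.pR1
  have : (1 : K) - lam / (p : K) = -(lam / (p:K) - 1) := by ring
  rw [this, norm_neg, nsub_eq h1, H.nlamp]

lemma Hyp.sumQ {z : K} (hz : ‖z‖ ≤ 1) : Summable fun i => a i * z ^ i := by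
  refine Summable.of_norm ?_
  refine Summable.of_nonneg_of_le (fun i => norm_nonneg _) (fun i => ?_)
    ((summable_geometric_of_lt_one (inv_nonneg.mpr H.rh0.le) (inv_lt_one_of_one_lt₀ H.hr)).mul_left C)
  rw [norm_mul, norm_pow]
  calc ‖a i‖ * ‖z‖ ^ i ≤ (C / rhat ^ i) * 1 := by
        refine mul_le_mul (H.haC i) (pow_le_one₀ (norm_nonneg _) hz) (by positivity)
          (div_nonneg H.C0 (pow_nonneg H.rh0.le i))
    _ = C * (rhat⁻¹) ^ i := by rw [mul_one, div_eq_mul_inv, inv_pow]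

lemma Hyp.nQser {z : K} (hz : ‖z‖ ≤ rhat) : ‖Qser a z‖ ≤ C := by
  refine IsUltrametricDist.norm_tsum_le_of_forall_le_of_nonneg H.C0 (fun i => ?_)
  rw [norm_mul, norm_pow]
  calc ‖a i‖ * ‖z‖ ^ i ≤ ‖a i‖ * rhat ^ i :=
        mul_le_mul_of_nonneg_left (pow_le_pow_left₀ (norm_nonneg _) hz i) (norm_nonneg _)
    _ ≤ C := H.ha i

lemma Hyp.QserLip {z z' : K} (hz : ‖z‖ ≤ 1) (hz' : ‖z'‖ ≤ 1) :
    ‖Qser a z - Qser a z'‖ ≤ C * ‖z - z'‖ := by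
  have h1 := H.sumQ hz
  have h2 := H.sumQ hz'
  have heq : Qser a z - Qser a z' = ∑' i, (a i * z ^ i - a i * z' ^ i) := by
    rw [Qser, Qser, Summable.tsum_sub h1 h2]
  rw [heq]
  refine IsUltrametricDist.norm_tsum_le_of_forall_le_of_nonneg (mul_nonneg H.C0 (norm_nonneg _)) (fun i => ?_)
  match i with
  | 0 => simp [mul_nonneg H.C0 (norm_nonneg (z - z'))]
  | (n+1) =>
    have : a (n+1) * z ^ (n+1) - a (n+1) * z' ^ (n+1) = a (n+1) * (z ^ (n+1) - z' ^ (n+1)) := by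
      ring
    rw [this, norm_mul]
    calc ‖a (n+1)‖ * ‖z ^ (n+1) - z' ^ (n+1)‖ ≤ C * (‖z - z'‖ * 1 ^ n) :=
          mul_le_mul (H.haC1 _) (pow_diff_le hz hz' n) (norm_nonneg _) H.C0
      _ = C * ‖z - z'‖ := by rw [one_pow, mul_one]

lemma Hyp.nh1 : ‖h lam - 1‖ ≤ C / p := by
  refine le_trans H.hh ?_
  have h1 : ‖Qser a (1:K)‖ ≤ C := H.nQser (by rw [norm_one]; exact H.hr.le)
  exact div_le_div_of_nonneg_right h1 H.pR0.le

lemma Hyp.nh : ‖h lam - 1‖ < 1 := by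
  refine lt_of_le_of_lt H.nh1 ?_
  rw [div_lt_one H.pR0]
  exact lt_trans H.hC1 H.pR1

lemma Hyp.nh' : ‖1 - h lam‖ < 1 := by rw [norm_sub_rev]; exact H.nh

lemma Qdef (x : K) :
    Qconj p a h lam x = lam / (p : K) * (x + (h lam - 1)) ^ p
      + (1 - lam / (p : K)) * (x + (h lam - 1)) ^ (p + 1)
      + Qser a (x + (h lam - 1)) + (1 - h lam) := by
  have harg : x + h lam - 1 = x + (h lam - 1) := by ring
  rw [Qconj, Qstar, Pfam, harg]
  ring

lemma Qfix1 : Qconj p a h lam 1 = 1 := by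
  have harg : (1 : K) + h lam - 1 = h lam := by ring
  rw [Qconj, Qstar, harg, ← Qstar, H.hfix]
  ring

lemma Hyp.growth {x : K} (hx : 1 < ‖x‖) (hx2 : ‖x‖ ≤ rhat) :
    ‖Qconj p a h lam x‖ = p * ‖x‖ ^ (p + 1) := by
  set y := x + (h lam - 1) with hy
  have hyx : ‖y‖ = ‖x‖ := by
    rw [hy, nadd_eq (lt_trans H.nh hx)]
  have key : Qconj p a h lam x =
      (1 - lam / (p : K)) * y ^ (p + 1) + (lam / (p : K) * y ^ p + Qser a y + (1 - h lam)) := by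
    rw [Qdef H]; ring
  have hmain : ‖(1 - lam / (p : K)) * y ^ (p + 1)‖ = p * ‖x‖ ^ (p + 1) := by
    rw [norm_mul, norm_pow, H.nlamp1, hyx]
  have h1le : (1:ℝ) < p * ‖x‖ ^ (p + 1) := by
    have h2 : (1:ℝ) ≤ ‖x‖ ^ (p + 1) := one_le_pow₀ hx.le
    nlinarith [H.pR1]
  have hrest : ‖lam / (p : K) * y ^ p + Qser a y + (1 - h lam)‖ < p * ‖x‖ ^ (p + 1) := by
    refine lt_of_le_of_lt (nadd_le _ _) (max_lt (lt_of_le_of_lt (nadd_le _ _) (max_lt ?_ ?_)) ?_)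
    · rw [norm_mul, norm_pow, H.nlamp, hyx]
      have : ‖x‖ ^ p < ‖x‖ ^ (p + 1) := pow_lt_pow_right₀ hx (by omega)
      exact mul_lt_mul_of_pos_left this H.pR0
    · refine lt_of_le_of_lt (H.nQser (le_trans (le_of_eq hyx) hx2)) ?_
      exact lt_trans H.hC1 h1le
    · exact lt_trans H.nh' h1le
  rw [key, nadd_eq (by rw [hmain]; exact hrest), hmain]

lemma Hyp.sphere1 {x : K} (hx : ‖x‖ = 1) (hx1 : ‖x - 1‖ = 1) :
    ‖Qconj p a h lam x‖ = p := by
  set y := x + (h lam - 1) with hy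
  have hyx : ‖y‖ = 1 := by
    rw [hy, nadd_eq (by rw [hx]; exact H.nh), hx]
  have hy1 : ‖y - 1‖ = 1 := by
    have : y - 1 = (x - 1) + (h lam - 1) := by rw [hy]; ring
    rw [this, nadd_eq (by rw [hx1]; exact H.nh), hx1]
  have key : Qconj p a h lam x =
      lam / (p : K) * y ^ p * (1 - y) + (y ^ (p + 1) + Qser a y + (1 - h lam)) := by
    rw [Qdef H]; ring
  have hmain : ‖lam / (p : K) * y ^ p * (1 - y)‖ = p := by
    rw [norm_mul, norm_mul, norm_pow, H.nlamp, hyx, one_pow, norm_sub_rev, hy1]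
    ring
  have hrest : ‖y ^ (p + 1) + Qser a y + (1 - h lam)‖ < p := by
    refine lt_of_le_of_lt (nadd_le _ _) (max_lt (lt_of_le_of_lt (nadd_le _ _) (max_lt ?_ ?_)) ?_)
    · rw [norm_pow, hyx, one_pow]; exact H.pR1
    · refine lt_of_le_of_lt (H.nQser (by rw [hyx]; exact H.hr.le)) ?_
      exact lt_trans H.hC1 H.pR1
    · exact lt_trans H.nh' H.pR1
  rw [key, nadd_eq (by rw [hmain]; exact hrest), hmain]

lemma Hyp.b0exact {x : K} {t : ℝ} (hyt : ‖x + (h lam - 1)‖ = t) (ht1 : t < 1)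
    (hpt : 1 ≤ (p : ℝ) * t ^ p) :
    ‖Qconj p a h lam x‖ = p * t ^ p := by
  set y := x + (h lam - 1) with hy
  have key : Qconj p a h lam x =
      lam / (p : K) * y ^ p + ((1 - lam / (p : K)) * y ^ (p + 1) + Qser a y + (1 - h lam)) := by
    rw [Qdef H]; ring
  have hmain : ‖lam / (p : K) * y ^ p‖ = p * t ^ p := by
    rw [norm_mul, norm_pow, H.nlamp, hyt]
  have ht0 : 0 ≤ t := by rw [← hyt]; exact norm_nonneg _
  have hpt0 : 0 < (p:ℝ) * t ^ p := lt_of_lt_of_le one_pos hpt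
  have hrest : ‖(1 - lam / (p : K)) * y ^ (p + 1) + Qser a y + (1 - h lam)‖ < p * t ^ p := by
    refine lt_of_le_of_lt (nadd_le _ _) (max_lt (lt_of_le_of_lt (nadd_le _ _) (max_lt ?_ ?_)) ?_)
    · rw [norm_mul, norm_pow, H.nlamp1, hyt, pow_succ, ← mul_assoc]
      nlinarith
    · refine lt_of_le_of_lt (H.nQser (by rw [hyt]; exact le_trans ht1.le H.hr.le)) ?_
      exact lt_of_lt_of_le H.hC1 hpt
    · exact lt_of_lt_of_le H.nh' hpt
  rw [key, nadd_eq (by rw [hmain]; exact hrest), hmain]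

lemma Hyp.b0tail {x : K} {t : ℝ} (hyt : ‖x + (h lam - 1)‖ = t) (ht1 : t < 1)
    (hpt : (p : ℝ) * t ^ p ≤ 1) :
    ‖Qconj p a h lam x - lam / (p : K) * (x + (h lam - 1)) ^ p‖ < 1 := by
  set y := x + (h lam - 1) with hy
  have key : Qconj p a h lam x - lam / (p : K) * y ^ p =
      (1 - lam / (p : K)) * y ^ (p + 1) + Qser a y + (1 - h lam) := by
    rw [Qdef H]; ring
  have ht0 : 0 ≤ t := by rw [← hyt]; exact norm_nonneg _
  rw [key]
  refine lt_of_le_of_lt (nadd_le _ _) (max_lt (lt_of_le_of_lt (nadd_le _ _) (max_lt ?_ ?_)) ?_)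
  · rw [norm_mul, norm_pow, H.nlamp1, hyt, pow_succ, ← mul_assoc]
    nlinarith [H.pR0, pow_nonneg ht0 p]
  · exact lt_of_le_of_lt (H.nQser (by rw [hyt]; exact le_trans ht1.le H.hr.le)) H.hC1
  · exact H.nh'

lemma Hyp.twoB0 {u v : K} {t : ℝ} (hyu : ‖u + (h lam - 1)‖ ≤ t) (hyv : ‖v + (h lam - 1)‖ ≤ t)
    (ht1 : t ≤ 1) :
    ‖Qconj p a h lam u - Qconj p a h lam v‖ ≤ max ((p : ℝ) * t ^ (p - 1) * ‖u - v‖) ‖u - v‖ := by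
  set yu := u + (h lam - 1) with hyu_def
  set yv := v + (h lam - 1) with hyv_def
  have ht0 : 0 ≤ t := le_trans (norm_nonneg _) hyu
  have hδ : yu - yv = u - v := by rw [hyu_def, hyv_def]; ring
  have key : Qconj p a h lam u - Qconj p a h lam v =
      lam / (p : K) * (yu ^ p - yv ^ p) + ((1 - lam / (p : K)) * (yu ^ (p + 1) - yv ^ (p + 1))
        + (Qser a yu - Qser a yv)) := by
    rw [Qdef H, Qdef H]; ring
  have hp1 : p - 1 + 1 = p := Nat.succ_pred_eq_of_pos H.hp.pos
  have hd1 : ‖yu ^ p - yv ^ p‖ ≤ ‖u - v‖ * t ^ (p - 1) := by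
    rw [← hp1, ← hδ]
    exact pow_diff_le hyu hyv (p - 1)
  have hd2 : ‖yu ^ (p + 1) - yv ^ (p + 1)‖ ≤ ‖u - v‖ * t ^ (p - 1) := by
    rw [← hδ]
    refine le_trans (pow_diff_le hyu hyv p) ?_
    refine mul_le_mul_of_nonneg_left ?_ (norm_nonneg _)
    exact pow_le_pow_of_le_one ht0 ht1 (by omega)
  have hq : ‖Qser a yu - Qser a yv‖ ≤ ‖u - v‖ := by
    refine le_trans (H.QserLip (le_trans hyu ht1) (le_trans hyv ht1)) ?_
    rw [hδ]
    nlinarith [norm_nonneg (u - v), H.C0, H.hC1]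
  rw [key]
  refine le_trans (nadd_le _ _) (max_le ?_ (le_trans (nadd_le _ _) (max_le ?_ ?_)))
  · refine le_max_of_le_left ?_
    rw [norm_mul, H.nlamp]
    calc (p:ℝ) * ‖yu ^ p - yv ^ p‖ ≤ (p:ℝ) * (‖u - v‖ * t ^ (p-1)) :=
          mul_le_mul_of_nonneg_left hd1 H.pR0.le
      _ = (p:ℝ) * t ^ (p-1) * ‖u - v‖ := by ring
  · refine le_max_of_le_left ?_
    rw [norm_mul, H.nlamp1]
    calc (p:ℝ) * ‖yu ^ (p+1) - yv ^ (p+1)‖ ≤ (p:ℝ) * (‖u - v‖ * t ^ (p-1)) :=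
          mul_le_mul_of_nonneg_left hd2 H.pR0.le
      _ = (p:ℝ) * t ^ (p-1) * ‖u - v‖ := by ring
  · exact le_max_of_le_right hq

end Dyn
section Dyn2

variable {p : ℕ} {a : ℕ → K} {h : K → K} {lam : K} {rhat C : ℝ}
variable [CompleteSpace K]

/-- The filled Julia set. -/
def KK (p : ℕ) (a : ℕ → K) (h : K → K) (lam : K) (rhat : ℝ) : Set K :=
  {x | ∀ n : ℕ, ‖(Qconj p a h lam)^[n] x‖ ≤ rhat}

lemma k_fwd {x : K} (hx : x ∈ KK p a h lam rhat) : Qconj p a h lam x ∈ KK p a h lam rhat := by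
  intro n
  have := hx (n + 1)
  rwa [Function.iterate_succ_apply] at this

lemma k_iter {x : K} (hx : x ∈ KK p a h lam rhat) (n : ℕ) :
    (Qconj p a h lam)^[n] x ∈ KK p a h lam rhat := by
  intro m
  rw [← Function.iterate_add_apply]
  exact hx (m + n)

lemma ball_swap {u v : K} {S : Set K} (hb : closedBall u ‖u - v‖ ⊆ S) :
    closedBall v ‖v - u‖ ⊆ S := by
  intro w hw
  rw [mem_closedBall, dist_eq_norm, norm_sub_rev v u] at hw
  apply hb
  rw [mem_closedBall, dist_eq_norm]
  have : w - u = (w - v) + (v - u) := by ring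
  rw [this]
  refine le_trans (nadd_le _ _) (max_le hw ?_)
  rw [norm_sub_rev]

variable (H : Hyp p a h lam rhat C)
include H

lemma Hyp.fresh {A B : K} {t : ℝ} (hA : ‖A‖ ≤ t) (hB : ‖B‖ ≤ t) (hAB : ‖A - B‖ = t)
    (ht : 0 < t) : ‖A ^ p - B ^ p‖ = t ^ p := by
  set d := A - B with hd
  have hA' : A = B + d := by rw [hd]; ring
  have hp1 : p - 1 + 1 = p := Nat.succ_pred_eq_of_pos H.hp.pos
  have key : A ^ p - B ^ p = d ^ p +
      ∑ i ∈ Finset.range (p - 1), B ^ (i+1) * d ^ (p - (i+1)) * (p.choose (i+1) : K) := by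
    rw [hA', add_pow]
    rw [← hp1, Finset.sum_range_succ, Finset.sum_range_succ']
    simp [hp1]
    ring
  have hrest : ‖∑ i ∈ Finset.range (p - 1), B ^ (i+1) * d ^ (p - (i+1)) * (p.choose (i+1) : K)‖
      ≤ t ^ p * (p : ℝ)⁻¹ := by
    refine IsUltrametricDist.norm_sum_le_of_forall_le_of_nonneg ?_ ?_
    · positivity
    · intro i hi
      rw [Finset.mem_range] at hi
      obtain ⟨k, hk⟩ := H.hp.dvd_choose_self (Nat.succ_ne_zero i) (by omega)
      have hcast : ((p.choose (i+1) : ℕ) : K) = (p : K) * (k : K) := by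
        rw [hk]; push_cast; ring
      rw [norm_mul, norm_mul, hcast, norm_mul, H.hpn, norm_pow, norm_pow]
      have h1 : ‖B‖ ^ (i+1) * ‖d‖ ^ (p - (i+1)) ≤ t ^ p := by
        calc ‖B‖ ^ (i+1) * ‖d‖ ^ (p - (i+1)) ≤ t ^ (i+1) * t ^ (p - (i+1)) := by
              refine mul_le_mul (pow_le_pow_left₀ (norm_nonneg _) hB _)
                (pow_le_pow_left₀ (norm_nonneg _) (le_of_eq hAB) _) (by positivity) (by positivity)
          _ = t ^ p := by rw [← pow_add]; congr 1; omega
      have h2 : (p:ℝ)⁻¹ * ‖(k : K)‖ ≤ (p:ℝ)⁻¹ :=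
        mul_le_of_le_one_right (by positivity) (IsUltrametricDist.norm_natCast_le_one K k)
      calc ‖B‖ ^ (i+1) * ‖d‖ ^ (p-(i+1)) * ((p:ℝ)⁻¹ * ‖(k:K)‖)
          ≤ t ^ p * ((p:ℝ)⁻¹ * ‖(k:K)‖) := by
            refine mul_le_mul_of_nonneg_right h1 (by positivity)
        _ ≤ t ^ p * (p:ℝ)⁻¹ := mul_le_mul_of_nonneg_left h2 (by positivity)
  have hdp : ‖d ^ p‖ = t ^ p := by rw [norm_pow, hd, hAB]
  have hlt : t ^ p * (p:ℝ)⁻¹ < t ^ p := by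
    have : (p:ℝ)⁻¹ < 1 := inv_lt_one_of_one_lt₀ H.pR1
    nlinarith [pow_pos ht p]
  rw [key, nadd_eq (by rw [hdp]; exact lt_of_le_of_lt hrest hlt), hdp]

lemma Hyp.twoB1 {u v : K} (hu : ‖u - 1‖ < 1) (hv : ‖v - 1‖ < 1) :
    ‖Qconj p a h lam u - Qconj p a h lam v‖ = p * ‖u - v‖ := by
  by_cases huv : u = v
  · simp [huv]
  set yu := u + (h lam - 1) with hyu_def
  set yv := v + (h lam - 1) with hyv_def
  have hyu1 : ‖yu - 1‖ < 1 := by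
    have : yu - 1 = (u - 1) + (h lam - 1) := by rw [hyu_def]; ring
    rw [this]
    exact lt_of_le_of_lt (nadd_le _ _) (max_lt hu H.nh)
  have hyv1 : ‖yv - 1‖ < 1 := by
    have : yv - 1 = (v - 1) + (h lam - 1) := by rw [hyv_def]; ring
    rw [this]
    exact lt_of_le_of_lt (nadd_le _ _) (max_lt hv H.nh)
  set m := max ‖yu - 1‖ ‖yv - 1‖ with hm_def
  have hm0 : 0 ≤ m := le_trans (norm_nonneg _) (le_max_left _ _)
  have hm1 : m < 1 := max_lt hyu1 hyv1
  have hyuN : ‖yu‖ ≤ 1 := by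
    have : yu = 1 + (yu - 1) := by ring
    rw [this]
    refine le_trans (nadd_le _ _) (max_le (by rw [norm_one]) (le_trans (le_max_left _ ‖yv-1‖) hm1.le))
  have hyvN : ‖yv‖ ≤ 1 := by
    have : yv = 1 + (yv - 1) := by ring
    rw [this]
    refine le_trans (nadd_le _ _) (max_le (by rw [norm_one]) (le_trans (le_max_right ‖yu-1‖ _) hm1.le))
  set Sp := ∑ i ∈ Finset.range p, yu ^ i * yv ^ (p - 1 - i) with hSp_def
  set Sp1 := ∑ i ∈ Finset.range (p+1), yu ^ i * yv ^ (p + 1 - 1 - i) with hSp1_def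
  have hterm : ∀ i l : ℕ, ‖yu ^ i * yv ^ l - 1‖ ≤ m :=
    fun i l => prod_one_unit (le_max_left _ _) (le_max_right _ _) hyuN hyvN hm0 i l
  have hSpm : ‖Sp - (p : K)‖ ≤ m := by
    have hpsum : (p : K) = ∑ _i ∈ Finset.range p, (1 : K) := by simp
    rw [hpsum, ← Finset.sum_sub_distrib]
    exact IsUltrametricDist.norm_sum_le_of_forall_le_of_nonneg hm0 (fun i _ => hterm i _)
  have hSp1m : ‖Sp1 - ((p : K) + 1)‖ ≤ m := by
    have hpsum : (p : K) + 1 = ∑ _i ∈ Finset.range (p+1), (1 : K) := by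
      simp
    rw [hpsum, ← Finset.sum_sub_distrib]
    exact IsUltrametricDist.norm_sum_le_of_forall_le_of_nonneg hm0 (fun i _ => hterm i _)
  have hSpN : ‖Sp‖ < 1 := by
    have : Sp = (p : K) + (Sp - (p : K)) := by ring
    rw [this]
    refine lt_of_le_of_lt (nadd_le _ _) (max_lt ?_ (lt_of_le_of_lt hSpm hm1))
    rw [H.hpn]
    exact inv_lt_one_of_one_lt₀ H.pR1
  have hSp1N : ‖Sp1‖ = 1 := by
    have h1 : ‖(p : K) + 1‖ = 1 := by
      rw [add_comm, nadd_eq (by rw [norm_one, H.hpn]; exact inv_lt_one_of_one_lt₀ H.pR1), norm_one]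
    have : Sp1 = ((p : K) + 1) + (Sp1 - ((p : K) + 1)) := by ring
    rw [this, nadd_eq (by rw [h1]; exact lt_of_le_of_lt hSp1m hm1), h1]
  have hδy : yu - yv = u - v := by rw [hyu_def, hyv_def]; ring
  have g1 : Sp * (u - v) = yu ^ p - yv ^ p := by
    rw [← hδy, hSp_def]
    exact geom_sum₂_mul yu yv p
  have g2 : Sp1 * (u - v) = yu ^ (p+1) - yv ^ (p+1) := by
    rw [← hδy, hSp1_def]
    exact geom_sum₂_mul yu yv (p+1)
  have key : Qconj p a h lam u - Qconj p a h lam v =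
      (1 - lam / (p : K)) * (Sp1 * (u - v)) +
        (lam / (p : K) * (Sp * (u - v)) + (Qser a yu - Qser a yv)) := by
    rw [Qdef H, Qdef H, g1, g2]
    ring
  have hδ0 : 0 < ‖u - v‖ := norm_pos_iff.mpr (sub_ne_zero.mpr huv)
  have hmain : ‖(1 - lam / (p : K)) * (Sp1 * (u - v))‖ = p * ‖u - v‖ := by
    rw [norm_mul, norm_mul, H.nlamp1, hSp1N, one_mul]
  have hrest : ‖lam / (p : K) * (Sp * (u - v)) + (Qser a yu - Qser a yv)‖ < p * ‖u - v‖ := by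
    refine lt_of_le_of_lt (nadd_le _ _) (max_lt ?_ ?_)
    · rw [norm_mul, norm_mul, H.nlamp]
      have := mul_lt_mul_of_pos_right hSpN hδ0
      rw [one_mul] at this
      exact mul_lt_mul_of_pos_left (by nlinarith) H.pR0
    · have hq1 : ‖Qser a yu - Qser a yv‖ ≤ C * ‖u - v‖ := by
        have := H.QserLip hyuN hyvN
        rwa [hδy] at this
      refine lt_of_le_of_lt hq1 ?_
      have hCp : C < (p:ℝ) := lt_trans H.hC1 H.pR1
      exact mul_lt_mul_of_pos_right hCp hδ0
  rw [key, nadd_eq (by rw [hmain]; exact hrest), hmain]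

lemma Hyp.k_le1 {x : K} (hx : x ∈ KK p a h lam rhat) : ‖x‖ ≤ 1 := by
  by_contra h1
  push_neg at h1
  have grow : ∀ n : ℕ, (p:ℝ) ^ n * ‖x‖ ≤ ‖(Qconj p a h lam)^[n] x‖ := by
    intro n
    induction n with
    | zero => simp
    | succ n ih =>
      have hpn1 : (1:ℝ) ≤ (p:ℝ) ^ n := one_le_pow₀ H.pR1.le
      have hgt : 1 < ‖(Qconj p a h lam)^[n] x‖ := by nlinarith
      have hgrow := H.growth hgt (hx n)
      rw [Function.iterate_succ_apply', hgrow]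
      have h2 : ‖(Qconj p a h lam)^[n] x‖ ≤ ‖(Qconj p a h lam)^[n] x‖ ^ (p+1) :=
        le_self_pow₀ hgt.le (by omega)
      calc (p:ℝ) ^ (n+1) * ‖x‖ = (p:ℝ) * ((p:ℝ)^n * ‖x‖) := by ring
        _ ≤ (p:ℝ) * ‖(Qconj p a h lam)^[n] x‖ := mul_le_mul_of_nonneg_left ih H.pR0.le
        _ ≤ (p:ℝ) * ‖(Qconj p a h lam)^[n] x‖ ^ (p+1) := mul_le_mul_of_nonneg_left h2 H.pR0.le
  obtain ⟨n, hn⟩ := pow_unbounded_of_one_lt rhat H.pR1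
  have h3 := grow n
  have h4 := hx n
  nlinarith [pow_pos H.pR0 n]

lemma Hyp.k_B {x : K} (hx : x ∈ KK p a h lam rhat) : ‖x‖ < 1 ∨ ‖x - 1‖ < 1 := by
  by_contra hcon
  push_neg at hcon
  obtain ⟨h1, h2⟩ := hcon
  have hx1 : ‖x‖ = 1 := le_antisymm (H.k_le1 hx) h1
  have hx2 : ‖x - 1‖ = 1 := by
    refine le_antisymm (le_trans (nsub_le _ _) ?_) h2
    rw [hx1, norm_one]
    simp
  have hQ := H.sphere1 hx1 hx2
  have hle := H.k_le1 (k_fwd hx)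
  rw [hQ] at hle
  linarith [H.pR1]

lemma Hyp.lip {x x' : K} (hx : ‖x‖ ≤ 1) (hx' : ‖x'‖ ≤ 1) :
    ‖Qconj p a h lam x - Qconj p a h lam x'‖ ≤ p * ‖x - x'‖ := by
  have h1 : ‖x + (h lam - 1)‖ ≤ 1 := le_trans (nadd_le _ _) (max_le hx H.nh.le)
  have h2 : ‖x' + (h lam - 1)‖ ≤ 1 := le_trans (nadd_le _ _) (max_le hx' H.nh.le)
  refine le_trans (H.twoB0 h1 h2 le_rfl) ?_
  rw [one_pow, mul_one]
  refine max_le le_rfl ?_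
  nlinarith [norm_nonneg (x - x'), H.pR1]

lemma Hyp.k_closed {q : K}
    (hap : ∀ ε : ℝ, 0 < ε → ∃ x ∈ KK p a h lam rhat, ‖x - q‖ ≤ ε) :
    q ∈ KK p a h lam rhat := by
  intro n
  obtain ⟨x, hxK, hxq⟩ := hap ((p:ℝ) ^ n)⁻¹ (inv_pos.mpr (pow_pos H.pR0 n))
  have hqx1 : ‖q - x‖ ≤ ((p:ℝ) ^ n)⁻¹ := by rwa [norm_sub_rev]
  have hclaim : ∀ j : ℕ, j ≤ n →
      ‖(Qconj p a h lam)^[j] q - (Qconj p a h lam)^[j] x‖ ≤ (p:ℝ) ^ j * ((p:ℝ) ^ n)⁻¹ ∧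
      ‖(Qconj p a h lam)^[j] q‖ ≤ 1 := by
    intro j
    induction j with
    | zero =>
      intro _
      constructor
      · simpa using hqx1
      · simp only [Function.iterate_zero_apply]
        have : q = x + (q - x) := by ring
        rw [this]
        refine le_trans (nadd_le _ _) (max_le (H.k_le1 hxK) ?_)
        refine le_trans hqx1 ?_
        rw [inv_le_one_iff₀]
        right
        exact one_le_pow₀ H.pR1.le
    | succ j ih =>
      intro hj
      obtain ⟨ih1, ih2⟩ := ih (by omega)
      have hx1 : ‖(Qconj p a h lam)^[j] x‖ ≤ 1 := H.k_le1 (k_iter hxK j)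
      have hstep := H.lip ih2 hx1
      have hbd : ‖(Qconj p a h lam)^[j+1] q - (Qconj p a h lam)^[j+1] x‖ ≤
          (p:ℝ) ^ (j+1) * ((p:ℝ)^n)⁻¹ := by
        rw [Function.iterate_succ_apply', Function.iterate_succ_apply']
        refine le_trans hstep ?_
        calc (p:ℝ) * ‖(Qconj p a h lam)^[j] q - (Qconj p a h lam)^[j] x‖
            ≤ (p:ℝ) * ((p:ℝ)^j * ((p:ℝ)^n)⁻¹) := mul_le_mul_of_nonneg_left ih1 H.pR0.le
          _ = (p:ℝ)^(j+1) * ((p:ℝ)^n)⁻¹ := by ring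
      refine ⟨hbd, ?_⟩
      have hx2 : ‖(Qconj p a h lam)^[j+1] x‖ ≤ 1 := H.k_le1 (k_iter hxK (j+1))
      have heq : (Qconj p a h lam)^[j+1] q =
          (Qconj p a h lam)^[j+1] x + ((Qconj p a h lam)^[j+1] q - (Qconj p a h lam)^[j+1] x) := by
        ring
      rw [heq]
      refine le_trans (nadd_le _ _) (max_le hx2 (le_trans hbd ?_))
      have hple : (p:ℝ) ^ (j+1) ≤ (p:ℝ) ^ n := pow_le_pow_right₀ H.pR1.le hj
      have hpn : (0:ℝ) < (p:ℝ) ^ n := pow_pos H.pR0 n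
      calc (p:ℝ)^(j+1) * ((p:ℝ)^n)⁻¹ ≤ (p:ℝ)^n * ((p:ℝ)^n)⁻¹ :=
            mul_le_mul_of_nonneg_right hple (by positivity)
        _ = 1 := mul_inv_cancel₀ (ne_of_gt hpn)
  refine le_trans (hclaim n le_rfl).2 (le_of_lt H.hr)

end Dyn2
section Dyn3

variable {p : ℕ} {a : ℕ → K} {h : K → K} {lam : K} {rhat C : ℝ}
variable [CompleteSpace K] [IsAlgClosed K]
variable (H : Hyp p a h lam rhat C)
include H

lemma Hyp.coreB0 {u v : K} (hu : u ∈ KK p a h lam rhat) (hv : v ∈ KK p a h lam rhat)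
    (hball : closedBall u ‖u - v‖ ⊆ KK p a h lam rhat) (hs1 : ‖u - v‖ < 1)
    (hu0 : ‖u‖ < 1) (hv0 : ‖v‖ < 1)
    (hmax : ‖v + (h lam - 1)‖ ≤ ‖u + (h lam - 1)‖)
    (hd' : 1 ≤ ‖Qconj p a h lam u - Qconj p a h lam v‖) : False := by
  set t := ‖u + (h lam - 1)‖ with ht_def
  set s := ‖u - v‖ with hs_def
  have ht1 : t < 1 := lt_of_le_of_lt (nadd_le u (h lam - 1)) (max_lt hu0 H.nh)
  have ht0 : 0 ≤ t := norm_nonneg _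
  have hδy : (u + (h lam - 1)) - (v + (h lam - 1)) = u - v := by ring
  have hst : s ≤ t := by
    rw [hs_def, ← hδy]
    exact le_trans (nsub_le _ _) (max_le le_rfl hmax)
  have hbound := H.twoB0 (le_refl t) hmax ht1.le
  have hA : 1 ≤ (p:ℝ) * t ^ (p-1) * s := by
    rcases le_max_iff.mp (le_trans hd' hbound) with hc | hc
    · exact hc
    · linarith
  have hpt : 1 ≤ (p:ℝ) * t ^ p := by
    have hp1 : p - 1 + 1 = p := Nat.succ_pred_eq_of_pos H.hp.pos
    have h2 : (p:ℝ) * t ^ (p-1) * s ≤ (p:ℝ) * t ^ (p-1) * t := by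
      refine mul_le_mul_of_nonneg_left hst ?_
      positivity
    have h3 : (p:ℝ) * t ^ (p-1) * t = (p:ℝ) * t ^ p := by
      rw [mul_assoc, ← pow_succ, hp1]
    linarith
  have hQu : ‖Qconj p a h lam u‖ = (p:ℝ) * t ^ p := H.b0exact rfl ht1 hpt
  have hQuK := k_fwd hu
  have hpt1 : (p:ℝ) * t ^ p = 1 := le_antisymm (hQu ▸ H.k_le1 hQuK) hpt
  have hQu1 : ‖Qconj p a h lam u - 1‖ < 1 := by
    rcases H.k_B hQuK with hc | hc
    · rw [hQu, hpt1] at hc; linarith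
    · exact hc
  have htail := H.b0tail rfl ht1 hpt1.le
  have hlam_u : ‖lam / (p:K) * (u + (h lam - 1)) ^ p - 1‖ < 1 := by
    have heq : lam / (p:K) * (u + (h lam - 1)) ^ p - 1 =
        (Qconj p a h lam u - 1) - (Qconj p a h lam u - lam / (p:K) * (u + (h lam - 1)) ^ p) := by
      ring
    rw [heq]
    exact lt_of_le_of_lt (nsub_le _ _) (max_lt hQu1 htail)
  have ht0' : 0 < t := by
    rcases ht0.lt_or_eq with hc | hc
    · exact hc
    · exfalso
      rw [← hc, zero_pow H.hp.ne_zero, mul_zero] at hpt1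
      linarith
  rcases lt_or_eq_of_le hmax with hvlt | hveq
  · -- strictly smaller: golden point argument
    obtain ⟨g, hg1, hg2, _⟩ := exists_golden (K := K)
    set x := v + g * (u - v) with hx_def
    have hxu : ‖x - u‖ = s := by
      have : x - u = (g - 1) * (u - v) := by rw [hx_def]; ring
      rw [this, norm_mul, hg2, one_mul]
    have hxK : x ∈ KK p a h lam rhat := by
      apply hball
      rw [mem_closedBall, dist_eq_norm]
      rw [hxu]
    have hst' : s = t := by
      rw [hs_def, ← hδy]
      exact nsub_eq hvlt
    have hyx : ‖x + (h lam - 1)‖ = t := by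
      have heq : x + (h lam - 1) = (v + (h lam - 1)) + g * (u - v) := by rw [hx_def]; ring
      have hn : ‖g * (u - v)‖ = t := by rw [norm_mul, hg1, one_mul, ← hs_def, hst']
      rw [heq, add_comm, nadd_eq (by rw [hn]; exact hvlt), hn]
    have hQx : ‖Qconj p a h lam x‖ = (p:ℝ) * t ^ p := H.b0exact hyx ht1 hpt
    have hQxK := k_fwd hxK
    have hQx1 : ‖Qconj p a h lam x - 1‖ < 1 := by
      rcases H.k_B hQxK with hc | hc
      · rw [hQx, hpt1] at hc; linarith
      · exact hc
    have htailx := H.b0tail hyx ht1 hpt1.le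
    have hlam_x : ‖lam / (p:K) * (x + (h lam - 1)) ^ p - 1‖ < 1 := by
      have heq : lam / (p:K) * (x + (h lam - 1)) ^ p - 1 =
          (Qconj p a h lam x - 1) - (Qconj p a h lam x - lam / (p:K) * (x + (h lam - 1)) ^ p) := by
        ring
      rw [heq]
      exact lt_of_le_of_lt (nsub_le _ _) (max_lt hQx1 htailx)
    have hdiff : ‖lam / (p:K) * ((x + (h lam - 1)) ^ p - (u + (h lam - 1)) ^ p)‖ < 1 := by
      have heq : lam / (p:K) * ((x + (h lam - 1)) ^ p - (u + (h lam - 1)) ^ p) =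
          (lam / (p:K) * (x + (h lam - 1)) ^ p - 1) -
            (lam / (p:K) * (u + (h lam - 1)) ^ p - 1) := by
        ring
      rw [heq]
      exact lt_of_le_of_lt (nsub_le _ _) (max_lt hlam_x hlam_u)
    have hfr : ‖(x + (h lam - 1)) ^ p - (u + (h lam - 1)) ^ p‖ = t ^ p := by
      refine H.fresh (le_of_eq hyx) le_rfl ?_ ht0'
      have heq : (x + (h lam - 1)) - (u + (h lam - 1)) = (g - 1) * (u - v) := by
        rw [hx_def]; ring
      rw [heq, norm_mul, hg2, one_mul, ← hs_def, hst']
    rw [norm_mul, H.nlamp, hfr, hpt1] at hdiff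
    linarith
  · -- equal norms: both map to B_1
    have hyvt : ‖v + (h lam - 1)‖ = t := hveq
    have hQv : ‖Qconj p a h lam v‖ = (p:ℝ) * t ^ p := H.b0exact hyvt ht1 hpt
    have hQvK := k_fwd hv
    have hQv1 : ‖Qconj p a h lam v - 1‖ < 1 := by
      rcases H.k_B hQvK with hc | hc
      · rw [hQv, hpt1] at hc; linarith
      · exact hc
    have hfin : ‖Qconj p a h lam u - Qconj p a h lam v‖ < 1 := by
      have heq : Qconj p a h lam u - Qconj p a h lam v =
          (Qconj p a h lam u - 1) - (Qconj p a h lam v - 1) := by ring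
      rw [heq]
      exact lt_of_le_of_lt (nsub_le _ _) (max_lt hQu1 hQv1)
    linarith

end Dyn3
section Dyn4

variable {p : ℕ} {a : ℕ → K} {h : K → K} {lam : K} {rhat C : ℝ}
variable [CompleteSpace K] [IsAlgClosed K]
variable (H : Hyp p a h lam rhat C)
include H

lemma Hyp.crisisB0 {u v : K} (hu : u ∈ KK p a h lam rhat) (hv : v ∈ KK p a h lam rhat)
    (hball : closedBall u ‖u - v‖ ⊆ KK p a h lam rhat) (hs1 : ‖u - v‖ < 1)
    (hu0 : ‖u‖ < 1) (hv0 : ‖v‖ < 1) :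
    ‖Qconj p a h lam u - Qconj p a h lam v‖ < 1 := by
  by_contra hd'
  push_neg at hd'
  rcases le_total ‖v + (h lam - 1)‖ ‖u + (h lam - 1)‖ with hc | hc
  · exact H.coreB0 hu hv hball hs1 hu0 hv0 hc hd'
  · refine H.coreB0 hv hu (ball_swap hball) ?_ hv0 hu0 hc ?_
    · rw [norm_sub_rev]; exact hs1
    · rw [norm_sub_rev]; exact hd'

lemma Hyp.crisisB1 {u v : K} (hu : u ∈ KK p a h lam rhat) (hv : v ∈ KK p a h lam rhat)
    (hball : closedBall u ‖u - v‖ ⊆ KK p a h lam rhat) (hs1 : ‖u - v‖ < 1)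
    (hu1 : ‖u - 1‖ < 1) (hv1 : ‖v - 1‖ < 1) :
    ‖Qconj p a h lam u - Qconj p a h lam v‖ < 1 := by
  by_contra hd'
  push_neg at hd'
  obtain ⟨g, hg1, hg2, _⟩ := exists_golden (K := K)
  set x := v + g * (u - v) with hx_def
  have hgs : ‖g * (u - v)‖ = ‖u - v‖ := by rw [norm_mul, hg1, one_mul]
  have hxu : ‖x - u‖ = ‖u - v‖ := by
    have heq : x - u = (g - 1) * (u - v) := by rw [hx_def]; ring
    rw [heq, norm_mul, hg2, one_mul]
  have hxv : ‖x - v‖ = ‖u - v‖ := by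
    have heq : x - v = g * (u - v) := by rw [hx_def]; ring
    rw [heq, hgs]
  have hxK : x ∈ KK p a h lam rhat := by
    apply hball
    rw [mem_closedBall, dist_eq_norm, hxu]
  have hx1 : ‖x - 1‖ < 1 := by
    have heq : x - 1 = (v - 1) + g * (u - v) := by rw [hx_def]; ring
    rw [heq]
    refine lt_of_le_of_lt (nadd_le _ _) (max_lt hv1 ?_)
    rw [hgs]; exact hs1
  have hQuv : ‖Qconj p a h lam u - Qconj p a h lam v‖ = p * ‖u - v‖ := H.twoB1 hu1 hv1
  have hQxu : ‖Qconj p a h lam x - Qconj p a h lam u‖ = p * ‖u - v‖ := by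
    rw [H.twoB1 hx1 hu1, hxu]
  have hQxv : ‖Qconj p a h lam x - Qconj p a h lam v‖ = p * ‖u - v‖ := by
    rw [H.twoB1 hx1 hv1, hxv]
  have hps : 1 ≤ (p:ℝ) * ‖u - v‖ := le_trans hd' (le_of_eq hQuv)
  rcases H.k_B (k_fwd hu) with h0u | h1u <;> rcases H.k_B (k_fwd hv) with h0v | h1v
  · have : ‖Qconj p a h lam u - Qconj p a h lam v‖ < 1 :=
      lt_of_le_of_lt (nsub_le _ _) (max_lt h0u h0v)
    linarith [hQuv ▸ this]
  · rcases H.k_B (k_fwd hxK) with h0x | h1x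
    · have : ‖Qconj p a h lam x - Qconj p a h lam u‖ < 1 :=
        lt_of_le_of_lt (nsub_le _ _) (max_lt h0x h0u)
      rw [hQxu] at this; linarith
    · have : ‖Qconj p a h lam x - Qconj p a h lam v‖ < 1 := by
        have heq : Qconj p a h lam x - Qconj p a h lam v =
            (Qconj p a h lam x - 1) - (Qconj p a h lam v - 1) := by ring
        rw [heq]
        exact lt_of_le_of_lt (nsub_le _ _) (max_lt h1x h1v)
      rw [hQxv] at this; linarith
  · rcases H.k_B (k_fwd hxK) with h0x | h1x
    · have : ‖Qconj p a h lam x - Qconj p a h lam v‖ < 1 :=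
        lt_of_le_of_lt (nsub_le _ _) (max_lt h0x h0v)
      rw [hQxv] at this; linarith
    · have : ‖Qconj p a h lam x - Qconj p a h lam u‖ < 1 := by
        have heq : Qconj p a h lam x - Qconj p a h lam u =
            (Qconj p a h lam x - 1) - (Qconj p a h lam u - 1) := by ring
        rw [heq]
        exact lt_of_le_of_lt (nsub_le _ _) (max_lt h1x h1u)
      rw [hQxu] at this; linarith
  · have : ‖Qconj p a h lam u - Qconj p a h lam v‖ < 1 := by
      have heq : Qconj p a h lam u - Qconj p a h lam v =
          (Qconj p a h lam u - 1) - (Qconj p a h lam v - 1) := by ring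
      rw [heq]
      exact lt_of_le_of_lt (nsub_le _ _) (max_lt h1u h1v)
    rw [hQuv] at this; linarith

lemma Hyp.approx {u v q : K} (hyu : ‖u + (h lam - 1)‖ ≤ 1) (hs1 : ‖u - v‖ < 1)
    (hq : ‖q - Qconj p a h lam u‖ ≤ ‖Qconj p a h lam u - Qconj p a h lam v‖)
    {τ : ℝ} (hτ : 0 < τ) :
    ∃ x : K, ‖x - u‖ ≤ ‖u - v‖ ∧ ‖Qconj p a h lam x - q‖ ≤ τ := by
  by_cases huv : u = v
  · refine ⟨u, by simp, ?_⟩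
    have h0 : ‖q - Qconj p a h lam u‖ ≤ 0 := by simpa [huv] using hq
    have : q = Qconj p a h lam u := by
      have := le_antisymm h0 (norm_nonneg _)
      rw [norm_eq_zero, sub_eq_zero] at this
      exact this
    simp [this, hτ.le]
  set s := ‖u - v‖ with hs_def
  have hs : 0 < s := norm_pos_iff.mpr (sub_ne_zero.mpr huv)
  -- choose the truncation level M
  obtain ⟨M, hM⟩ := pow_unbounded_of_one_lt (C / τ) H.hr
  set τ' := C / rhat ^ M with hτ'_def
  have hτ'0 : 0 ≤ τ' := div_nonneg H.C0 (pow_nonneg H.rh0.le M)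
  have hτ'τ : τ' ≤ τ := by
    rw [hτ'_def, div_le_iff₀ (pow_pos H.rh0 M)]
    rw [div_lt_iff₀ hτ] at hM
    nlinarith
  set y := u + (h lam - 1) with hy_def
  set F : Polynomial K := Polynomial.C (lam / (p:K)) * (Polynomial.C y + Polynomial.X) ^ p
    + Polynomial.C (1 - lam / (p:K)) * (Polynomial.C y + Polynomial.X) ^ (p + 1)
    + (∑ j ∈ Finset.range M, Polynomial.C (a j) * (Polynomial.C y + Polynomial.X) ^ j)
    + Polynomial.C (1 - h lam) with hF_def
  set N := p + 1 + M with hN_def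
  have hCX : (Polynomial.C y + Polynomial.X : Polynomial K).natDegree = 1 := by
    rw [add_comm, Polynomial.natDegree_X_add_C]
  have hCXj : ∀ j : ℕ, ((Polynomial.C y + Polynomial.X : Polynomial K) ^ j).natDegree ≤ j :=
    fun j => le_trans (Polynomial.natDegree_pow_le) (by rw [hCX, mul_one])
  have hdeg : F.natDegree ≤ N := by
    rw [hF_def]
    refine le_trans (Polynomial.natDegree_add_le _ _) (max_le (le_trans
      (Polynomial.natDegree_add_le _ _) (max_le (le_trans (Polynomial.natDegree_add_le _ _)
      (max_le ?_ ?_)) ?_)) ?_)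
    · exact le_trans (Polynomial.natDegree_C_mul_le _ _) (le_trans (hCXj p) (by omega))
    · exact le_trans (Polynomial.natDegree_C_mul_le _ _) (le_trans (hCXj (p+1)) (by omega))
    · refine le_trans (Polynomial.natDegree_sum_le_of_forall_le _ _ (fun j hj => ?_)) (le_refl N)
      rw [Finset.mem_range] at hj
      exact le_trans (Polynomial.natDegree_C_mul_le _ _) (le_trans (hCXj j) (by omega))
    · simp
  have heval : ∀ w : K, F.eval w = lam / (p:K) * (y + w) ^ p
      + (1 - lam / (p:K)) * (y + w) ^ (p + 1)
      + (∑ j ∈ Finset.range M, a j * (y + w) ^ j) + (1 - h lam) := by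
    intro w
    rw [hF_def]
    simp [Polynomial.eval_finset_sum]
  have hyw1 : ∀ w : K, ‖w‖ ≤ s → ‖y + w‖ ≤ 1 := by
    intro w hw
    exact le_trans (nadd_le _ _) (max_le hyu (le_trans hw hs1.le))
  have hQF : ∀ w : K, ‖w‖ ≤ s → ‖Qconj p a h lam (u + w) - F.eval w‖ ≤ τ' := by
    intro w hw
    have harg : (u + w) + (h lam - 1) = y + w := by rw [hy_def]; ring
    have hsum := Summable.sum_add_tsum_nat_add (f := fun i => a i * (y + w) ^ i) M (H.sumQ (hyw1 w hw))
    have hQser : Qser a (y + w) - (∑ j ∈ Finset.range M, a j * (y + w) ^ j) =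
        ∑' i : ℕ, a (i + M) * (y + w) ^ (i + M) := by
      rw [Qser, ← hsum]
      ring
    have hkey : Qconj p a h lam (u + w) - F.eval w =
        ∑' i : ℕ, a (i + M) * (y + w) ^ (i + M) := by
      rw [Qdef H, harg, heval w, ← hQser]
      ring
    rw [hkey]
    refine IsUltrametricDist.norm_tsum_le_of_forall_le_of_nonneg hτ'0 (fun i => ?_)
    rw [norm_mul, norm_pow]
    calc ‖a (i + M)‖ * ‖y + w‖ ^ (i + M)
        ≤ (C / rhat ^ (i + M)) * 1 := by
          refine mul_le_mul (H.haC _) (pow_le_one₀ (norm_nonneg _) (hyw1 w hw)) (by positivity)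
            (div_nonneg H.C0 (pow_nonneg H.rh0.le _))
      _ ≤ τ' := by
          rw [mul_one, hτ'_def]
          exact div_le_div_of_nonneg_left H.C0 (pow_pos H.rh0 M)
            (pow_le_pow_right₀ H.hr.le (by omega))
  have hNne : (Finset.Icc 1 N).Nonempty := Finset.nonempty_Icc.mpr (by omega)
  set σ := (Finset.Icc 1 N).sup' hNne (fun i => ‖F.coeff i‖ * s ^ i) with hσ_def
  have hσup : ∀ i, 1 ≤ i → i ≤ N → ‖F.coeff i‖ * s ^ i ≤ σ := by
    intro i h1 h2
    exact Finset.le_sup' (fun i => ‖F.coeff i‖ * s ^ i) (Finset.mem_Icc.mpr ⟨h1, h2⟩)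
  have hσat : ∃ I, 1 ≤ I ∧ I ≤ N ∧ σ = ‖F.coeff I‖ * s ^ I := by
    obtain ⟨I, hI, hIe⟩ := Finset.exists_mem_eq_sup' hNne (fun i => ‖F.coeff i‖ * s ^ i)
    rw [Finset.mem_Icc] at hI
    exact ⟨I, hI.1, hI.2, hIe⟩
  have hσ0 : 0 ≤ σ := by
    refine le_trans (by positivity) (hσup 1 le_rfl (by omega))
  have hc0 : ‖F.coeff 0 - Qconj p a h lam u‖ ≤ τ' := by
    have h0 := hQF 0 (by simpa using hs.le)
    rw [add_zero] at h0
    rw [norm_sub_rev, ← Polynomial.coeff_zero_eq_eval_zero]  at h0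
    exact h0
  have hincr := poly_incr (le_of_lt hs) hσ0 F N hdeg hσup
  have hd : ‖Qconj p a h lam u - Qconj p a h lam v‖ ≤ max σ τ' := by
    have hwv : ‖v - u‖ ≤ s := by rw [norm_sub_rev]
    have hv_eq : u + (v - u) = v := by ring
    have h1 := hQF (v - u) hwv
    rw [hv_eq] at h1
    have h2 := hincr (v - u) hwv
    have heq : Qconj p a h lam u - Qconj p a h lam v =
        (Qconj p a h lam u - F.coeff 0) - (F.eval (v - u) - F.coeff 0)
          - (Qconj p a h lam v - F.eval (v - u)) := by ring
    rw [heq]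
    refine le_trans (nsub_le _ _) (max_le (le_trans (nsub_le _ _) (max_le ?_ ?_)) ?_)
    · refine le_max_of_le_right ?_
      rw [norm_sub_rev]
      exact hc0
    · exact le_max_of_le_left h2
    · exact le_max_of_le_right h1
  by_cases hA : ‖q - F.coeff 0‖ ≤ σ
  · obtain ⟨w, hw1, hw2⟩ := poly_onto hs F N hσat q hA
    refine ⟨u + w, by simpa using hw1, ?_⟩
    have := hQF w hw1
    rw [hw2] at this
    exact le_trans this hτ'τ
  · push_neg at hA
    have h1 : ‖q - F.coeff 0‖ ≤ max σ τ' := by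
      have heq : q - F.coeff 0 = (q - Qconj p a h lam u) -
          (F.coeff 0 - Qconj p a h lam u) := by ring
      rw [heq]
      refine le_trans (nsub_le _ _) (max_le (le_trans hq ?_) (le_max_of_le_right hc0))
      exact hd
    have h2 : ‖q - F.coeff 0‖ ≤ τ' := by
      rcases max_cases σ τ' with ⟨hm, _⟩ | ⟨hm, _⟩
      · rw [hm] at h1; linarith
      · rwa [hm] at h1
    refine ⟨u, by simpa using hs.le, ?_⟩
    have heq : Qconj p a h lam u - q = (F.coeff 0 - q) - (F.coeff 0 - Qconj p a h lam u) := by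
      ring
    rw [heq]
    refine le_trans (nsub_le _ _) (le_trans (max_le ?_ (le_trans hc0 hτ'τ)) (le_refl _))
    rw [norm_sub_rev]
    exact le_trans h2 hτ'τ

lemma Hyp.normu1 {u : K} (hB : ‖u‖ < 1 ∨ ‖u - 1‖ < 1) : ‖u‖ ≤ 1 := by
  rcases hB with hc | hc
  · exact hc.le
  · exact le_of_eq (unit_norm hc)

lemma Hyp.step {u v : K} (hu : u ∈ KK p a h lam rhat)
    (hball : closedBall u ‖u - v‖ ⊆ KK p a h lam rhat) (hs1 : ‖u - v‖ < 1) :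
    ‖Qconj p a h lam u - Qconj p a h lam v‖ < 1 ∧
      closedBall (Qconj p a h lam u) ‖Qconj p a h lam u - Qconj p a h lam v‖ ⊆
        KK p a h lam rhat := by
  have hv : v ∈ KK p a h lam rhat := by
    apply hball
    rw [mem_closedBall, dist_eq_norm, norm_sub_rev]
  have uB := H.k_B hu
  have vB := H.k_B hv
  have hone : ∀ w : K, ‖w‖ < 1 → ‖w - 1‖ = 1 := by
    intro w hw
    have : w - 1 = -((1:K) - w) := by ring
    rw [this, norm_neg, nsub_eq (by rwa [norm_one])]
    exact norm_one
  have hQlt : ‖Qconj p a h lam u - Qconj p a h lam v‖ < 1 := by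
    rcases uB with u0 | u1 <;> rcases vB with v0 | v1
    · exact H.crisisB0 hu hv hball hs1 u0 v0
    · exfalso
      have h1 : ‖u - v‖ = 1 := by
        have heq : u - v = (u - 1) - (v - 1) := by ring
        rw [heq, nsub_eq (by rw [hone u u0]; exact v1), hone u u0]
      rw [h1] at hs1
      exact lt_irrefl 1 hs1
    · exfalso
      have h1 : ‖u - v‖ = 1 := by
        have heq : u - v = -((v - 1) - (u - 1)) := by ring
        rw [heq, norm_neg, nsub_eq (by rw [hone v v0]; exact u1), hone v v0]
      rw [h1] at hs1
      exact lt_irrefl 1 hs1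
    · exact H.crisisB1 hu hv hball hs1 u1 v1
  refine ⟨hQlt, ?_⟩
  intro q hq
  rw [mem_closedBall, dist_eq_norm] at hq
  refine H.k_closed (fun ε hε => ?_)
  obtain ⟨x, hx1, hx2⟩ := H.approx (le_trans (nadd_le _ _)
    (max_le (H.normu1 uB) H.nh.le)) hs1 hq hε
  refine ⟨Qconj p a h lam x, k_fwd (hball ?_), hx2⟩
  rw [mem_closedBall, dist_eq_norm]
  exact hx1

lemma Hyp.pair {u v : K} (hu : u ∈ KK p a h lam rhat)
    (hball : closedBall u ‖u - v‖ ⊆ KK p a h lam rhat) (hs1 : ‖u - v‖ < 1) :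
    ∀ n : ℕ, ‖(Qconj p a h lam)^[n] u - (Qconj p a h lam)^[n] v‖ < 1 ∧
      closedBall ((Qconj p a h lam)^[n] u) ‖(Qconj p a h lam)^[n] u - (Qconj p a h lam)^[n] v‖ ⊆
        KK p a h lam rhat := by
  intro n
  induction n with
  | zero => simpa using ⟨hs1, hball⟩
  | succ n ih =>
    obtain ⟨ih1, ih2⟩ := ih
    have hstep := H.step (k_iter hu n) ih2 ih1
    rw [Function.iterate_succ_apply', Function.iterate_succ_apply']
    exact hstep

end Dyn4
section Transfer

variable {K : Type*} [NontriviallyNormedField K] [IsUltrametricDist K]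

lemma ball_transfer0 {A B : K} (hAB : ‖A - B‖ < 1) : ‖A‖ < 1 ↔ ‖B‖ < 1 := by
  constructor <;> intro hm
  · exact ntrans_lt hm hAB
  · exact ntrans_lt (A := B) hm (by rwa [norm_sub_rev])

lemma ball_transfer1 {A B : K} (hAB : ‖A - B‖ < 1) : ‖A - 1‖ < 1 ↔ ‖B - 1‖ < 1 := by
  constructor <;> intro hm
  · have heq : B - 1 = (A - 1) - (A - B) := by ring
    rw [heq]
    exact lt_of_le_of_lt (nsub_le _ _) (max_lt hm hAB)
  · have heq : A - 1 = (B - 1) + (A - B) := by ring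
    rw [heq]
    exact lt_of_le_of_lt (nadd_le _ _) (max_lt hm hAB)

end Transfer

end S14

open S14 in
/-- Let `D` be a ball (open or closed) contained in `K(Q_λ, B)`.  Then (1) all points of
`D` have the same itinerary with respect to `B_0 = {|z| < 1}`, `B_1 = {|z − 1| < 1}`; and
(2) if this common itinerary is not preperiodic under the one-sided shift, then the images
`Q_λ^n(D)` are pairwise disjoint and `D` is not attracted to an attracting periodic point.
Here `K` plays the role of `ℂ_p`. -/
theorem statement14 (p : ℕ) (hp : p.Prime)
    {K : Type*} [NontriviallyNormedField K] [IsAlgClosed K] [CompleteSpace K]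
    [IsUltrametricDist K] [CharZero K]
    (hpnorm : ‖(p : K)‖ = (p : ℝ)⁻¹)
    (rhat : ℝ) (hrhat : 1 < rhat) (hrhatval : ∃ x : K, x ≠ 0 ∧ ‖x‖ = rhat)
    (a : ℕ → K)
    (hQnorm : ∃ C : ℝ, C < (p : ℝ) ^ (-(1:ℝ) / ((p : ℝ) - 1)) ∧ ∀ i : ℕ, ‖a i‖ * rhat ^ i ≤ C)
    (h : K → K)
    (hfix : ∀ lam : K, ‖lam - 1‖ < 1 →
      ‖h lam - 1‖ ≤ ‖Qser a 1‖ / p ∧ Qstar p a lam (h lam) = h lam)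
    (lam : K) (hlam : ‖lam - 1‖ < 1)
    (D : Set K) (c : K) (r : ℝ) (hr : 0 < r)
    (hD : D = ball c r ∨ D = closedBall c r)
    -- `D` is contained in the filled Julia set `K(Q_λ, B)`
    (hDK : ∀ z ∈ D, ∀ n : ℕ, (Qconj p a h lam)^[n] z ∈ closedBall (0 : K) rhat) :
    -- (1) all points of `D` have the same itinerary
    (∀ n : ℕ, ∀ z ∈ D, ∀ w ∈ D,
      ((Qconj p a h lam)^[n] z ∈ ball (0 : K) 1 ↔ (Qconj p a h lam)^[n] w ∈ ball (0 : K) 1) ∧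
      ((Qconj p a h lam)^[n] z ∈ ball (1 : K) 1 ↔ (Qconj p a h lam)^[n] w ∈ ball (1 : K) 1)) ∧
    -- (2) if the common itinerary is not preperiodic …
    ((¬ ∃ m q : ℕ, 1 ≤ q ∧ ∀ k : ℕ, m ≤ k →
        ((Qconj p a h lam)^[k + q] c ∈ ball (1 : K) 1 ↔
          (Qconj p a h lam)^[k] c ∈ ball (1 : K) 1)) →
      -- … then the images of `D` are pairwise disjoint …
      (∀ m n : ℕ, m ≠ n →
        ((Qconj p a h lam)^[m] '' D) ∩ ((Qconj p a h lam)^[n] '' D) = ∅) ∧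
      -- … and `D` is not attracted to an attracting periodic point
      (∀ k : ℕ, 1 ≤ k → ∀ z₀ : K, (Qconj p a h lam)^[k] z₀ = z₀ →
        ‖deriv ((Qconj p a h lam)^[k]) z₀‖ < 1 →
        ∀ x ∈ D,
          ¬ Tendsto
            (fun n : ℕ =>
              ⨅ j : Fin k, ‖(Qconj p a h lam)^[n] x - (Qconj p a h lam)^[(j : ℕ)] z₀‖)
            atTop (nhds 0))) := by
  obtain ⟨C, hCρ, hCa⟩ := hQnorm
  have hpR1 : (1:ℝ) < p := by exact_mod_cast hp.one_lt
  have hC1 : C < 1 := by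
    refine lt_trans hCρ (Real.rpow_lt_one_of_one_lt_of_neg hpR1 ?_)
    have hppos : (0:ℝ) < (p:ℝ) - 1 := by linarith
    exact div_neg_of_neg_of_pos (by norm_num) hppos
  have H : S14.Hyp p a h lam rhat C :=
    ⟨hp, hpnorm, hrhat, hCa, hC1, hlam, (hfix lam hlam).1, (hfix lam hlam).2⟩
  have hcD : c ∈ D := by
    rcases hD with rfl | rfl
    · exact mem_ball_self hr
    · exact mem_closedBall_self hr.le
  have hKD : ∀ z ∈ D, z ∈ S14.KK p a h lam rhat := fun z hz n =>
    mem_closedBall_zero_iff.mp (hDK z hz n)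
  have hDsub : ∀ z ∈ D, ∀ w ∈ D, closedBall z ‖z - w‖ ⊆ D := by
    intro z hz w hw x hx
    rw [mem_closedBall, dist_eq_norm] at hx
    rcases hD with rfl | rfl
    · rw [mem_ball, dist_eq_norm] at hz hw ⊢
      have hzw : ‖z - w‖ < r := by
        have heq : z - w = (z - c) - (w - c) := by ring
        rw [heq]
        exact lt_of_le_of_lt (nsub_le _ _) (max_lt hz hw)
      have heq : x - c = (x - z) + (z - c) := by ring
      rw [heq]
      exact lt_of_le_of_lt (nadd_le _ _) (max_lt (lt_of_le_of_lt hx hzw) hz)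
    · rw [mem_closedBall, dist_eq_norm] at hz hw ⊢
      have hzw : ‖z - w‖ ≤ r := by
        have heq : z - w = (z - c) - (w - c) := by ring
        rw [heq]
        exact le_trans (nsub_le _ _) (max_le hz hw)
      have heq : x - c = (x - z) + (z - c) := by ring
      rw [heq]
      exact le_trans (nadd_le _ _) (max_le (le_trans hx hzw) hz)
  have hlt1 : ∀ z ∈ D, ∀ w ∈ D, ‖z - w‖ < 1 := by
    intro z hz w hw
    by_contra hge
    push_neg at hge
    obtain ⟨g, hg1, hg2, hg3⟩ := S14.exists_golden (K := K)
    have hqD : z + g ∈ D := by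
      refine hDsub z hz w hw ?_
      rw [mem_closedBall, dist_eq_norm]
      have : z + g - z = g := by ring
      rw [this, hg1]
      exact hge
    have hqK := hKD _ hqD
    have hzK := hKD z hz
    rcases H.k_B hzK with z0 | z1
    · rcases H.k_B hqK with q0 | q1
      · have hq1 : ‖z + g‖ = 1 := by
          rw [add_comm, nadd_eq (by rw [hg1]; exact z0), hg1]
        rw [hq1] at q0
        exact lt_irrefl 1 q0
      · have hq1 : ‖z + g - 1‖ = 1 := by
          have heq : z + g - 1 = (g - 1) + z := by ring
          rw [heq, nadd_eq (by rw [hg2]; exact z0), hg2]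
        rw [hq1] at q1
        exact lt_irrefl 1 q1
    · rcases H.k_B hqK with q0 | q1
      · have hq1 : ‖z + g‖ = 1 := by
          have heq : z + g = (g + 1) + (z - 1) := by ring
          rw [heq, nadd_eq (by rw [hg3]; exact z1), hg3]
        rw [hq1] at q0
        exact lt_irrefl 1 q0
      · have hq1 : ‖z + g - 1‖ = 1 := by
          have heq : z + g - 1 = g + (z - 1) := by ring
          rw [heq, nadd_eq (by rw [hg1]; exact z1), hg1]
        rw [hq1] at q1
        exact lt_irrefl 1 q1
  have hdist : ∀ z ∈ D, ∀ w ∈ D, ∀ n : ℕ,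
      ‖(Qconj p a h lam)^[n] z - (Qconj p a h lam)^[n] w‖ < 1 := by
    intro z hz w hw n
    exact (H.pair (hKD z hz) (fun x hx => hKD x (hDsub z hz w hw hx)) (hlt1 z hz w hw) n).1
  have part1 : ∀ n : ℕ, ∀ z ∈ D, ∀ w ∈ D,
      ((Qconj p a h lam)^[n] z ∈ ball (0 : K) 1 ↔ (Qconj p a h lam)^[n] w ∈ ball (0 : K) 1) ∧
      ((Qconj p a h lam)^[n] z ∈ ball (1 : K) 1 ↔ (Qconj p a h lam)^[n] w ∈ ball (1 : K) 1) := by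
    intro n z hz w hw
    have hd := hdist z hz w hw n
    constructor
    · rw [mem_ball_zero_iff, mem_ball_zero_iff]
      exact ball_transfer0 hd
    · rw [mem_ball_iff_norm, mem_ball_iff_norm]
      exact ball_transfer1 hd
  refine ⟨part1, fun hnp => ⟨?_, ?_⟩⟩
  · -- pairwise disjoint images
    have key : ∀ m n : ℕ, m < n → ∀ x ∈ D, ∀ y' ∈ D,
        (Qconj p a h lam)^[m] x = (Qconj p a h lam)^[n] y' → False := by
      intro m n hmn x hx y' hy' heq
      apply hnp
      refine ⟨m, n - m, by omega, fun k hk => ?_⟩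
      have e1 : ∀ t : ℕ, (Qconj p a h lam)^[m + t] x = (Qconj p a h lam)^[n + t] y' := by
        intro t
        rw [show m + t = t + m from by omega, show n + t = t + n from by omega,
          Function.iterate_add_apply, Function.iterate_add_apply, heq]
      have ht : k + (n - m) = n + (k - m) := by omega
      have hk' : k = m + (k - m) := by omega
      have i1 := (part1 (k + (n - m)) c hcD y' hy').2
      have i2 := (part1 k c hcD x hx).2
      rw [i1, i2, ht, ← e1 (k - m), ← hk']
    intro m n hmn
    rw [Set.eq_empty_iff_forall_notMem]
    rintro q ⟨⟨x, hx, hqx⟩, ⟨y', hy', hqy⟩⟩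
    rcases hmn.lt_or_gt with hlt | hlt
    · exact key m n hlt x hx y' hy' (hqx.trans hqy.symm)
    · exact key n m hlt y' hy' x hx (hqy.trans hqx.symm)
  · -- no attraction to attracting periodic orbits
    intro k hk z₀ hz₀ _ x hx hT
    set ε : ℝ := ((p:ℝ) ^ k)⁻¹ / 2 with hε_def
    have hp0 : (0:ℝ) < p := H.pR0
    have hε : 0 < ε := by positivity
    have hpk1 : (1:ℝ) ≤ (p:ℝ) ^ k := one_le_pow₀ hpR1.le
    have hε1 : ε ≤ 1 := by
      rw [hε_def]
      have h2 : ((p:ℝ)^k)⁻¹ ≤ 1 := by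
        rw [inv_le_one_iff₀]; right; exact hpk1
      linarith
    have hpkε : (p:ℝ)^k * ε = 1/2 := by
      rw [hε_def]
      field_simp
    obtain ⟨N, hN⟩ := (Filter.tendsto_atTop'.mp hT) (Set.Iio ε) (Iio_mem_nhds hε)
    apply hnp
    refine ⟨N, k, hk, fun n hn => ?_⟩
    have hinf := hN n hn
    rw [Set.mem_Iio] at hinf
    have hne : Nonempty (Fin k) := ⟨⟨0, hk⟩⟩
    obtain ⟨j, hj⟩ : ∃ j : Fin k,
        ‖(Qconj p a h lam)^[n] x - (Qconj p a h lam)^[(j:ℕ)] z₀‖ < ε := by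
      by_contra hno
      push_neg at hno
      have := le_ciInf hno
      exact absurd (lt_of_le_of_lt this hinf) (lt_irrefl _)
    have hxK := hKD x hx
    have hx1 : ∀ t : ℕ, ‖(Qconj p a h lam)^[t] x‖ ≤ 1 := fun t => H.k_le1 (k_iter hxK t)
    have haux : ∀ t : ℕ, t ≤ k →
        ‖(Qconj p a h lam)^[n + t] x - (Qconj p a h lam)^[(j:ℕ) + t] z₀‖ < (p:ℝ)^t * ε ∧
        ‖(Qconj p a h lam)^[(j:ℕ) + t] z₀‖ ≤ 1 := by
      intro t
      induction t with
      | zero =>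
        intro _
        constructor
        · simpa using hj
        · have heq : (Qconj p a h lam)^[(j:ℕ)] z₀ =
              (Qconj p a h lam)^[n] x - ((Qconj p a h lam)^[n] x -
                (Qconj p a h lam)^[(j:ℕ)] z₀) := by ring
          simp only [Nat.add_zero]
          rw [heq]
          exact le_trans (nsub_le _ _) (max_le (hx1 n) (le_trans hj.le hε1))
      | succ t ih =>
        intro ht
        obtain ⟨ih1, ih2⟩ := ih (by omega)
        have hstep := H.lip (hx1 (n + t)) ih2
        have hlt1' : ‖(Qconj p a h lam)^[n + (t+1)] x -
            (Qconj p a h lam)^[(j:ℕ) + (t+1)] z₀‖ < (p:ℝ)^(t+1) * ε := by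
          rw [show n + (t+1) = (n+t)+1 from by omega,
            show (j:ℕ) + (t+1) = ((j:ℕ)+t)+1 from by omega,
            Function.iterate_succ_apply', Function.iterate_succ_apply']
          refine lt_of_le_of_lt hstep ?_
          calc (p:ℝ) * ‖(Qconj p a h lam)^[n+t] x - (Qconj p a h lam)^[(j:ℕ)+t] z₀‖
              < (p:ℝ) * ((p:ℝ)^t * ε) := mul_lt_mul_of_pos_left ih1 hp0
            _ = (p:ℝ)^(t+1) * ε := by ring
        refine ⟨hlt1', ?_⟩
        have hb1 : (p:ℝ)^(t+1) * ε ≤ 1 := by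
          have := pow_le_pow_right₀ hpR1.le ht
          have h2 : (p:ℝ)^(t+1) * ε ≤ (p:ℝ)^k * ε :=
            mul_le_mul_of_nonneg_right this hε.le
          rw [hpkε] at h2
          linarith
        have heq : (Qconj p a h lam)^[(j:ℕ) + (t+1)] z₀ =
            (Qconj p a h lam)^[n + (t+1)] x - ((Qconj p a h lam)^[n + (t+1)] x -
              (Qconj p a h lam)^[(j:ℕ) + (t+1)] z₀) := by ring
        rw [heq]
        exact le_trans (nsub_le _ _) (max_le (hx1 (n + (t+1))) (le_trans hlt1'.le hb1))
    obtain ⟨hfin, _⟩ := haux k le_rfl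
    have hper : (Qconj p a h lam)^[(j:ℕ) + k] z₀ = (Qconj p a h lam)^[(j:ℕ)] z₀ := by
      rw [Function.iterate_add_apply, hz₀]
    rw [hper] at hfin
    have hfk1 : (p:ℝ)^k * ε ≤ 1 := by rw [hpkε]; norm_num
    have hfin' : ‖(Qconj p a h lam)^[n + k] x - (Qconj p a h lam)^[(j:ℕ)] z₀‖ < 1 :=
      lt_of_lt_of_le hfin hfk1
    have hclose : ‖(Qconj p a h lam)^[n + k] x - (Qconj p a h lam)^[n] x‖ < 1 := by
      have heq : (Qconj p a h lam)^[n + k] x - (Qconj p a h lam)^[n] x =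
          ((Qconj p a h lam)^[n + k] x - (Qconj p a h lam)^[(j:ℕ)] z₀) -
            ((Qconj p a h lam)^[n] x - (Qconj p a h lam)^[(j:ℕ)] z₀) := by ring
      rw [heq]
      exact lt_of_le_of_lt (nsub_le _ _) (max_lt hfin' (lt_of_lt_of_le hj hε1))
    have i1 := (part1 (n + k) c hcD x hx).2
    have i2 := (part1 n c hcD x hx).2
    rw [i1, i2, mem_ball_iff_norm, mem_ball_iff_norm]
    constructor <;> intro hm
    · have heq : (Qconj p a h lam)^[n] x - 1 = ((Qconj p a h lam)^[n + k] x - 1) -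
          ((Qconj p a h lam)^[n + k] x - (Qconj p a h lam)^[n] x) := by ring
      rw [heq]
      exact lt_of_le_of_lt (nsub_le _ _) (max_lt hm hclose)
    · have heq : (Qconj p a h lam)^[n + k] x - 1 = ((Qconj p a h lam)^[n] x - 1) +
          ((Qconj p a h lam)^[n + k] x - (Qconj p a h lam)^[n] x) := by ring
      rw [heq]
      exact lt_of_le_of_lt (nadd_le _ _) (max_lt hm hclose)
end

section
/- Let λ ∈ Λ. (1) Let m ≥ 1 and let z₀, z₁ ∈ ℂ_p with |z₀| = |z₁| = ρ_m; if |z₀ − z₁| ≤ S, then |Q_λ(z₀) − Q_λ(z₁)| ≤ ρ_{m−1}·|z₀ − z₁|. (2) If z₀, z₁ ∈ {z : |z − 1| < 1}, then |Q_λ(z₀) − Q_λ(z₁)| = p·|z₀ − z₁|. -/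
open Filter Metric

section aux
variable {K : Type*} [NontriviallyNormedField K] [IsUltrametricDist K]

lemma aux_geom_diff {x y : K} {r : ℝ} (hx : ‖x‖ ≤ r) (hy : ‖y‖ ≤ r) (n : ℕ) :
    ‖x ^ (n + 1) - y ^ (n + 1)‖ ≤ r ^ n * ‖x - y‖ := by
  have hr : 0 ≤ r := (norm_nonneg x).trans hx
  rw [← geom_sum₂_mul x y (n + 1), norm_mul]
  refine mul_le_mul_of_nonneg_right ?_ (norm_nonneg _)
  refine IsUltrametricDist.norm_sum_le_of_forall_le_of_nonneg (by positivity) ?_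
  intro i hi
  rw [Finset.mem_range] at hi
  have hi' : i ≤ n := Nat.lt_succ_iff.mp hi
  have he : n + 1 - 1 - i = n - i := by omega
  calc ‖x ^ i * y ^ (n + 1 - 1 - i)‖ = ‖x‖ ^ i * ‖y‖ ^ (n - i) := by
        rw [he, norm_mul, norm_pow, norm_pow]
    _ ≤ r ^ i * r ^ (n - i) :=
        mul_le_mul (pow_le_pow_left₀ (norm_nonneg x) hx i) (pow_le_pow_left₀ (norm_nonneg y) hy _)
          (by positivity) (by positivity)
    _ = r ^ n := by rw [← pow_add]; congr 1; omega

lemma aux_pow_sub_le {x y : K} (hx : ‖x‖ ≤ 1) (hy : ‖y‖ ≤ 1) (n : ℕ) :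
    ‖x ^ n - y ^ n‖ ≤ ‖x - y‖ := by
  cases n with
  | zero => simp
  | succ n => simpa using aux_geom_diff hx hy n

lemma aux_pow_one_sub {x : K} (hx : ‖x‖ ≤ 1) (n : ℕ) : ‖x ^ n - 1‖ ≤ ‖x - 1‖ := by
  simpa using aux_pow_sub_le hx (by simp : ‖(1:K)‖ ≤ 1) n

lemma aux_mul_sub_one {x y : K} (hx : ‖x‖ ≤ 1) {m : ℝ} (h1 : ‖x - 1‖ ≤ m) (h2 : ‖y - 1‖ ≤ m) :
    ‖x * y - 1‖ ≤ m := by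
  have hxy : x * y - 1 = x * (y - 1) + (x - 1) := by ring
  rw [hxy]
  refine (IsUltrametricDist.norm_add_le_max _ _).trans (max_le ?_ h1)
  calc ‖x * (y - 1)‖ = ‖x‖ * ‖y - 1‖ := norm_mul _ _
    _ ≤ 1 * m := mul_le_mul hx h2 (norm_nonneg _) one_pos.le
    _ = m := one_mul m

lemma aux_pow_p_sub (p : ℕ) (hp : p.Prime) (hpnorm : ‖(p : K)‖ = (p : ℝ)⁻¹)
    {x y : K} {r s : ℝ} (hx : ‖x‖ ≤ r) (hy : ‖y‖ ≤ r) (hxy : ‖x - y‖ ≤ s) (hsr : s ≤ r)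
    (h1 : (p : ℝ)⁻¹ * r ^ (p - 1) ≤ r ^ p) (h2 : s ^ (p - 1) ≤ r ^ p) :
    ‖x ^ p - y ^ p‖ ≤ r ^ p * ‖x - y‖ := by
  have hr0 : 0 ≤ r := (norm_nonneg x).trans hx
  have hs0 : 0 ≤ s := (norm_nonneg _).trans hxy
  have hid : x ^ p - y ^ p
      = (x - y) * ∑ k ∈ Finset.range p, (x - y) ^ k * y ^ (p - 1 - k) * (p.choose (k + 1) : K) := by
    have hx' : x ^ p = ((x - y) + y) ^ p := by ring_nf
    rw [hx', add_pow, Finset.sum_range_succ']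
    simp only [pow_zero, one_mul, Nat.sub_zero, Nat.choose_zero_right, Nat.cast_one, mul_one]
    rw [add_sub_cancel_right, Finset.mul_sum]
    refine Finset.sum_congr rfl fun k hk => ?_
    have : p - (k + 1) = p - 1 - k := by omega
    rw [this, pow_succ]
    ring
  rw [hid, norm_mul, mul_comm (‖x - y‖)]
  refine mul_le_mul_of_nonneg_right ?_ (norm_nonneg _)
  refine IsUltrametricDist.norm_sum_le_of_forall_le_of_nonneg (by positivity) ?_
  intro k hk
  rw [Finset.mem_range] at hk
  rcases eq_or_lt_of_le (Nat.succ_le_of_lt hk) with hkp | hkp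
  · -- k + 1 = p
    have hk1 : p - 1 - k = 0 := by omega
    have hc : p.choose (k + 1) = 1 := by
      have : k + 1 = p := hkp
      rw [this, Nat.choose_self]
    rw [hk1, hc]
    simp only [pow_zero, mul_one, Nat.cast_one]
    calc ‖(x - y) ^ k‖ = ‖x - y‖ ^ k := norm_pow _ _
      _ ≤ s ^ k := pow_le_pow_left₀ (norm_nonneg _) hxy k
      _ = s ^ (p - 1) := by congr 1; omega
      _ ≤ r ^ p := h2
  · -- k + 1 < p
    have hdvd : p ∣ p.choose (k + 1) := hp.dvd_choose_self (Nat.succ_ne_zero k) hkp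
    obtain ⟨t, ht⟩ := hdvd
    have hcnorm : ‖(p.choose (k + 1) : K)‖ ≤ (p : ℝ)⁻¹ := by
      rw [ht]
      push_cast
      rw [norm_mul, hpnorm]
      calc (p : ℝ)⁻¹ * ‖(t : K)‖ ≤ (p : ℝ)⁻¹ * 1 := by
            refine mul_le_mul_of_nonneg_left (IsUltrametricDist.norm_natCast_le_one K t)
              (by positivity)
        _ = (p : ℝ)⁻¹ := mul_one _
    calc ‖(x - y) ^ k * y ^ (p - 1 - k) * (p.choose (k + 1) : K)‖
        = ‖x - y‖ ^ k * ‖y‖ ^ (p - 1 - k) * ‖(p.choose (k + 1) : K)‖ := by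
          rw [norm_mul, norm_mul, norm_pow, norm_pow]
      _ ≤ r ^ k * r ^ (p - 1 - k) * (p : ℝ)⁻¹ := by
          refine mul_le_mul (mul_le_mul (pow_le_pow_left₀ (norm_nonneg _) (hxy.trans hsr) k)
            (pow_le_pow_left₀ (norm_nonneg y) hy _) (by positivity) (by positivity)) hcnorm
            (norm_nonneg _) (by positivity)
      _ = (p : ℝ)⁻¹ * r ^ (p - 1) := by
          rw [← pow_add, mul_comm]; congr 2; omega
      _ ≤ r ^ p := h1

end aux

/-- Local behaviour of `Q_λ`:
(1) if `|z₀| = |z₁| = ρ_m` and `|z₀ − z₁| ≤ S` then `|Q_λ(z₀) − Q_λ(z₁)| ≤ ρ_{m−1}·|z₀ − z₁|`;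
(2) if `|z₀ − 1| < 1` and `|z₁ − 1| < 1` then `|Q_λ(z₀) − Q_λ(z₁)| = p·|z₀ − z₁|`.
Here `S > 0` satisfies `p·S^{p−1} = p^{-1/(p-1)}`, and `ρ_0 = 1`, `p·ρ_n^p = ρ_{n−1}`.
`K` plays the role of `ℂ_p`. -/
theorem statement15 (p : ℕ) (hp : p.Prime)
    {K : Type*} [NontriviallyNormedField K] [IsAlgClosed K] [CompleteSpace K]
    [IsUltrametricDist K] [CharZero K]
    (hpnorm : ‖(p : K)‖ = (p : ℝ)⁻¹)
    (S : ℝ) (hS : 0 < S) (hSdef : (p : ℝ) * S ^ (p - 1) = (p : ℝ) ^ (-(1:ℝ) / ((p : ℝ) - 1)))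
    (ρseq : ℕ → ℝ) (hρ0 : ρseq 0 = 1) (hρpos : ∀ n, 0 < ρseq n)
    (hρrec : ∀ n : ℕ, (p : ℝ) * ρseq (n + 1) ^ p = ρseq n)
    (rhat : ℝ) (hrhat : 1 < rhat) (hrhatval : ∃ x : K, x ≠ 0 ∧ ‖x‖ = rhat)
    (a : ℕ → K)
    (hQnorm : ∃ C : ℝ, C < (p : ℝ) ^ (-(1:ℝ) / ((p : ℝ) - 1)) ∧ ∀ i : ℕ, ‖a i‖ * rhat ^ i ≤ C)
    (h : K → K)
    (hfix : ∀ lam : K, ‖lam - 1‖ < 1 →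
      ‖h lam - 1‖ ≤ ‖Qser a 1‖ / p ∧ Qstar p a lam (h lam) = h lam)
    (lam : K) (hlam : ‖lam - 1‖ < 1) :
    (∀ m : ℕ, 1 ≤ m → ∀ z₀ z₁ : K, ‖z₀‖ = ρseq m → ‖z₁‖ = ρseq m → ‖z₀ - z₁‖ ≤ S →
      ‖Qconj p a h lam z₀ - Qconj p a h lam z₁‖ ≤ ρseq (m - 1) * ‖z₀ - z₁‖) ∧
    (∀ z₀ z₁ : K, ‖z₀ - 1‖ < 1 → ‖z₁ - 1‖ < 1 →
      ‖Qconj p a h lam z₀ - Qconj p a h lam z₁‖ = (p : ℝ) * ‖z₀ - z₁‖) := by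
  obtain ⟨C, hCρ, hCa⟩ := hQnorm
  have hp2 : 2 ≤ p := hp.two_le
  have hq1 : (1:ℝ) < p := by exact_mod_cast hp.one_lt
  have hq0 : (0:ℝ) < p := by linarith
  set ρ : ℝ := (p : ℝ) ^ (-(1:ℝ) / ((p : ℝ) - 1)) with hρdef
  have hexp_neg : -(1:ℝ) / ((p:ℝ) - 1) < 0 :=
    div_neg_of_neg_of_pos (by norm_num) (by linarith)
  have hρ_pos : 0 < ρ := Real.rpow_pos_of_pos hq0 _
  have hρ_lt1 : ρ < 1 := Real.rpow_lt_one_of_one_lt_of_neg hq1 hexp_neg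
  have hcast : ((p - 1 : ℕ) : ℝ) = (p:ℝ) - 1 := by
    rw [Nat.cast_sub hp.one_lt.le, Nat.cast_one]
  have hρ_pow_pm1 : ρ ^ (p - 1) = (p:ℝ)⁻¹ := by
    rw [hρdef, ← Real.rpow_natCast ((p:ℝ) ^ (-(1:ℝ)/((p:ℝ)-1))) (p-1),
      ← Real.rpow_mul hq0.le, hcast, div_mul_cancel₀ _ (by linarith : (p:ℝ) - 1 ≠ 0)]
    exact Real.rpow_neg_one (p:ℝ)
  have hρ_pow_p : ρ ^ p = ρ / p := by
    have h1 : ρ ^ p = ρ ^ (p-1) * ρ := by rw [← pow_succ]; congr 1; omega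
    rw [h1, hρ_pow_pm1, div_eq_mul_inv, mul_comm]
  have hρ_ge_invp : (p:ℝ)⁻¹ ≤ ρ := by
    rw [← hρ_pow_pm1]
    calc ρ ^ (p-1) ≤ ρ ^ 1 := pow_le_pow_of_le_one hρ_pos.le hρ_lt1.le (by omega)
      _ = ρ := pow_one ρ
  have hSp : S ^ (p - 1) = ρ / p := by
    rw [eq_div_iff hq0.ne']; linarith [hSdef]
  have hS_lt_ρ : S < ρ := by
    have h1 : S ^ (p-1) < ρ ^ (p-1) := by
      rw [hSp, hρ_pow_pm1, div_lt_iff₀ hq0, inv_mul_cancel₀ hq0.ne']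
      exact hρ_lt1
    exact lt_of_pow_lt_pow_left₀ _ hρ_pos.le h1
  have hkey : ∀ n, ρ ≤ ρseq n ∧ ρseq n ≤ 1 := by
    intro n
    induction n with
    | zero => exact ⟨by rw [hρ0]; exact hρ_lt1.le, by rw [hρ0]⟩
    | succ n ih =>
      have hpowval : ρseq (n+1) ^ p = ρseq n / p := by
        rw [eq_div_iff hq0.ne']; linarith [hρrec n]
      constructor
      · have h1 : ρ ^ p ≤ ρseq (n+1) ^ p := by
          rw [hρ_pow_p, hpowval]
          exact div_le_div_of_nonneg_right ih.1 hq0.le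
        exact le_of_pow_le_pow_left₀ (by omega) (hρpos (n+1)).le h1
      · have h1 : ρseq (n+1) ^ p ≤ 1 := by
          rw [hpowval, div_le_one hq0]; linarith [ih.2]
        exact (pow_le_one_iff_of_nonneg (hρpos (n+1)).le (by omega)).mp h1
  have hC0 : 0 ≤ C := le_trans (norm_nonneg (a 0)) (by simpa using hCa 0)
  have hai : ∀ i, ‖a i‖ ≤ C := by
    intro i
    have h1 : (1:ℝ) ≤ rhat ^ i := one_le_pow₀ hrhat.le
    calc ‖a i‖ ≤ ‖a i‖ * rhat ^ i := le_mul_of_one_le_right (norm_nonneg _) h1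
      _ ≤ C := hCa i
  have hC1 : C < 1 := hCρ.trans hρ_lt1
  have hsum : ∀ w : K, ‖w‖ ≤ 1 → Summable fun i => a i * w ^ i := by
    intro w hw
    refine Summable.of_norm ?_
    refine Summable.of_nonneg_of_le (fun i => norm_nonneg _) (fun i => ?_)
      ((summable_geometric_of_lt_one (show (0:ℝ) ≤ rhat⁻¹ from (inv_pos.mpr (by linarith)).le)
        (by rw [inv_lt_one_iff₀]; right; exact hrhat)).mul_left C)
    have hwi : ‖w ^ i‖ ≤ 1 := by rw [norm_pow]; exact pow_le_one₀ (norm_nonneg w) hw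
    have h1 : ‖a i‖ ≤ C * rhat⁻¹ ^ i := by
      rw [inv_pow, mul_comm, ← div_eq_inv_mul, le_div_iff₀ (by positivity)]
      exact hCa i
    calc ‖a i * w ^ i‖ = ‖a i‖ * ‖w ^ i‖ := norm_mul _ _
      _ ≤ (C * rhat⁻¹ ^ i) * 1 := mul_le_mul h1 hwi (norm_nonneg _) (by positivity)
      _ = C * rhat⁻¹ ^ i := mul_one _
  have hQdiff : ∀ w₀ w₁ : K, ‖w₀‖ ≤ 1 → ‖w₁‖ ≤ 1 →
      ‖Qser a w₀ - Qser a w₁‖ ≤ C * ‖w₀ - w₁‖ := by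
    intro w₀ w₁ h0 h1
    rw [Qser, Qser, ← Summable.tsum_sub (hsum w₀ h0) (hsum w₁ h1)]
    refine IsUltrametricDist.norm_tsum_le_of_forall_le_of_nonneg (by positivity) fun i => ?_
    have hterm : a i * w₀ ^ i - a i * w₁ ^ i = a i * (w₀ ^ i - w₁ ^ i) := by ring
    rw [hterm, norm_mul]
    exact mul_le_mul (hai i) (aux_pow_sub_le h0 h1 i) (norm_nonneg _) hC0
  have hQ1 : ‖Qser a 1‖ ≤ C := by
    rw [Qser]
    refine IsUltrametricDist.norm_tsum_le_of_forall_le_of_nonneg hC0 fun i => ?_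
    simpa using hai i
  have hhC : ‖h lam - 1‖ ≤ C := by
    refine le_trans (hfix lam hlam).1 ?_
    calc ‖Qser a 1‖ / (p:ℝ) ≤ C / (p:ℝ) := by gcongr
      _ ≤ C := div_le_self hC0 hq1.le
  have hhρ : ‖h lam - 1‖ < ρ := lt_of_le_of_lt hhC hCρ
  have hlamnorm : ‖lam‖ = 1 := by
    have hl : lam = 1 + (lam - 1) := by ring
    rw [hl, IsUltrametricDist.norm_add_eq_max_of_norm_ne_norm
      (by rw [norm_one]; exact hlam.ne'), norm_one, max_eq_left hlam.le]
  have hpK : ‖lam / (p:K)‖ = (p:ℝ) := by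
    rw [norm_div, hlamnorm, hpnorm, one_div, inv_inv]
  have hpK' : ‖1 - lam / (p:K)‖ = (p:ℝ) := by
    have h1 : (1:K) - lam/(p:K) = 1 + (-(lam/(p:K))) := by ring
    rw [h1, IsUltrametricDist.norm_add_eq_max_of_norm_ne_norm
      (by rw [norm_one, norm_neg, hpK]; exact hq1.ne), norm_one, norm_neg, hpK,
      max_eq_right hq1.le]
  have hdecomp : ∀ z₀ z₁ : K,
      Qconj p a h lam z₀ - Qconj p a h lam z₁ =
        lam / (p:K) * ((z₀ + h lam - 1) ^ p - (z₁ + h lam - 1) ^ p)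
        + (1 - lam / (p:K)) * ((z₀ + h lam - 1) ^ (p+1) - (z₁ + h lam - 1) ^ (p+1))
        + (Qser a (z₀ + h lam - 1) - Qser a (z₁ + h lam - 1)) := by
    intro z₀ z₁
    simp only [Qconj, Qstar, Pfam]
    ring
  constructor
  · -- part (1)
    intro m hm z₀ z₁ hz₀ hz₁ hzS
    rw [hdecomp z₀ z₁]
    set w₀ := z₀ + h lam - 1 with hw₀def
    set w₁ := z₁ + h lam - 1 with hw₁def
    have hΔ : w₀ - w₁ = z₀ - z₁ := by rw [hw₀def, hw₁def]; ring
    set r := ρseq m with hrdef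
    have hρr : ρ ≤ r := (hkey m).1
    have hr1 : r ≤ 1 := (hkey m).2
    have hr0 : 0 < r := hρpos m
    have hw₀ : ‖w₀‖ ≤ r := by
      have h1 : w₀ = z₀ + (h lam - 1) := by rw [hw₀def]; ring
      rw [h1]
      exact (IsUltrametricDist.norm_add_le_max _ _).trans
        (max_le (le_of_eq hz₀) ((hhρ.le).trans hρr))
    have hw₁ : ‖w₁‖ ≤ r := by
      have h1 : w₁ = z₁ + (h lam - 1) := by rw [hw₁def]; ring
      rw [h1]
      exact (IsUltrametricDist.norm_add_le_max _ _).trans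
        (max_le (le_of_eq hz₁) ((hhρ.le).trans hρr))
    have hS_le_r : S ≤ r := hS_lt_ρ.le.trans hρr
    have hrp1 : (0:ℝ) ≤ r ^ (p-1) := by positivity
    have hcond1 : (p:ℝ)⁻¹ * r ^ (p-1) ≤ r ^ p := by
      have hpr : (p:ℝ)⁻¹ ≤ r := hρ_ge_invp.trans hρr
      calc (p:ℝ)⁻¹ * r ^ (p-1) ≤ r * r ^ (p-1) := mul_le_mul_of_nonneg_right hpr hrp1
        _ = r ^ p := by rw [← pow_succ']; congr 1; omega
    have hcond2 : S ^ (p-1) ≤ r ^ p := by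
      rw [hSp, ← hρ_pow_p]
      exact pow_le_pow_left₀ hρ_pos.le hρr p
    have hwΔ : ‖w₀ - w₁‖ ≤ S := by rw [hΔ]; exact hzS
    have hb1 : ‖w₀ ^ p - w₁ ^ p‖ ≤ r ^ p * ‖z₀ - z₁‖ := by
      have h1 := aux_pow_p_sub p hp hpnorm hw₀ hw₁ hwΔ hS_le_r hcond1 hcond2
      rwa [hΔ] at h1
    have hb2 : ‖w₀ ^ (p+1) - w₁ ^ (p+1)‖ ≤ r ^ p * ‖z₀ - z₁‖ := by
      have h1 := aux_geom_diff hw₀ hw₁ p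
      rwa [hΔ] at h1
    have hb3 : ‖Qser a w₀ - Qser a w₁‖ ≤ C * ‖z₀ - z₁‖ := by
      have h1 := hQdiff w₀ w₁ (hw₀.trans hr1) (hw₁.trans hr1)
      rwa [hΔ] at h1
    have hρm1 : ρseq (m-1) = (p:ℝ) * r ^ p := by
      have h1 := hρrec (m-1)
      rw [show m - 1 + 1 = m by omega] at h1
      rw [hrdef]
      exact h1.symm
    refine le_trans (IsUltrametricDist.norm_add_le_max _ _)
      (max_le (le_trans (IsUltrametricDist.norm_add_le_max _ _) (max_le ?_ ?_)) ?_)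
    · rw [norm_mul, hpK, hρm1]
      calc (p:ℝ) * ‖w₀^p - w₁^p‖ ≤ (p:ℝ) * (r^p * ‖z₀ - z₁‖) :=
            mul_le_mul_of_nonneg_left hb1 hq0.le
        _ = (p:ℝ) * r^p * ‖z₀ - z₁‖ := by ring
    · rw [norm_mul, hpK', hρm1]
      calc (p:ℝ) * ‖w₀^(p+1) - w₁^(p+1)‖ ≤ (p:ℝ) * (r^p * ‖z₀ - z₁‖) :=
            mul_le_mul_of_nonneg_left hb2 hq0.le
        _ = (p:ℝ) * r^p * ‖z₀ - z₁‖ := by ring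
    · rw [hρm1]
      calc ‖Qser a w₀ - Qser a w₁‖ ≤ C * ‖z₀ - z₁‖ := hb3
        _ ≤ (p:ℝ) * r^p * ‖z₀ - z₁‖ := by
          refine mul_le_mul_of_nonneg_right ?_ (norm_nonneg _)
          rw [← hρm1]
          exact hCρ.le.trans (hkey (m-1)).1
  · -- part (2)
    intro z₀ z₁ h₀ h₁
    rcases eq_or_ne z₀ z₁ with rfl | hne
    · simp
    have hΔpos : 0 < ‖z₀ - z₁‖ := by rwa [norm_pos_iff, sub_ne_zero]
    rw [hdecomp z₀ z₁]
    set w₀ := z₀ + h lam - 1 with hw₀def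
    set w₁ := z₁ + h lam - 1 with hw₁def
    have hΔ : w₀ - w₁ = z₀ - z₁ := by rw [hw₀def, hw₁def]; ring
    set M : ℝ := max (max ‖z₀ - 1‖ ‖z₁ - 1‖) ‖h lam - 1‖ with hMdef
    have hM1 : M < 1 := by
      rw [hMdef]; exact max_lt (max_lt h₀ h₁) (hhρ.trans hρ_lt1)
    have hM0 : 0 ≤ M :=
      le_trans (norm_nonneg (z₀ - 1)) ((le_max_left _ _).trans (le_max_left _ _))
    have hw₀1 : ‖w₀ - 1‖ ≤ M := by
      have h2 : w₀ - 1 = (z₀ - 1) + (h lam - 1) := by rw [hw₀def]; ring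
      rw [h2]
      exact (IsUltrametricDist.norm_add_le_max _ _).trans
        (max_le ((le_max_left _ _).trans (le_max_left _ _)) (le_max_right _ _))
    have hw₁1 : ‖w₁ - 1‖ ≤ M := by
      have h2 : w₁ - 1 = (z₁ - 1) + (h lam - 1) := by rw [hw₁def]; ring
      rw [h2]
      exact (IsUltrametricDist.norm_add_le_max _ _).trans
        (max_le ((le_max_right _ _).trans (le_max_left _ _)) (le_max_right _ _))
    have hw₀n : ‖w₀‖ ≤ 1 := by
      have h2 : w₀ = 1 + (w₀ - 1) := by ring
      rw [h2]
      exact (IsUltrametricDist.norm_add_le_max _ _).trans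
        (max_le (by simp) (hw₀1.trans hM1.le))
    have hw₁n : ‖w₁‖ ≤ 1 := by
      have h2 : w₁ = 1 + (w₁ - 1) := by ring
      rw [h2]
      exact (IsUltrametricDist.norm_add_le_max _ _).trans
        (max_le (by simp) (hw₁1.trans hM1.le))
    set G : K := ∑ i ∈ Finset.range p, w₀ ^ i * w₁ ^ (p - 1 - i) with hGdef
    set G' : K := ∑ i ∈ Finset.range (p+1), w₀ ^ i * w₁ ^ (p + 1 - 1 - i) with hG'def
    have hGmul : w₀ ^ p - w₁ ^ p = G * (z₀ - z₁) := by
      rw [hGdef, ← hΔ, geom_sum₂_mul]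
    have hG'mul : w₀ ^ (p+1) - w₁ ^ (p+1) = G' * (z₀ - z₁) := by
      rw [hG'def, ← hΔ, geom_sum₂_mul]
    have hterm : ∀ i j : ℕ, ‖w₀ ^ i * w₁ ^ j - 1‖ ≤ M := by
      intro i j
      refine aux_mul_sub_one ?_ ?_ ?_
      · rw [norm_pow]; exact pow_le_one₀ (norm_nonneg _) hw₀n
      · exact (aux_pow_one_sub hw₀n i).trans hw₀1
      · exact (aux_pow_one_sub hw₁n j).trans hw₁1
    have hGsub : ‖G - (p:K)‖ ≤ M := by
      have hps : (p : K) = ∑ _i ∈ Finset.range p, (1:K) := by simp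
      rw [hGdef, hps, ← Finset.sum_sub_distrib]
      exact IsUltrametricDist.norm_sum_le_of_forall_le_of_nonneg hM0 (fun i _ => hterm _ _)
    have hG'sub : ‖G' - ((p:K)+1)‖ ≤ M := by
      have hps : (p : K) + 1 = ∑ _i ∈ Finset.range (p+1), (1:K) := by
        rw [Finset.sum_const, Finset.card_range, nsmul_eq_mul, mul_one]
        push_cast; ring
      rw [hG'def, hps, ← Finset.sum_sub_distrib]
      exact IsUltrametricDist.norm_sum_le_of_forall_le_of_nonneg hM0 (fun i _ => hterm _ _)
    have hp1norm : ‖(p:K) + 1‖ = 1 := by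
      have hne2 : ‖(p:K)‖ ≠ ‖(1:K)‖ := by
        rw [hpnorm, norm_one]
        exact ne_of_lt (by rw [inv_lt_one_iff₀]; right; exact hq1)
      rw [IsUltrametricDist.norm_add_eq_max_of_norm_ne_norm hne2, hpnorm, norm_one]
      exact max_eq_right (by rw [inv_le_one_iff₀]; right; exact hq1.le)
    have hG'norm : ‖G'‖ = 1 := by
      have hG'e : G' = ((p:K) + 1) + (G' - ((p:K)+1)) := by ring
      rw [hG'e, IsUltrametricDist.norm_add_eq_max_of_norm_ne_norm
        (by rw [hp1norm]; exact (lt_of_le_of_lt hG'sub hM1).ne'), hp1norm]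
      exact max_eq_left (lt_of_le_of_lt hG'sub hM1).le
    have hGnorm : ‖G‖ < 1 := by
      have hGe : G = (G - (p:K)) + (p:K) := by ring
      rw [hGe]
      refine lt_of_le_of_lt (IsUltrametricDist.norm_add_le_max _ _)
        (max_lt (lt_of_le_of_lt hGsub hM1) ?_)
      rw [hpnorm, inv_lt_one_iff₀]; right; exact hq1
    rw [hGmul, hG'mul]
    have hA : ‖lam / (p:K) * (G * (z₀ - z₁))‖ < (p:ℝ) * ‖z₀ - z₁‖ := by
      rw [norm_mul, hpK, norm_mul]
      have h2 : ‖G‖ * ‖z₀ - z₁‖ < 1 * ‖z₀ - z₁‖ := mul_lt_mul_of_pos_right hGnorm hΔpos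
      rw [one_mul] at h2
      exact mul_lt_mul_of_pos_left h2 hq0
    have hE : ‖Qser a w₀ - Qser a w₁‖ < (p:ℝ) * ‖z₀ - z₁‖ := by
      have h2 := hQdiff w₀ w₁ hw₀n hw₁n
      rw [hΔ] at h2
      calc ‖Qser a w₀ - Qser a w₁‖ ≤ C * ‖z₀ - z₁‖ := h2
        _ < (p:ℝ) * ‖z₀ - z₁‖ := mul_lt_mul_of_pos_right (hC1.trans hq1) hΔpos
    have hB : ‖(1 - lam / (p:K)) * (G' * (z₀ - z₁))‖ = (p:ℝ) * ‖z₀ - z₁‖ := by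
      rw [norm_mul, hpK', norm_mul, hG'norm, one_mul]
    have hAE : ‖lam / (p:K) * (G * (z₀ - z₁)) + (Qser a w₀ - Qser a w₁)‖
        < (p:ℝ) * ‖z₀ - z₁‖ :=
      lt_of_le_of_lt (IsUltrametricDist.norm_add_le_max _ _) (max_lt hA hE)
    have harr : lam / (p:K) * (G * (z₀ - z₁)) + (1 - lam / (p:K)) * (G' * (z₀ - z₁))
          + (Qser a w₀ - Qser a w₁)
        = (lam / (p:K) * (G * (z₀ - z₁)) + (Qser a w₀ - Qser a w₁))
          + (1 - lam / (p:K)) * (G' * (z₀ - z₁)) := by ring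
    rw [harr, IsUltrametricDist.norm_add_eq_max_of_norm_ne_norm
      (by rw [hB]; exact hAE.ne), hB, max_eq_right hAE.le]
end

section
/- Let {m_i}_{i≥0} and {M_i}_{i≥0} be sequences of positive integers such that ρ_{m_i−1}·ρ_{m_i−2}·…·ρ_1·p^{M_i} ≤ 1 for all i ≥ 0. Suppose that for some λ₀ ∈ Λ there exists z₀ ∈ K(Q_{λ₀}, B) whose itinerary under Q_{λ₀} is 0…0 (m₀ times) 1…1 (M₀ times) 0…0 (m₁ times) 1…1 (M₁ times) … . Then the closed ball D = {z : |z − z₀| ≤ S} is contained in K(Q_{λ₀}, B). If moreover M_i → ∞ as i → ∞, then D is a wandering disc contained in K(Q_{λ₀}, B) which is not attracted to an attracting cycle: the sets Q_{λ₀}^n(D), n ≥ 0, are pairwise disjoint, and for every k ≥ 1 and every w with Q_{λ₀}^k(w) = w and |(Q_{λ₀}^k)'(w)| < 1, no point x ∈ D satisfies min_{0≤j<k} |Q_{λ₀}^n(x) − Q_{λ₀}^j(w)| → 0 as n → ∞. -/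
open Filter Metric

section AuxUltra

variable {K : Type*} [NontriviallyNormedField K] [IsUltrametricDist K]

lemma aux_norm_add_le_max (x y : K) : ‖x + y‖ ≤ max ‖x‖ ‖y‖ :=
  IsUltrametricDist.norm_add_le_max x y

lemma aux_norm_sub_le_max (x y : K) : ‖x - y‖ ≤ max ‖x‖ ‖y‖ := by
  rw [sub_eq_add_neg]
  simpa using IsUltrametricDist.norm_add_le_max x (-y)

lemma aux_norm_add_eq_left {x y : K} (h : ‖y‖ < ‖x‖) : ‖x + y‖ = ‖x‖ := by
  rw [IsUltrametricDist.norm_add_eq_max_of_norm_ne_norm h.ne', max_eq_left h.le]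

lemma aux_norm_sub_eq_left {x y : K} (h : ‖y‖ < ‖x‖) : ‖x - y‖ = ‖x‖ := by
  rw [sub_eq_add_neg, aux_norm_add_eq_left (by rwa [norm_neg])]

lemma aux_norm_sub_eq_right {x y : K} (h : ‖x‖ < ‖y‖) : ‖x - y‖ = ‖y‖ := by
  rw [← norm_neg, neg_sub]; exact aux_norm_sub_eq_left h

lemma aux_norm_sub_eq_max {x y : K} (h : ‖x‖ ≠ ‖y‖) : ‖x - y‖ = max ‖x‖ ‖y‖ := by
  rw [sub_eq_add_neg, IsUltrametricDist.norm_add_eq_max_of_norm_ne_norm (by rwa [norm_neg]),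
    norm_neg]

lemma aux_norm_le_max (x y : K) : ‖x‖ ≤ max ‖y‖ ‖x - y‖ := by
  have e : x = y + (x - y) := by ring
  calc ‖x‖ = ‖y + (x - y)‖ := by rw [← e]
    _ ≤ _ := aux_norm_add_le_max _ _

lemma aux_triangle (x y z : K) : ‖x - z‖ ≤ max ‖x - y‖ ‖y - z‖ := by
  have e : x - z = (x - y) + (y - z) := by ring
  rw [e]; exact aux_norm_add_le_max _ _

lemma aux_norm_pow_sub_pow (x y : K) {R : ℝ} (hx : ‖x‖ ≤ R) (hy : ‖y‖ ≤ R) :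
    ∀ n : ℕ, ‖x ^ (n + 1) - y ^ (n + 1)‖ ≤ ‖x - y‖ * R ^ n := by
  have hR : 0 ≤ R := (norm_nonneg x).trans hx
  intro n
  induction n with
  | zero => simp
  | succ n ih =>
    have key : x ^ (n + 2) - y ^ (n + 2)
        = x * (x ^ (n + 1) - y ^ (n + 1)) + (x - y) * y ^ (n + 1) := by ring
    rw [key]
    refine (aux_norm_add_le_max _ _).trans (max_le ?_ ?_)
    · rw [norm_mul]
      calc ‖x‖ * ‖x ^ (n + 1) - y ^ (n + 1)‖ ≤ R * (‖x - y‖ * R ^ n) :=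
            mul_le_mul hx ih (norm_nonneg _) hR
        _ = ‖x - y‖ * R ^ (n + 1) := by ring
    · rw [norm_mul, norm_pow]
      calc ‖x - y‖ * ‖y‖ ^ (n + 1) ≤ ‖x - y‖ * R ^ (n + 1) :=
            mul_le_mul_of_nonneg_left (pow_le_pow_left₀ (norm_nonneg y) hy _) (norm_nonneg _)
        _ = _ := rfl

lemma aux_norm_pow_sub_pow_prime {p : ℕ} (hp : p.Prime) (hpn : ‖(p : K)‖ = (p : ℝ)⁻¹)
    (x y : K) {R : ℝ} (hx : ‖x‖ ≤ R) (hy : ‖y‖ ≤ R) (hd : ‖x - y‖ ≤ R) :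
    ‖x ^ p - y ^ p‖ ≤ max (‖x - y‖ ^ p) ((p : ℝ)⁻¹ * (R ^ (p - 1) * ‖x - y‖)) := by
  have hR : 0 ≤ R := (norm_nonneg x).trans hx
  have hd0 : 0 ≤ ‖x - y‖ := norm_nonneg _
  have hpR0 : (0:ℝ) < p := by exact_mod_cast hp.pos
  have hxyd : x = y + (x - y) := by ring
  have hexp : x ^ p - y ^ p
      = ∑ k ∈ Finset.range p, y ^ k * (x - y) ^ (p - k) * ((p.choose k : ℕ) : K) := by
    conv_lhs => rw [hxyd]
    rw [add_pow, Finset.sum_range_succ]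
    simp [Nat.choose_self]
  rw [hexp]
  refine IsUltrametricDist.norm_sum_le_of_forall_le_of_nonneg (by positivity) ?_
  intro k hk
  rw [Finset.mem_range] at hk
  rcases Nat.eq_zero_or_pos k with rfl | hk1
  · have : ‖y ^ 0 * (x - y) ^ (p - 0) * ((p.choose 0 : ℕ) : K)‖ = ‖x - y‖ ^ p := by
      simp [norm_pow]
    rw [this]
    exact le_max_left _ _
  · refine le_trans ?_ (le_max_right _ _)
    obtain ⟨c, hc⟩ := hp.dvd_choose_self (by omega) hk
    have hnc : ‖((p.choose k : ℕ) : K)‖ ≤ (p : ℝ)⁻¹ := by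
      rw [hc]
      push_cast
      rw [norm_mul, hpn]
      calc (p:ℝ)⁻¹ * ‖((c : ℕ) : K)‖ ≤ (p:ℝ)⁻¹ * 1 :=
            mul_le_mul_of_nonneg_left (IsUltrametricDist.norm_natCast_le_one K c)
              (by positivity)
        _ = (p:ℝ)⁻¹ := mul_one _
    have hdpk : ‖x - y‖ ^ (p - k) ≤ R ^ (p - k - 1) * ‖x - y‖ := by
      have e : p - k = (p - k - 1) + 1 := by omega
      rw [e, pow_succ]
      exact mul_le_mul_of_nonneg_right (pow_le_pow_left₀ hd0 hd _) hd0
    rw [norm_mul, norm_mul, norm_pow]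
    calc ‖y‖ ^ k * ‖(x - y) ^ (p - k)‖ * ‖((p.choose k : ℕ) : K)‖
        ≤ R ^ k * (R ^ (p - k - 1) * ‖x - y‖) * (p : ℝ)⁻¹ := by
          refine mul_le_mul (mul_le_mul (pow_le_pow_left₀ (norm_nonneg _) hy _)
            (by rw [norm_pow]; exact hdpk) (by positivity) (by positivity)) hnc
            (norm_nonneg _) (by positivity)
      _ = (p : ℝ)⁻¹ * (R ^ (k + (p - k - 1)) * ‖x - y‖) := by rw [pow_add]; ring
      _ = (p : ℝ)⁻¹ * (R ^ (p - 1) * ‖x - y‖) := by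
          rw [show k + (p - k - 1) = p - 1 from by omega]

end AuxUltra

set_option maxHeartbeats 1000000

lemma aux_mul_step (P : ℕ) (hP : 0 < P) : ∀ d : ℕ, ∃ s j, j < P ∧ P * s = d + j := by
  intro d
  induction d with
  | zero => exact ⟨0, 0, hP, by simp⟩
  | succ d ih =>
    obtain ⟨s, j, hj, hs⟩ := ih
    rcases Nat.eq_zero_or_pos j with rfl | hj1
    · exact ⟨s + 1, P - 1, by omega, by rw [Nat.mul_succ, hs]; omega⟩
    · exact ⟨s, j - 1, by omega, by rw [hs]; omega⟩

/-- If `z₀ ∈ K(Q_{λ₀}, B)` has itinerary `0^{m₀} 1^{M₀} 0^{m₁} 1^{M₁} …` (with respect to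
`B_0 = {|z| < 1}` and `B_1 = {|z − 1| < 1}`), where the positive integers `m_i, M_i`
satisfy `ρ_{m_i−1}·…·ρ_1·p^{M_i} ≤ 1`, then the closed ball `D = {z : |z − z₀| ≤ S}` is
contained in `K(Q_{λ₀}, B)`; and if moreover `M_i → ∞`, then `D` is a wandering disc not
attracted to an attracting cycle.  Here `S > 0` satisfies `p·S^{p−1} = p^{-1/(p-1)}`,
`ρ_0 = 1`, `p·ρ_n^p = ρ_{n−1}`, and `N i` is the start of the `i`-th block.
`K` plays the role of `ℂ_p`. -/
theorem statement16 (p : ℕ) (hp : p.Prime)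
    {K : Type*} [NontriviallyNormedField K] [IsAlgClosed K] [CompleteSpace K]
    [IsUltrametricDist K] [CharZero K]
    (hpnorm : ‖(p : K)‖ = (p : ℝ)⁻¹)
    (S : ℝ) (hS : 0 < S) (hSdef : (p : ℝ) * S ^ (p - 1) = (p : ℝ) ^ (-(1:ℝ) / ((p : ℝ) - 1)))
    (ρseq : ℕ → ℝ) (hρ0 : ρseq 0 = 1) (hρpos : ∀ n, 0 < ρseq n)
    (hρrec : ∀ n : ℕ, (p : ℝ) * ρseq (n + 1) ^ p = ρseq n)
    (rhat : ℝ) (hrhat : 1 < rhat) (hrhatval : ∃ x : K, x ≠ 0 ∧ ‖x‖ = rhat)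
    (a : ℕ → K)
    (hQnorm : ∃ C : ℝ, C < (p : ℝ) ^ (-(1:ℝ) / ((p : ℝ) - 1)) ∧ ∀ i : ℕ, ‖a i‖ * rhat ^ i ≤ C)
    (h : K → K)
    (hfix : ∀ lam : K, ‖lam - 1‖ < 1 →
      ‖h lam - 1‖ ≤ ‖Qser a 1‖ / p ∧ Qstar p a lam (h lam) = h lam)
    (m M : ℕ → ℕ) (hm : ∀ i, 1 ≤ m i) (hM : ∀ i, 1 ≤ M i)
    (hprod : ∀ i : ℕ, (∏ j ∈ Finset.Ico 1 (m i), ρseq j) * (p : ℝ) ^ (M i) ≤ 1)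
    (lam₀ : K) (hlam₀ : ‖lam₀ - 1‖ < 1)
    (z₀ : K) (hz₀ : ∀ n : ℕ, (Qconj p a h lam₀)^[n] z₀ ∈ closedBall (0 : K) rhat)
    -- `N i` is the index at which the `i`-th block `0^{m_i} 1^{M_i}` of the itinerary starts
    (N : ℕ → ℕ) (hN0 : N 0 = 0) (hNrec : ∀ i : ℕ, N (i + 1) = N i + m i + M i)
    -- the itinerary of `z₀` is `0^{m₀} 1^{M₀} 0^{m₁} 1^{M₁} …`
    (hit0 : ∀ i : ℕ, ∀ j < m i, ‖(Qconj p a h lam₀)^[N i + j] z₀‖ < 1)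
    (hit1 : ∀ i : ℕ, ∀ j < M i, ‖(Qconj p a h lam₀)^[N i + m i + j] z₀ - 1‖ < 1) :
    -- the closed ball `D = {|z − z₀| ≤ S}` is contained in `K(Q_{λ₀}, B)`
    (∀ z ∈ closedBall z₀ S, ∀ n : ℕ, (Qconj p a h lam₀)^[n] z ∈ closedBall (0 : K) rhat) ∧
    -- if moreover `M_i → ∞`, `D` is wandering and not attracted to an attracting cycle
    (Tendsto M atTop atTop →
      (∀ k l : ℕ, k ≠ l →
        ((Qconj p a h lam₀)^[k] '' closedBall z₀ S) ∩
          ((Qconj p a h lam₀)^[l] '' closedBall z₀ S) = ∅) ∧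
      (∀ k : ℕ, 1 ≤ k → ∀ w : K, (Qconj p a h lam₀)^[k] w = w →
        ‖deriv ((Qconj p a h lam₀)^[k]) w‖ < 1 →
        ∀ x ∈ closedBall z₀ S,
          ¬ Tendsto
            (fun n : ℕ =>
              ⨅ j : Fin k, ‖(Qconj p a h lam₀)^[n] x - (Qconj p a h lam₀)^[(j : ℕ)] w‖)
            atTop (nhds 0))) := by
  classical
  obtain ⟨C, hCrho, hCa⟩ := hQnorm
  set F := Qconj p a h lam₀ with hFdef
  -- basic facts about `p`
  have hp2 : 2 ≤ p := hp.two_le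
  have hpR1 : (1:ℝ) < p := by exact_mod_cast hp.one_lt
  have hpR0 : (0:ℝ) < p := by linarith
  have hpm1 : (0:ℝ) < (p:ℝ) - 1 := by linarith
  set rho : ℝ := (p:ℝ) ^ (-(1:ℝ) / ((p:ℝ) - 1)) with hrhodef
  have hrho_pos : 0 < rho := Real.rpow_pos_of_pos hpR0 _
  have hrho_lt1 : rho < 1 :=
    Real.rpow_lt_one_of_one_lt_of_neg hpR1 (div_neg_of_neg_of_pos (by norm_num) hpm1)
  have hcast : ((p - 1 : ℕ) : ℝ) = (p:ℝ) - 1 := by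
    have h1 : (1:ℕ) ≤ p := by omega
    push_cast [Nat.cast_sub h1]
    ring
  have hrho_pow : rho ^ (p - 1) = (p:ℝ)⁻¹ := by
    have h1 : rho ^ (p - 1) = rho ^ (((p - 1 : ℕ)) : ℝ) := (Real.rpow_natCast _ _).symm
    have h2 : -(1:ℝ) / ((p:ℝ) - 1) * ((p:ℝ) - 1) = -1 := by field_simp
    rw [h1, hrhodef, ← Real.rpow_mul hpR0.le, hcast, h2, Real.rpow_neg_one]
  have hrho_ge : (p:ℝ)⁻¹ ≤ rho := by
    rw [show (p:ℝ)⁻¹ = (p:ℝ) ^ (-1:ℝ) from (Real.rpow_neg_one _).symm, hrhodef]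
    apply (Real.rpow_le_rpow_left_iff hpR1).mpr
    rw [neg_div]
    have h1 : 1 / ((p:ℝ) - 1) ≤ 1 := by
      rw [div_le_one hpm1]
      have : (2:ℝ) ≤ p := by exact_mod_cast hp2
      linarith
    linarith
  have hrho_fix : (p:ℝ) * rho ^ p = rho := by
    have hps : rho ^ p = rho ^ (p - 1) * rho := by
      conv_lhs => rw [show p = (p - 1) + 1 from by omega]
      rw [pow_succ]
    rw [hps, hrho_pow]
    field_simp
  have hρdiv : ∀ n, ρseq (n + 1) ^ p = ρseq n / p := by
    intro n
    rw [eq_div_iff (ne_of_gt hpR0)]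
    linarith [hρrec n]
  have hρ_gt : ∀ n, rho < ρseq n := by
    intro n
    induction n with
    | zero => rw [hρ0]; exact hrho_lt1
    | succ n ih =>
      have h1 : rho ^ p < ρseq (n + 1) ^ p := by
        have e2 : rho ^ p = rho / p := by
          rw [eq_div_iff (ne_of_gt hpR0)]
          linarith [hrho_fix]
        rw [hρdiv n, e2]
        exact (div_lt_div_iff_of_pos_right hpR0).mpr ih
      exact lt_of_pow_lt_pow_left₀ p (hρpos (n+1)).le h1
  have hρ_le1 : ∀ n, ρseq n ≤ 1 := by
    intro n
    induction n with
    | zero => simp [hρ0]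
    | succ n ih =>
      by_contra hgt
      push_neg at hgt
      have h1 : (1:ℝ) < ρseq (n + 1) ^ p := one_lt_pow₀ hgt (by omega)
      rw [hρdiv n] at h1
      have h2 : (p:ℝ) < ρseq n := by
        rw [lt_div_iff₀ hpR0] at h1
        linarith
      linarith
  have hρ_lt : ∀ n, ρseq (n + 1) < ρseq n := by
    intro n
    by_contra hge
    push_neg at hge
    have h1 : ρseq n ^ p ≤ ρseq (n + 1) ^ p := pow_le_pow_left₀ (hρpos n).le hge p
    rw [hρdiv n] at h1
    have e : ρseq n ^ p = ρseq n ^ (p - 1) * ρseq n := by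
      conv_lhs => rw [show p = (p - 1) + 1 from by omega]
      rw [pow_succ]
    rw [e] at h1
    have h3 : ρseq n ^ (p - 1) ≤ (p:ℝ)⁻¹ := by
      have h4 : ρseq n ^ (p - 1) * ρseq n ≤ (p:ℝ)⁻¹ * ρseq n := by
        calc ρseq n ^ (p - 1) * ρseq n ≤ ρseq n / p := h1
          _ = (p:ℝ)⁻¹ * ρseq n := by ring
      exact le_of_mul_le_mul_right h4 (hρpos n)
    have h6 : ρseq n ^ (p - 1) ≤ rho ^ (p - 1) := by rw [hrho_pow]; exact h3
    have h5 : ρseq n ≤ rho := le_of_pow_le_pow_left₀ (by omega) hrho_pos.le h6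
    linarith [hρ_gt n]
  have hρanti : StrictAnti ρseq := strictAnti_nat_of_succ_lt hρ_lt
  -- facts about S
  have hSp : S ^ (p - 1) = rho / p := by
    rw [eq_div_iff (ne_of_gt hpR0)]
    linarith [hSdef]
  have hS_lt_rho : S < rho := by
    have h1 : S ^ (p - 1) < rho ^ (p - 1) := by
      rw [hSp, hrho_pow]
      rw [div_lt_iff₀ hpR0]
      field_simp
      exact hrho_lt1
    exact lt_of_pow_lt_pow_left₀ (p - 1) hrho_pos.le h1
  have hS1 : S < 1 := hS_lt_rho.trans hrho_lt1
  -- facts about C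
  have hC0 : 0 ≤ C := by
    have h1 := hCa 0
    simp only [pow_zero, mul_one] at h1
    exact le_trans (norm_nonneg _) h1
  have hai : ∀ i, ‖a i‖ ≤ C := by
    intro i
    have h1 : (1:ℝ) ≤ rhat ^ i := one_le_pow₀ (by linarith)
    calc ‖a i‖ = ‖a i‖ * 1 := (mul_one _).symm
      _ ≤ ‖a i‖ * rhat ^ i := mul_le_mul_of_nonneg_left h1 (norm_nonneg _)
      _ ≤ C := hCa i
  have hCp : C / p ≤ C := div_le_self hC0 (by linarith)
  -- Qser facts
  have hsum : ∀ u : K, ‖u‖ ≤ 1 → Summable (fun i => a i * u ^ i) := by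
    intro u hu
    apply Summable.of_norm_bounded (g := fun i => C * (rhat⁻¹) ^ i)
    · exact (summable_geometric_of_lt_one (by positivity)
        (by rw [inv_lt_one_iff₀]; right; exact hrhat)).mul_left C
    · intro i
      rw [norm_mul, norm_pow]
      have h1 : ‖a i‖ ≤ C * rhat⁻¹ ^ i := by
        rw [inv_pow, ← div_eq_mul_inv, le_div_iff₀ (by positivity)]
        exact hCa i
      calc ‖a i‖ * ‖u‖ ^ i ≤ (C * rhat⁻¹ ^ i) * 1 :=
            mul_le_mul h1 (pow_le_one₀ (norm_nonneg _) hu) (by positivity) (by positivity)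
        _ = C * rhat⁻¹ ^ i := mul_one _
  have hQser_le : ∀ u : K, ‖u‖ ≤ 1 → ‖Qser a u‖ ≤ C := by
    intro u hu
    apply IsUltrametricDist.norm_tsum_le_of_forall_le_of_nonneg hC0
    intro i
    rw [norm_mul, norm_pow]
    calc ‖a i‖ * ‖u‖ ^ i ≤ C * 1 :=
          mul_le_mul (hai i) (pow_le_one₀ (norm_nonneg _) hu) (by positivity) hC0
      _ = C := mul_one _
  have hQserLip : ∀ u v : K, ‖u‖ ≤ 1 → ‖v‖ ≤ 1 → ‖Qser a u - Qser a v‖ ≤ C * ‖u - v‖ := by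
    intro u v hu hv
    have hs : Qser a u - Qser a v = ∑' i, (a i * u ^ i - a i * v ^ i) := by
      unfold Qser
      exact (Summable.tsum_sub (hsum u hu) (hsum v hv)).symm
    rw [hs]
    apply IsUltrametricDist.norm_tsum_le_of_forall_le_of_nonneg (by positivity)
    intro i
    cases i with
    | zero => simpa using by positivity
    | succ n =>
      have e : a (n+1) * u ^ (n+1) - a (n+1) * v ^ (n+1) = a (n+1) * (u ^ (n+1) - v ^ (n+1)) := by
        ring
      rw [e, norm_mul]
      calc ‖a (n+1)‖ * ‖u ^ (n+1) - v ^ (n+1)‖ ≤ C * (‖u - v‖ * 1 ^ n) :=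
            mul_le_mul (hai _) (aux_norm_pow_sub_pow u v hu hv n) (norm_nonneg _) hC0
        _ = C * ‖u - v‖ := by rw [one_pow, mul_one]
  -- facts about lam₀ and h lam₀
  have hlam_norm : ‖lam₀‖ = 1 := by
    have e : lam₀ = 1 + (lam₀ - 1) := by ring
    rw [e, aux_norm_add_eq_left (by rw [norm_one]; exact hlam₀), norm_one]
  have hlamp : ‖lam₀ / (p:K)‖ = p := by
    rw [norm_div, hlam_norm, hpnorm, one_div, inv_inv]
  have hlamp' : ‖1 - lam₀ / (p:K)‖ = p := by
    rw [aux_norm_sub_eq_right (by rw [norm_one, hlamp]; exact hpR1), hlamp]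
  have hh1 : ‖h lam₀ - 1‖ ≤ C / p := by
    have h1 := (hfix lam₀ hlam₀).1
    have h2 : ‖Qser a 1‖ ≤ C := hQser_le 1 (by rw [norm_one])
    calc ‖h lam₀ - 1‖ ≤ ‖Qser a 1‖ / p := h1
      _ ≤ C / p := by gcongr
  have hh2 : ‖h lam₀ - 1‖ < rho := lt_of_le_of_lt (hh1.trans hCp) hCrho
  -- decomposition of F
  have hFz : ∀ z : K,
      F z = Pfam p lam₀ (z + (h lam₀ - 1)) + Qser a (z + (h lam₀ - 1)) - (h lam₀ - 1) := by
    intro z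
    rw [hFdef]
    show Qstar p a lam₀ (z + h lam₀ - 1) - h lam₀ + 1 = _
    unfold Qstar
    rw [show z + h lam₀ - 1 = z + (h lam₀ - 1) from by ring]
    ring
  -- exact norm of Pfam on the open unit ball
  have hPnorm : ∀ u : K, ‖u‖ < 1 → ‖Pfam p lam₀ u‖ = (p:ℝ) * ‖u‖ ^ p := by
    intro u hu
    rcases eq_or_ne u 0 with rfl | hu0
    · simp [Pfam, zero_pow, hp.ne_zero]
    · have hun : 0 < ‖u‖ := norm_pos_iff.mpr hu0
      unfold Pfam
      have h1 : ‖lam₀ / (p:K) * u ^ p‖ = (p:ℝ) * ‖u‖ ^ p := by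
        rw [norm_mul, hlamp, norm_pow]
      have h2 : ‖(1 - lam₀ / (p:K)) * u ^ (p+1)‖ < ‖lam₀ / (p:K) * u ^ p‖ := by
        rw [h1, norm_mul, hlamp', norm_pow, pow_succ]
        have h3 : ‖u‖ ^ p * ‖u‖ < ‖u‖ ^ p * 1 :=
          mul_lt_mul_of_pos_left hu (pow_pos hun p)
        nlinarith [pow_pos hun p]
      rw [aux_norm_add_eq_left h2, h1]
  -- forward norm computation
  have hfwd : ∀ z : K, ‖z‖ < 1 → C < ‖F z‖ →
      ‖F z‖ = (p:ℝ) * ‖z + (h lam₀ - 1)‖ ^ p := by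
    intro z hz hFC
    have hu1 : ‖z + (h lam₀ - 1)‖ < 1 :=
      lt_of_le_of_lt (aux_norm_add_le_max z _) (max_lt hz (hh2.trans hrho_lt1))
    have hB : ‖Qser a (z + (h lam₀ - 1)) - (h lam₀ - 1)‖ ≤ C :=
      (aux_norm_sub_le_max _ _).trans (max_le (hQser_le _ hu1.le) (hh1.trans hCp))
    have hd : F z = Pfam p lam₀ (z + (h lam₀ - 1))
        + (Qser a (z + (h lam₀ - 1)) - (h lam₀ - 1)) := by
      rw [hFz z]; ring
    by_cases hA : ‖Pfam p lam₀ (z + (h lam₀ - 1))‖ ≤ C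
    · exfalso
      have : ‖F z‖ ≤ C := by
        rw [hd]; exact (aux_norm_add_le_max _ _).trans (max_le hA hB)
      linarith
    · push_neg at hA
      rw [hd, aux_norm_add_eq_left (lt_of_le_of_lt hB hA), hPnorm _ hu1]
  have hiter : ∀ (n : ℕ) (z : K), F^[n+1] z = F (F^[n] z) :=
    fun n z => Function.iterate_succ_apply' F n z
  -- norm one on the B₁ part
  have hw1 : ∀ i j, j < M i → ‖F^[N i + m i + j] z₀‖ = 1 := by
    intro i j hj
    have h1 := hit1 i j hj
    have h2 : F^[N i + m i + j] z₀ = 1 + (F^[N i + m i + j] z₀ - 1) := by ring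
    rw [h2, aux_norm_add_eq_left (by rw [norm_one]; exact h1), norm_one]
  -- the radius lemma
  have hrad : ∀ i t, t ≤ m i → ‖F^[N i + (m i - t)] z₀‖ = ρseq t := by
    intro i t
    induction t with
    | zero =>
      intro _
      rw [Nat.sub_zero, hρ0]
      simpa using hw1 i 0 (hM i)
    | succ t ih =>
      intro hts
      have ihv := ih (by omega)
      have hidx : N i + (m i - (t+1)) + 1 = N i + (m i - t) := by omega
      have hz : ‖F^[N i + (m i - (t+1))] z₀‖ < 1 := hit0 i (m i - (t+1)) (by omega)
      have hFv : ‖F (F^[N i + (m i - (t+1))] z₀)‖ = ρseq t := by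
        rw [← hiter, hidx, ihv]
      have hCt : C < ρseq t := hCrho.trans (hρ_gt t)
      have heq := hfwd _ hz (by rw [hFv]; exact hCt)
      rw [hFv] at heq
      have hub : ‖F^[N i + (m i - (t+1))] z₀ + (h lam₀ - 1)‖ = ρseq (t+1) := by
        have h1 : (p:ℝ) * ‖F^[N i + (m i - (t+1))] z₀ + (h lam₀ - 1)‖ ^ p
            = (p:ℝ) * ρseq (t+1) ^ p := by
          rw [← heq, hρrec t]
        have h2 : ‖F^[N i + (m i - (t+1))] z₀ + (h lam₀ - 1)‖ ^ p = ρseq (t+1) ^ p :=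
          mul_left_cancel₀ (ne_of_gt hpR0) h1
        exact le_antisymm
          (le_of_pow_le_pow_left₀ (by omega) (hρpos _).le h2.le)
          (le_of_pow_le_pow_left₀ (by omega) (norm_nonneg _) h2.ge)
      have hfin : F^[N i + (m i - (t+1))] z₀
          = (F^[N i + (m i - (t+1))] z₀ + (h lam₀ - 1)) - (h lam₀ - 1) := by ring
      rw [hfin, aux_norm_sub_eq_left (by rw [hub]; exact hh2.trans (hρ_gt (t+1))), hub]
  have hradj : ∀ i j, j < m i → ‖F^[N i + j] z₀‖ = ρseq (m i - j) := by
    intro i j hj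
    have h1 := hrad i (m i - j) (by omega)
    rw [show m i - (m i - j) = j from by omega] at h1
    exact h1
  -- contraction step in B₀
  have hstep0 : ∀ t, 1 ≤ t → ∀ x y : K, ‖x‖ ≤ ρseq t → ‖y‖ ≤ ρseq t → ‖x - y‖ ≤ S →
      ‖F x - F y‖ ≤ ρseq (t-1) * ‖x - y‖ := by
    intro t ht x y hx hy hxy
    have hρt : rho < ρseq t := hρ_gt t
    have hx' : ‖x + (h lam₀ - 1)‖ ≤ ρseq t :=
      (aux_norm_add_le_max _ _).trans (max_le hx (hh2.trans hρt).le)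
    have hy' : ‖y + (h lam₀ - 1)‖ ≤ ρseq t :=
      (aux_norm_add_le_max _ _).trans (max_le hy (hh2.trans hρt).le)
    have hd : (x + (h lam₀ - 1)) - (y + (h lam₀ - 1)) = x - y := by ring
    have hdle : ‖(x + (h lam₀ - 1)) - (y + (h lam₀ - 1))‖ ≤ ρseq t := by
      rw [hd]; exact hxy.trans (hS_lt_rho.trans hρt).le
    have hD0 : 0 ≤ ‖x - y‖ := norm_nonneg _
    have hsplit : F x - F y
        = (lam₀/(p:K)) * ((x + (h lam₀ - 1)) ^ p - (y + (h lam₀ - 1)) ^ p)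
        + ((1 - lam₀/(p:K)) * ((x + (h lam₀ - 1)) ^ (p+1) - (y + (h lam₀ - 1)) ^ (p+1))
          + (Qser a (x + (h lam₀ - 1)) - Qser a (y + (h lam₀ - 1)))) := by
      rw [hFz x, hFz y]
      unfold Pfam
      ring
    have hρt1 : ρseq (t-1) = (p:ℝ) * ρseq t ^ p := by
      have h1 := hρrec (t-1)
      rw [show t - 1 + 1 = t from by omega] at h1
      exact h1.symm
    have hT2 : ‖(1 - lam₀/(p:K)) * ((x + (h lam₀ - 1)) ^ (p+1) - (y + (h lam₀ - 1)) ^ (p+1))‖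
        ≤ ρseq (t-1) * ‖x - y‖ := by
      rw [norm_mul, hlamp']
      have h1 := aux_norm_pow_sub_pow (x + (h lam₀ - 1)) (y + (h lam₀ - 1)) hx' hy' p
      rw [hd] at h1
      calc (p:ℝ) * ‖(x + (h lam₀ - 1)) ^ (p+1) - (y + (h lam₀ - 1)) ^ (p+1)‖
          ≤ (p:ℝ) * (‖x - y‖ * ρseq t ^ p) := mul_le_mul_of_nonneg_left h1 hpR0.le
        _ = ρseq (t-1) * ‖x - y‖ := by rw [hρt1]; ring
    have hT1 : ‖(lam₀/(p:K)) * ((x + (h lam₀ - 1)) ^ p - (y + (h lam₀ - 1)) ^ p)‖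
        ≤ ρseq (t-1) * ‖x - y‖ := by
      rw [norm_mul, hlamp]
      have hb := aux_norm_pow_sub_pow_prime hp hpnorm (x + (h lam₀ - 1)) (y + (h lam₀ - 1))
        hx' hy' hdle
      rw [hd] at hb
      have hc1 : (p:ℝ) * ‖x - y‖ ^ p ≤ ρseq (t-1) * ‖x - y‖ := by
        have h1 : ‖x - y‖ ^ p = ‖x - y‖ ^ (p-1) * ‖x - y‖ := by
          conv_lhs => rw [show p = (p - 1) + 1 from by omega]
          rw [pow_succ]
        have h2 : ‖x - y‖ ^ (p-1) ≤ S ^ (p-1) := pow_le_pow_left₀ hD0 hxy _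
        calc (p:ℝ) * ‖x - y‖ ^ p = (p:ℝ) * ‖x - y‖ ^ (p-1) * ‖x - y‖ := by rw [h1]; ring
          _ ≤ (p:ℝ) * S ^ (p-1) * ‖x - y‖ := by
              apply mul_le_mul_of_nonneg_right _ hD0
              exact mul_le_mul_of_nonneg_left h2 hpR0.le
          _ = rho * ‖x - y‖ := by rw [hSdef]
          _ ≤ ρseq (t-1) * ‖x - y‖ := mul_le_mul_of_nonneg_right (hρ_gt (t-1)).le hD0
      have hc2 : (p:ℝ) * ((p:ℝ)⁻¹ * (ρseq t ^ (p-1) * ‖x - y‖)) ≤ ρseq (t-1) * ‖x - y‖ := by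
        rw [← mul_assoc, mul_inv_cancel₀ (ne_of_gt hpR0), one_mul]
        have h5 : 1 ≤ (p:ℝ) * ρseq t := by
          calc (1:ℝ) = (p:ℝ) * (p:ℝ)⁻¹ := (mul_inv_cancel₀ (ne_of_gt hpR0)).symm
            _ ≤ (p:ℝ) * rho := mul_le_mul_of_nonneg_left hrho_ge hpR0.le
            _ ≤ (p:ℝ) * ρseq t := mul_le_mul_of_nonneg_left (hρ_gt t).le hpR0.le
        have h3 : ρseq t ^ (p-1) ≤ ρseq (t-1) := by
          rw [hρt1]
          have h4 : ρseq t ^ p = ρseq t ^ (p-1) * ρseq t := by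
            conv_lhs => rw [show p = (p - 1) + 1 from by omega]
            rw [pow_succ]
          rw [h4]
          nlinarith [pow_nonneg (hρpos t).le (p-1), hρpos t]
        exact mul_le_mul_of_nonneg_right h3 hD0
      calc (p:ℝ) * ‖(x + (h lam₀ - 1)) ^ p - (y + (h lam₀ - 1)) ^ p‖
          ≤ (p:ℝ) * max (‖x - y‖ ^ p) ((p:ℝ)⁻¹ * (ρseq t ^ (p-1) * ‖x - y‖)) :=
            mul_le_mul_of_nonneg_left hb hpR0.le
        _ = max ((p:ℝ) * ‖x - y‖ ^ p) ((p:ℝ) * ((p:ℝ)⁻¹ * (ρseq t ^ (p-1) * ‖x - y‖))) :=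
            mul_max_of_nonneg _ _ hpR0.le
        _ ≤ ρseq (t-1) * ‖x - y‖ := max_le hc1 hc2
    have hQ : ‖Qser a (x + (h lam₀ - 1)) - Qser a (y + (h lam₀ - 1))‖
        ≤ ρseq (t-1) * ‖x - y‖ := by
      have h1 := hQserLip (x + (h lam₀ - 1)) (y + (h lam₀ - 1))
        (hx'.trans (hρ_le1 t)) (hy'.trans (hρ_le1 t))
      rw [hd] at h1
      calc ‖Qser a (x + (h lam₀ - 1)) - Qser a (y + (h lam₀ - 1))‖ ≤ C * ‖x - y‖ := h1
        _ ≤ ρseq (t-1) * ‖x - y‖ :=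
            mul_le_mul_of_nonneg_right (hCrho.trans (hρ_gt _)).le hD0
    rw [hsplit]
    exact (aux_norm_add_le_max _ _).trans
      (max_le hT1 ((aux_norm_add_le_max _ _).trans (max_le hT2 hQ)))
  -- Lipschitz step on the closed unit ball
  have hstep1 : ∀ x y : K, ‖x‖ ≤ 1 → ‖y‖ ≤ 1 → ‖F x - F y‖ ≤ (p:ℝ) * ‖x - y‖ := by
    intro x y hx hy
    have hx' : ‖x + (h lam₀ - 1)‖ ≤ 1 :=
      (aux_norm_add_le_max _ _).trans (max_le hx (hh2.trans hrho_lt1).le)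
    have hy' : ‖y + (h lam₀ - 1)‖ ≤ 1 :=
      (aux_norm_add_le_max _ _).trans (max_le hy (hh2.trans hrho_lt1).le)
    have hd : (x + (h lam₀ - 1)) - (y + (h lam₀ - 1)) = x - y := by ring
    have hD0 : 0 ≤ ‖x - y‖ := norm_nonneg _
    have hsplit : F x - F y
        = (lam₀/(p:K)) * ((x + (h lam₀ - 1)) ^ p - (y + (h lam₀ - 1)) ^ p)
        + ((1 - lam₀/(p:K)) * ((x + (h lam₀ - 1)) ^ (p+1) - (y + (h lam₀ - 1)) ^ (p+1))
          + (Qser a (x + (h lam₀ - 1)) - Qser a (y + (h lam₀ - 1)))) := by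
      rw [hFz x, hFz y]
      unfold Pfam
      ring
    have hT1 : ‖(lam₀/(p:K)) * ((x + (h lam₀ - 1)) ^ p - (y + (h lam₀ - 1)) ^ p)‖
        ≤ (p:ℝ) * ‖x - y‖ := by
      rw [norm_mul, hlamp]
      have h1 := aux_norm_pow_sub_pow (x + (h lam₀ - 1)) (y + (h lam₀ - 1)) hx' hy' (p-1)
      rw [show p - 1 + 1 = p from by omega, hd, one_pow, mul_one] at h1
      exact mul_le_mul_of_nonneg_left h1 hpR0.le
    have hT2 : ‖(1 - lam₀/(p:K)) * ((x + (h lam₀ - 1)) ^ (p+1) - (y + (h lam₀ - 1)) ^ (p+1))‖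
        ≤ (p:ℝ) * ‖x - y‖ := by
      rw [norm_mul, hlamp']
      have h1 := aux_norm_pow_sub_pow (x + (h lam₀ - 1)) (y + (h lam₀ - 1)) hx' hy' p
      rw [hd, one_pow, mul_one] at h1
      exact mul_le_mul_of_nonneg_left h1 hpR0.le
    have hQ : ‖Qser a (x + (h lam₀ - 1)) - Qser a (y + (h lam₀ - 1))‖ ≤ (p:ℝ) * ‖x - y‖ := by
      have h1 := hQserLip (x + (h lam₀ - 1)) (y + (h lam₀ - 1)) hx' hy'
      rw [hd] at h1
      calc ‖Qser a (x + (h lam₀ - 1)) - Qser a (y + (h lam₀ - 1))‖ ≤ C * ‖x - y‖ := h1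
        _ ≤ (p:ℝ) * ‖x - y‖ := by
            apply mul_le_mul_of_nonneg_right _ hD0
            linarith [hCrho, hrho_lt1]
    rw [hsplit]
    exact (aux_norm_add_le_max _ _).trans
      (max_le hT1 ((aux_norm_add_le_max _ _).trans (max_le hT2 hQ)))
  -- block decomposition of ℕ
  have hcov : ∀ n, ∃ i j, (j < m i ∧ n = N i + j) ∨ (j < M i ∧ n = N i + m i + j) := by
    intro n
    induction n with
    | zero => exact ⟨0, 0, Or.inl ⟨hm 0, by rw [hN0]⟩⟩
    | succ n ih =>
      obtain ⟨i, j, hcase⟩ := ih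
      rcases hcase with ⟨hj, rfl⟩ | ⟨hj, rfl⟩
      · by_cases hj1 : j + 1 < m i
        · exact ⟨i, j + 1, Or.inl ⟨hj1, by omega⟩⟩
        · exact ⟨i, 0, Or.inr ⟨hM i, by omega⟩⟩
      · by_cases hj1 : j + 1 < M i
        · exact ⟨i, j + 1, Or.inr ⟨hj1, by omega⟩⟩
        · refine ⟨i + 1, 0, Or.inl ⟨hm _, ?_⟩⟩
          rw [hNrec i]
          omega
  have hwle1 : ∀ n, ‖F^[n] z₀‖ ≤ 1 := by
    intro n
    obtain ⟨i, j, hc⟩ := hcov n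
    rcases hc with ⟨hj, rfl⟩ | ⟨hj, rfl⟩
    · exact (hit0 i j hj).le
    · exact (hw1 i j hj).le
  -- propagation through a B₀ block
  have hblkA : ∀ i (z : K) (β : ℝ), β ≤ S → ‖F^[N i] z - F^[N i] z₀‖ ≤ β →
      ∀ j, j ≤ m i →
        ‖F^[N i + j] z - F^[N i + j] z₀‖ ≤ β * ∏ t ∈ Finset.Ico (m i - j) (m i), ρseq t := by
    intro i z β hβS hβ j
    induction j with
    | zero =>
      intro _
      simpa using hβ
    | succ j ih =>
      intro hj1
      have ihv := ih (by omega)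
      have hprodle : ∏ t ∈ Finset.Ico (m i - j) (m i), ρseq t ≤ 1 :=
        Finset.prod_le_one (fun t _ => (hρpos t).le) (fun t _ => hρ_le1 t)
      have hprod0 : (0:ℝ) ≤ ∏ t ∈ Finset.Ico (m i - j) (m i), ρseq t :=
        Finset.prod_nonneg (fun t _ => (hρpos t).le)
      have hβ0 : 0 ≤ β := le_trans (norm_nonneg _) hβ
      have hDle : ‖F^[N i + j] z - F^[N i + j] z₀‖ ≤ S := by
        calc ‖F^[N i + j] z - F^[N i + j] z₀‖
            ≤ β * ∏ t ∈ Finset.Ico (m i - j) (m i), ρseq t := ihv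
          _ ≤ β * 1 := mul_le_mul_of_nonneg_left hprodle hβ0
          _ ≤ S := by rw [mul_one]; exact hβS
      have ht1 : 1 ≤ m i - j := by omega
      have hwn : ‖F^[N i + j] z₀‖ = ρseq (m i - j) := hradj i j (by omega)
      have hxn : ‖F^[N i + j] z‖ ≤ ρseq (m i - j) := by
        refine (aux_norm_le_max _ (F^[N i + j] z₀)).trans (max_le (le_of_eq hwn) ?_)
        exact hDle.trans (hS_lt_rho.trans (hρ_gt _)).le
      have hstep := hstep0 (m i - j) ht1 _ _ hxn (le_of_eq hwn) hDle
      have hidx : N i + (j + 1) = (N i + j) + 1 := by omega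
      rw [hidx, hiter, hiter]
      calc ‖F (F^[N i + j] z) - F (F^[N i + j] z₀)‖
          ≤ ρseq (m i - j - 1) * ‖F^[N i + j] z - F^[N i + j] z₀‖ := hstep
        _ ≤ ρseq (m i - j - 1) * (β * ∏ t ∈ Finset.Ico (m i - j) (m i), ρseq t) :=
            mul_le_mul_of_nonneg_left ihv (hρpos _).le
        _ = β * (ρseq (m i - (j+1)) * ∏ t ∈ Finset.Ico (m i - j) (m i), ρseq t) := by
            rw [show m i - j - 1 = m i - (j + 1) from by omega]; ring
        _ = β * ∏ t ∈ Finset.Ico (m i - (j+1)) (m i), ρseq t := by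
            rw [Finset.prod_eq_prod_Ico_succ_bot (show m i - (j+1) < m i from by omega) ρseq,
              show m i - (j+1) + 1 = m i - j from by omega]
  -- propagation through a B₁ block
  have hblkB : ∀ i (z : K) (γ : ℝ), 0 ≤ γ → γ * (p:ℝ) ^ (M i) ≤ S →
      ‖F^[N i + m i] z - F^[N i + m i] z₀‖ ≤ γ →
      ∀ j, j ≤ M i → ‖F^[N i + m i + j] z - F^[N i + m i + j] z₀‖ ≤ γ * (p:ℝ) ^ j := by
    intro i z γ hγ0 hγS hγ j
    induction j with
    | zero =>
      intro _
      simpa using hγ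
    | succ j ih =>
      intro hj1
      have ihv := ih (by omega)
      have hple : γ * (p:ℝ) ^ j ≤ S := by
        calc γ * (p:ℝ) ^ j ≤ γ * (p:ℝ) ^ (M i) :=
              mul_le_mul_of_nonneg_left (pow_le_pow_right₀ (by linarith) (by omega)) hγ0
          _ ≤ S := hγS
      have hDle : ‖F^[N i + m i + j] z - F^[N i + m i + j] z₀‖ ≤ S := ihv.trans hple
      have hwn : ‖F^[N i + m i + j] z₀‖ ≤ 1 := hwle1 _
      have hxn : ‖F^[N i + m i + j] z‖ ≤ 1 := by
        refine (aux_norm_le_max _ (F^[N i + m i + j] z₀)).trans (max_le hwn ?_)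
        exact hDle.trans hS1.le
      have hstep := hstep1 _ _ hxn hwn
      have hidx : N i + m i + (j + 1) = (N i + m i + j) + 1 := by omega
      rw [hidx, hiter, hiter]
      calc ‖F (F^[N i + m i + j] z) - F (F^[N i + m i + j] z₀)‖
          ≤ (p:ℝ) * ‖F^[N i + m i + j] z - F^[N i + m i + j] z₀‖ := hstep
        _ ≤ (p:ℝ) * (γ * (p:ℝ) ^ j) := mul_le_mul_of_nonneg_left ihv hpR0.le
        _ = γ * (p:ℝ) ^ (j+1) := by rw [pow_succ]; ring
  -- the product bound over previous blocks
  have hE0 : ∀ i', (0:ℝ) ≤ (∏ t ∈ Finset.Ico 1 (m i'), ρseq t) * (p:ℝ) ^ (M i') := by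
    intro i'
    apply mul_nonneg (Finset.prod_nonneg (fun t _ => (hρpos t).le)) (by positivity)
  set Bprod : ℕ → ℝ :=
    fun i => ∏ i' ∈ Finset.range i, ((∏ t ∈ Finset.Ico 1 (m i'), ρseq t) * (p:ℝ) ^ (M i'))
    with hBdef
  have hB0 : ∀ i, 0 ≤ Bprod i := fun i => Finset.prod_nonneg (fun i' _ => hE0 i')
  have hB1 : ∀ i, Bprod i ≤ 1 :=
    fun i => Finset.prod_le_one (fun i' _ => hE0 i') (fun i' _ => hprod i')
  have hP01 : ∀ i, ∏ t ∈ Finset.Ico 0 (m i), ρseq t = ∏ t ∈ Finset.Ico 1 (m i), ρseq t := by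
    intro i
    rw [Finset.prod_eq_prod_Ico_succ_bot (show 0 < m i from hm i) ρseq, hρ0, one_mul]
  -- the main inductive bound
  have hmain : ∀ z : K, ‖z - z₀‖ ≤ S → ∀ i, ‖F^[N i] z - F^[N i] z₀‖ ≤ S * Bprod i := by
    intro z hz i
    induction i with
    | zero =>
      have hB : Bprod 0 = 1 := by simp [hBdef]
      rw [hN0, hB, mul_one]
      simpa using hz
    | succ i ih =>
      have hβS : S * Bprod i ≤ S := by
        calc S * Bprod i ≤ S * 1 := mul_le_mul_of_nonneg_left (hB1 i) hS.le
          _ = S := mul_one _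
      have hA := hblkA i z (S * Bprod i) hβS ih (m i) le_rfl
      rw [show m i - m i = 0 from by omega, hP01 i] at hA
      have hP00 : (0:ℝ) ≤ ∏ t ∈ Finset.Ico 1 (m i), ρseq t :=
        Finset.prod_nonneg (fun t _ => (hρpos t).le)
      have hγ0 : 0 ≤ S * Bprod i * ∏ t ∈ Finset.Ico 1 (m i), ρseq t :=
        mul_nonneg (mul_nonneg hS.le (hB0 i)) hP00
      have hγS : (S * Bprod i * ∏ t ∈ Finset.Ico 1 (m i), ρseq t) * (p:ℝ) ^ (M i) ≤ S := by
        have h1 : Bprod i * ((∏ t ∈ Finset.Ico 1 (m i), ρseq t) * (p:ℝ) ^ (M i)) ≤ 1 :=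
          mul_le_one₀ (hB1 i) (hE0 i) (hprod i)
        calc (S * Bprod i * ∏ t ∈ Finset.Ico 1 (m i), ρseq t) * (p:ℝ) ^ (M i)
            = S * (Bprod i * ((∏ t ∈ Finset.Ico 1 (m i), ρseq t) * (p:ℝ) ^ (M i))) := by ring
          _ ≤ S * 1 := mul_le_mul_of_nonneg_left h1 hS.le
          _ = S := mul_one _
      have hB := hblkB i z (S * Bprod i * ∏ t ∈ Finset.Ico 1 (m i), ρseq t) hγ0 hγS hA
        (M i) le_rfl
      rw [hNrec i]
      calc ‖F^[N i + m i + M i] z - F^[N i + m i + M i] z₀‖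
          ≤ (S * Bprod i * ∏ t ∈ Finset.Ico 1 (m i), ρseq t) * (p:ℝ) ^ (M i) := hB
        _ = S * Bprod (i + 1) := by
            simp only [hBdef]
            rw [Finset.prod_range_succ]
            ring
  -- the global tracking bound
  have hglob : ∀ z : K, ‖z - z₀‖ ≤ S → ∀ n, ‖F^[n] z - F^[n] z₀‖ ≤ S := by
    intro z hz n
    obtain ⟨i, j, hc⟩ := hcov n
    have hβS : S * Bprod i ≤ S := by
      calc S * Bprod i ≤ S * 1 := mul_le_mul_of_nonneg_left (hB1 i) hS.le
        _ = S := mul_one _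
    rcases hc with ⟨hj, rfl⟩ | ⟨hj, rfl⟩
    · have h1 := hblkA i z (S * Bprod i) hβS (hmain z hz i) j hj.le
      refine h1.trans ?_
      have hprodle : ∏ t ∈ Finset.Ico (m i - j) (m i), ρseq t ≤ 1 :=
        Finset.prod_le_one (fun t _ => (hρpos t).le) (fun t _ => hρ_le1 t)
      calc S * Bprod i * ∏ t ∈ Finset.Ico (m i - j) (m i), ρseq t
          ≤ S * Bprod i * 1 := by
            apply mul_le_mul_of_nonneg_left hprodle
            exact mul_nonneg hS.le (hB0 i)
        _ ≤ S := by rw [mul_one]; exact hβS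
    · have hA := hblkA i z (S * Bprod i) hβS (hmain z hz i) (m i) le_rfl
      rw [show m i - m i = 0 from by omega, hP01 i] at hA
      have hP00 : (0:ℝ) ≤ ∏ t ∈ Finset.Ico 1 (m i), ρseq t :=
        Finset.prod_nonneg (fun t _ => (hρpos t).le)
      have hγ0 : 0 ≤ S * Bprod i * ∏ t ∈ Finset.Ico 1 (m i), ρseq t :=
        mul_nonneg (mul_nonneg hS.le (hB0 i)) hP00
      have hγS : (S * Bprod i * ∏ t ∈ Finset.Ico 1 (m i), ρseq t) * (p:ℝ) ^ (M i) ≤ S := by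
        have h1 : Bprod i * ((∏ t ∈ Finset.Ico 1 (m i), ρseq t) * (p:ℝ) ^ (M i)) ≤ 1 :=
          mul_le_one₀ (hB1 i) (hE0 i) (hprod i)
        calc (S * Bprod i * ∏ t ∈ Finset.Ico 1 (m i), ρseq t) * (p:ℝ) ^ (M i)
            = S * (Bprod i * ((∏ t ∈ Finset.Ico 1 (m i), ρseq t) * (p:ℝ) ^ (M i))) := by ring
          _ ≤ S * 1 := mul_le_mul_of_nonneg_left h1 hS.le
          _ = S := mul_one _
      have hB := hblkB i z (S * Bprod i * ∏ t ∈ Finset.Ico 1 (m i), ρseq t) hγ0 hγS hA j hj.le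
      refine hB.trans ?_
      calc (S * Bprod i * ∏ t ∈ Finset.Ico 1 (m i), ρseq t) * (p:ℝ) ^ j
          ≤ (S * Bprod i * ∏ t ∈ Finset.Ico 1 (m i), ρseq t) * (p:ℝ) ^ (M i) :=
            mul_le_mul_of_nonneg_left (pow_le_pow_right₀ (by linarith) hj.le) hγ0
        _ ≤ S := hγS
  constructor
  · -- first conclusion: D ⊆ K(Q_{λ₀}, B)
    intro z hz n
    rw [mem_closedBall, dist_eq_norm] at hz
    rw [mem_closedBall, dist_zero_right]
    refine (aux_norm_le_max _ (F^[n] z₀)).trans (max_le ?_ ?_)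
    · exact (hwle1 n).trans hrhat.le
    · exact (hglob z hz n).trans (by linarith)
  · -- second conclusion
    intro hMt
    have hNmono : Monotone N := monotone_nat_of_le_succ (fun i => by rw [hNrec i]; omega)
    have hNge : ∀ i, i ≤ N i := by
      intro i
      induction i with
      | zero => omega
      | succ i ih =>
        have h1 := hm i
        have h2 := hM i
        rw [hNrec i]
        omega
    have hsep : ∀ q r : ℕ, ‖F^[q] z₀ - F^[r] z₀‖ ≤ S →
        (‖F^[q] z₀‖ < 1 ↔ ‖F^[r] z₀‖ < 1) := by
      intro q r hqr
      constructor
      · intro hq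
        by_contra hr
        have hr1 : ‖F^[r] z₀‖ = 1 := le_antisymm (hwle1 r) (not_lt.mp hr)
        have h1 : ‖F^[q] z₀ - F^[r] z₀‖ = 1 := by
          rw [aux_norm_sub_eq_right (by rw [hr1]; exact hq), hr1]
        rw [h1] at hqr
        linarith
      · intro hr
        by_contra hq
        have hq1 : ‖F^[q] z₀‖ = 1 := le_antisymm (hwle1 q) (not_lt.mp hq)
        have h1 : ‖F^[q] z₀ - F^[r] z₀‖ = 1 := by
          rw [aux_norm_sub_eq_left (by rw [hq1]; exact hr), hq1]
        rw [h1] at hqr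
        linarith
    have hsym1 : ∀ i j, j < M i → ¬ (‖F^[N i + m i + j] z₀‖ < 1) := by
      intro i j hj
      rw [hw1 i j hj]
      exact lt_irrefl 1
    constructor
    · -- disjointness of the images of D
      have key : ∀ k l : ℕ, k < l →
          (F^[k] '' closedBall z₀ S) ∩ (F^[l] '' closedBall z₀ S) = ∅ := by
        intro k l hkl
        rw [Set.eq_empty_iff_forall_notMem]
        rintro y ⟨⟨z, hzmem, hzk⟩, ⟨z', hzmem', hzl⟩⟩
        rw [mem_closedBall, dist_eq_norm] at hzmem hzmem'
        set P := l - k with hP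
        have hP1 : 1 ≤ P := by omega
        have horb : ∀ q, k ≤ q → ‖F^[q] z₀ - F^[q + P] z₀‖ ≤ S := by
          intro q hq
          have h1 : F^[q] z = F^[q + P] z' := by
            have e1 : F^[q] z = F^[q - k] (F^[k] z) := by
              rw [← Function.iterate_add_apply]
              congr 1
              omega
            have e2 : F^[q + P] z' = F^[q - k] (F^[l] z') := by
              rw [← Function.iterate_add_apply]
              congr 1
              omega
            rw [e1, e2, hzk, hzl]
          refine (aux_triangle _ (F^[q] z) _).trans (max_le ?_ ?_)
          · rw [norm_sub_rev]
            exact hglob z hzmem q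
          · rw [h1]
            exact hglob z' hzmem' (q + P)
        have hper : ∀ s q, k ≤ q → (‖F^[q] z₀‖ < 1 ↔ ‖F^[q + P * s] z₀‖ < 1) := by
          intro s
          induction s with
          | zero => intro q _; simp
          | succ s ih =>
            intro q hq
            have h1 := ih q hq
            have h2 := hsep (q + P * s) (q + P * s + P) (horb _ (by omega))
            rw [show q + P * (s+1) = q + P * s + P from by ring]
            exact h1.trans h2
        obtain ⟨i, hMiP, hik⟩ := ((hMt.eventually_ge_atTop P).and (eventually_ge_atTop k)).exists
        have hqk : k ≤ N k := hNge k
        have hθq : ‖F^[N k] z₀‖ < 1 := by simpa using hit0 k 0 (hm k)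
        have hrq : N k ≤ N i + m i := le_trans (hNmono hik) (by omega)
        obtain ⟨s, j, hjP, hsj⟩ := aux_mul_step P hP1 (N i + m i - N k)
        have hsj' : N k + P * s = N i + m i + j := by
          rw [hsj]
          omega
        have hθr : ‖F^[N i + m i + j] z₀‖ < 1 := by
          rw [← hsj']
          exact (hper s (N k) hqk).mp hθq
        exact hsym1 i j (lt_of_lt_of_le hjP hMiP) hθr
      intro k l hkl
      rcases lt_or_gt_of_ne hkl with hlt | hlt
      · exact key k l hlt
      · rw [Set.inter_comm]
        exact key l k hlt
    · -- no attraction to an attracting cycle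
      intro k hk w hwfix hwder x hx hten
      rw [mem_closedBall, dist_eq_norm] at hx
      have hm_ge : ∀ i, M i + 1 ≤ m i := by
        intro i
        by_contra hlt
        push_neg at hlt
        have h1 : rho ^ (m i - 1) ≤ ∏ t ∈ Finset.Ico 1 (m i), ρseq t := by
          calc rho ^ (m i - 1) = ∏ _t ∈ Finset.Ico 1 (m i), rho := by
                rw [Finset.prod_const, Nat.card_Ico]
            _ ≤ ∏ t ∈ Finset.Ico 1 (m i), ρseq t :=
                Finset.prod_le_prod (fun _ _ => hrho_pos.le) (fun t _ => (hρ_gt t).le)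
        have h2 : rho ^ (m i - 1) * (p:ℝ) ^ (M i) ≤ 1 :=
          le_trans (mul_le_mul_of_nonneg_right h1 (by positivity)) (hprod i)
        have hMi1 := hM i
        have h3 : rho ^ (M i - 1) ≤ rho ^ (m i - 1) :=
          pow_le_pow_of_le_one hrho_pos.le hrho_lt1.le (by omega)
        have h5 : 1 ≤ rho * p := by
          calc (1:ℝ) = (p:ℝ)⁻¹ * p := by field_simp
            _ ≤ rho * p := mul_le_mul_of_nonneg_right hrho_ge hpR0.le
        have h6 : (p:ℝ) ≤ rho ^ (M i - 1) * (p:ℝ) ^ (M i) := by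
          have e : (p:ℝ) ^ (M i) = (p:ℝ) ^ (M i - 1) * p := by
            rw [← pow_succ]
            congr 1
            omega
          calc (p:ℝ) = 1 * p := (one_mul _).symm
            _ ≤ (rho * p) ^ (M i - 1) * p :=
                mul_le_mul_of_nonneg_right (one_le_pow₀ h5) hpR0.le
            _ = rho ^ (M i - 1) * (p:ℝ) ^ (M i) := by rw [e, mul_pow]; ring
        have h7 : (p:ℝ) ≤ 1 :=
          le_trans h6 (le_trans (mul_le_mul_of_nonneg_right h3 (by positivity)) h2)
        linarith
      have hev : ∀ᶠ n in atTop,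
          (⨅ j : Fin k, ‖F^[n] x - F^[(j:ℕ)] w‖) < S := hten.eventually_lt_const hS
      obtain ⟨n₀, hn₀⟩ := eventually_atTop.mp hev
      obtain ⟨i, hMik, hin₀⟩ :=
        ((hMt.eventually_ge_atTop k).and (eventually_ge_atTop n₀)).exists
      have hmik : k + 1 ≤ m i := by
        have := hm_ge i
        omega
      haveI : Nonempty (Fin k) := ⟨⟨0, hk⟩⟩
      have hposn : ∀ t : Fin (k+1), n₀ ≤ N i + (m i - ((t:ℕ)+1)) :=
        fun t => le_trans hin₀ (le_trans (hNge i) (Nat.le_add_right _ _))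
      have hsel : ∀ t : Fin (k+1), ∃ j : Fin k,
          ‖F^[N i + (m i - ((t:ℕ)+1))] x - F^[(j:ℕ)] w‖ < S := by
        intro t
        have h1 := hn₀ _ (hposn t)
        obtain ⟨j, hj⟩ := exists_eq_ciInf_of_finite
          (f := fun j : Fin k => ‖F^[N i + (m i - ((t:ℕ)+1))] x - F^[(j:ℕ)] w‖)
        exact ⟨j, by rw [hj]; exact h1⟩
      choose sel hsel' using hsel
      obtain ⟨t, t', htne, hteq⟩ := Fintype.exists_ne_map_eq_of_card_lt sel (by simp)
      have hradt : ∀ t : Fin (k+1),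
          ‖F^[N i + (m i - ((t:ℕ)+1))] z₀‖ = ρseq ((t:ℕ)+1) := by
        intro t
        apply hrad i ((t:ℕ)+1)
        have := t.isLt
        omega
      have hnear : ∀ t : Fin (k+1),
          ‖F^[N i + (m i - ((t:ℕ)+1))] z₀ - F^[(sel t : ℕ)] w‖ ≤ S := by
        intro t
        refine (aux_triangle _ (F^[N i + (m i - ((t:ℕ)+1))] x) _).trans (max_le ?_ ?_)
        · rw [norm_sub_rev]
          exact hglob x hx _
        · exact (hsel' t).le
      have hcc : ‖F^[N i + (m i - ((t:ℕ)+1))] z₀ - F^[N i + (m i - ((t':ℕ)+1))] z₀‖ ≤ S := by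
        refine (aux_triangle _ (F^[(sel t : ℕ)] w) _).trans (max_le (hnear t) ?_)
        rw [norm_sub_rev, hteq]
        exact hnear t'
      have hneq : ‖F^[N i + (m i - ((t:ℕ)+1))] z₀‖ ≠ ‖F^[N i + (m i - ((t':ℕ)+1))] z₀‖ := by
        rw [hradt t, hradt t']
        apply hρanti.injective.ne
        intro hcontra
        exact htne (Fin.ext (by omega))
      rw [aux_norm_sub_eq_max hneq, hradt t, hradt t'] at hcc
      have h1 : rho < ρseq ((t:ℕ)+1) := hρ_gt _
      have h2 : ρseq ((t:ℕ)+1) ≤ S := le_trans (le_max_left _ _) hcc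
      linarith
end

section
/- Let M ∈ ℕ, M ≥ 1, and let x₀, x₁ ∈ ℂ_p with |x₀ − 1| ≤ p^{−M} and |x₁ − 1| ≤ p^{−M}. If λ₀, λ₁ ∈ Λ satisfy |λ₀ − λ₁| = |x₀ − x₁|, then |Q_{λ₀}^M(x₀) − Q_{λ₁}^M(x₁)| = p^M·|λ₀ − λ₁|. -/
open Filter Metric

section Aux

variable {K : Type*} [NontriviallyNormedField K] [IsUltrametricDist K]

open IsUltrametricDist

lemma aux_norm_one {w : K} (hw : ‖w - 1‖ < 1) : ‖w‖ = 1 := by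
  have h := norm_add_eq_max_of_norm_ne_norm (x := w - 1) (y := (1 : K))
    (by rw [norm_one]; exact hw.ne)
  rw [sub_add_cancel] at h
  rw [h, norm_one, max_eq_right hw.le]

lemma aux_pow_sub_pow {w₀ w₁ : K} (h₀ : ‖w₀‖ ≤ 1) (h₁ : ‖w₁‖ ≤ 1) (n : ℕ) :
    ‖w₀ ^ n - w₁ ^ n‖ ≤ ‖w₀ - w₁‖ := by
  rw [← geom_sum₂_mul, norm_mul]
  calc ‖∑ i ∈ Finset.range n, w₀ ^ i * w₁ ^ (n - 1 - i)‖ * ‖w₀ - w₁‖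
      ≤ 1 * ‖w₀ - w₁‖ := by
        refine mul_le_mul_of_nonneg_right ?_ (norm_nonneg _)
        refine norm_sum_le_of_forall_le_of_nonneg zero_le_one fun i _ => ?_
        rw [norm_mul, norm_pow, norm_pow]
        exact mul_le_one₀ (pow_le_one₀ (norm_nonneg _) h₀) (by positivity)
          (pow_le_one₀ (norm_nonneg _) h₁)
    _ = ‖w₀ - w₁‖ := one_mul _

lemma aux_qser_diff {a : ℕ → K} {C : ℝ} (hC0 : 0 ≤ C) (hCa : ∀ i, ‖a i‖ ≤ C)
    (hsum : ∀ w : K, ‖w‖ ≤ 1 → Summable fun i => a i * w ^ i)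
    {w₀ w₁ : K} (h₀ : ‖w₀‖ ≤ 1) (h₁ : ‖w₁‖ ≤ 1) :
    ‖Qser a w₀ - Qser a w₁‖ ≤ C * ‖w₀ - w₁‖ := by
  unfold Qser
  rw [← Summable.tsum_sub (hsum w₀ h₀) (hsum w₁ h₁)]
  refine norm_tsum_le_of_forall_le_of_nonneg (mul_nonneg hC0 (norm_nonneg _)) fun i => ?_
  rw [← mul_sub, norm_mul]
  exact mul_le_mul (hCa i) (aux_pow_sub_pow h₀ h₁ i) (norm_nonneg _) hC0

variable [CharZero K]

lemma aux_norm_mu {p : ℕ} (hp : 2 ≤ p) (hpnorm : ‖(p : K)‖ = (p : ℝ)⁻¹)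
    {lam : K} (hlam : ‖lam - 1‖ < 1) : ‖1 - lam / (p : K)‖ = (p : ℝ) := by
  have hp1 : (1 : ℝ) < (p : ℝ) := by exact_mod_cast hp.trans_lt' one_lt_two
  have hpos : (0 : ℝ) < (p : ℝ) := lt_trans one_pos hp1
  have hdiv : ‖lam / (p : K)‖ = (p : ℝ) := by
    rw [norm_div, aux_norm_one hlam, hpnorm, one_div, inv_inv]
  have hne : ‖(1 : K)‖ ≠ ‖-(lam / (p : K))‖ := by
    rw [norm_one, norm_neg, hdiv]; exact hp1.ne
  have h := norm_add_eq_max_of_norm_ne_norm hne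
  rw [← sub_eq_add_neg] at h
  rw [h, norm_one, norm_neg, hdiv, max_eq_right hp1.le]

/-- The key expansion lemma: `Q*_λ` expands distances by exactly `p` near `1`. -/
lemma aux_expand {p : ℕ} (hp : 2 ≤ p) (hpnorm : ‖(p : K)‖ = (p : ℝ)⁻¹)
    {a : ℕ → K} {C : ℝ} (hC0 : 0 ≤ C) (hC1 : C < 1) (hCa : ∀ i, ‖a i‖ ≤ C)
    (hsum : ∀ w : K, ‖w‖ ≤ 1 → Summable fun i => a i * w ^ i)
    {lam : K} (hlam : ‖lam - 1‖ < 1)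
    {w₀ w₁ : K} (h₀ : ‖w₀ - 1‖ ≤ (p : ℝ)⁻¹) (h₁ : ‖w₁ - 1‖ ≤ (p : ℝ)⁻¹) :
    ‖Qstar p a lam w₀ - Qstar p a lam w₁‖ = (p : ℝ) * ‖w₀ - w₁‖ := by
  have hp1 : (1 : ℝ) < (p : ℝ) := by exact_mod_cast hp.trans_lt' one_lt_two
  have hpos : (0 : ℝ) < (p : ℝ) := lt_trans one_pos hp1
  have hinvlt : (p : ℝ)⁻¹ < 1 := inv_lt_one_of_one_lt₀ hp1
  have hw₀ : ‖w₀‖ = 1 := aux_norm_one (h₀.trans_lt hinvlt)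
  have hw₁ : ‖w₁‖ = 1 := aux_norm_one (h₁.trans_lt hinvlt)
  rcases eq_or_ne w₀ w₁ with rfl | hne
  · simp
  have hd : 0 < ‖w₀ - w₁‖ := by
    rw [norm_pos_iff]; exact sub_ne_zero_of_ne hne
  set μ : K := 1 - lam / (p : K) with hμ
  have hμn : ‖μ‖ = (p : ℝ) := aux_norm_mu hp hpnorm hlam
  have key : Qstar p a lam w₀ - Qstar p a lam w₁ =
      μ * w₀ ^ p * (w₀ - w₁) +
      ((w₀ ^ p - w₁ ^ p) * (1 + μ * (w₁ - 1)) + (Qser a w₀ - Qser a w₁)) := by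
    simp only [Qstar, Pfam, hμ]
    ring
  have hmain : ‖μ * w₀ ^ p * (w₀ - w₁)‖ = (p : ℝ) * ‖w₀ - w₁‖ := by
    rw [norm_mul, norm_mul, norm_pow, hw₀, one_pow, hμn, mul_one]
  have hfac : ‖(1 : K) + μ * (w₁ - 1)‖ ≤ 1 := by
    refine (norm_add_le_max _ _).trans (max_le norm_one.le ?_)
    rw [norm_mul, hμn]
    calc (p : ℝ) * ‖w₁ - 1‖ ≤ (p : ℝ) * (p : ℝ)⁻¹ :=
          mul_le_mul_of_nonneg_left h₁ hpos.le
      _ = 1 := mul_inv_cancel₀ hpos.ne'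
  have ht1 : ‖(w₀ ^ p - w₁ ^ p) * (1 + μ * (w₁ - 1))‖ ≤ ‖w₀ - w₁‖ := by
    rw [norm_mul]
    calc ‖w₀ ^ p - w₁ ^ p‖ * ‖1 + μ * (w₁ - 1)‖ ≤ ‖w₀ - w₁‖ * 1 :=
          mul_le_mul (aux_pow_sub_pow hw₀.le hw₁.le p) hfac (norm_nonneg _) (norm_nonneg _)
      _ = ‖w₀ - w₁‖ := mul_one _
  have ht2 : ‖Qser a w₀ - Qser a w₁‖ ≤ ‖w₀ - w₁‖ := by
    refine (aux_qser_diff hC0 hCa hsum hw₀.le hw₁.le).trans ?_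
    nlinarith
  have hrest : ‖(w₀ ^ p - w₁ ^ p) * (1 + μ * (w₁ - 1)) + (Qser a w₀ - Qser a w₁)‖
      ≤ ‖w₀ - w₁‖ := (norm_add_le_max _ _).trans (max_le ht1 ht2)
  have hlt : ‖(w₀ ^ p - w₁ ^ p) * (1 + μ * (w₁ - 1)) + (Qser a w₀ - Qser a w₁)‖
      < ‖μ * w₀ ^ p * (w₀ - w₁)‖ := by
    rw [hmain]; nlinarith
  rw [key, IsUltrametricDist.norm_add_eq_max_of_norm_ne_norm hlt.ne', max_eq_left hlt.le, hmain]

/-- The `λ`-variation lemma. -/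
lemma aux_lamvar {p : ℕ} (hp : 2 ≤ p) (hpnorm : ‖(p : K)‖ = (p : ℝ)⁻¹)
    (a : ℕ → K) (lam₀ lam₁ : K)
    {w : K} (hw : ‖w - 1‖ ≤ (p : ℝ)⁻¹) :
    ‖Qstar p a lam₀ w - Qstar p a lam₁ w‖ ≤ ‖lam₀ - lam₁‖ := by
  have hp1 : (1 : ℝ) < (p : ℝ) := by exact_mod_cast hp.trans_lt' one_lt_two
  have hpos : (0 : ℝ) < (p : ℝ) := lt_trans one_pos hp1
  have hinvlt : (p : ℝ)⁻¹ < 1 := inv_lt_one_of_one_lt₀ hp1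
  have hwn : ‖w‖ = 1 := aux_norm_one (hw.trans_lt hinvlt)
  have key : Qstar p a lam₀ w - Qstar p a lam₁ w
      = (lam₀ - lam₁) / (p : K) * (w ^ p * (1 - w)) := by
    simp only [Qstar, Pfam]; ring
  have h1w : ‖(1 : K) - w‖ ≤ (p : ℝ)⁻¹ := by rw [norm_sub_rev]; exact hw
  rw [key, norm_mul, norm_div, hpnorm, norm_mul, norm_pow, hwn, one_pow, one_mul]
  calc ‖lam₀ - lam₁‖ / (p : ℝ)⁻¹ * ‖1 - w‖ ≤ ‖lam₀ - lam₁‖ / (p : ℝ)⁻¹ * (p : ℝ)⁻¹ :=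
        mul_le_mul_of_nonneg_left h1w (by positivity)
    _ = ‖lam₀ - lam₁‖ := div_mul_cancel₀ _ (by positivity)

end Aux

/-- If `|x₀ − 1| ≤ p^{−M}`, `|x₁ − 1| ≤ p^{−M}` and the parameters `λ₀, λ₁ ∈ Λ` satisfy
`|λ₀ − λ₁| = |x₀ − x₁|`, then `|Q_{λ₀}^M(x₀) − Q_{λ₁}^M(x₁)| = p^M·|λ₀ − λ₁|`.
Here `K` plays the role of `ℂ_p`. -/
theorem statement18 (p : ℕ) (hp : p.Prime)
    {K : Type*} [NontriviallyNormedField K] [IsAlgClosed K] [CompleteSpace K]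
    [IsUltrametricDist K] [CharZero K]
    (hpnorm : ‖(p : K)‖ = (p : ℝ)⁻¹)
    (rhat : ℝ) (hrhat : 1 < rhat) (hrhatval : ∃ x : K, x ≠ 0 ∧ ‖x‖ = rhat)
    (a : ℕ → K)
    (hQnorm : ∃ C : ℝ, C < (p : ℝ) ^ (-(1:ℝ) / ((p : ℝ) - 1)) ∧ ∀ i : ℕ, ‖a i‖ * rhat ^ i ≤ C)
    (h : K → K)
    (hfix : ∀ lam : K, ‖lam - 1‖ < 1 →
      ‖h lam - 1‖ ≤ ‖Qser a 1‖ / p ∧ Qstar p a lam (h lam) = h lam)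
    (M : ℕ) (hM : 1 ≤ M) (x₀ x₁ : K)
    (hx₀ : ‖x₀ - 1‖ ≤ ((p : ℝ) ^ M)⁻¹) (hx₁ : ‖x₁ - 1‖ ≤ ((p : ℝ) ^ M)⁻¹)
    (lam₀ lam₁ : K) (hlam₀ : ‖lam₀ - 1‖ < 1) (hlam₁ : ‖lam₁ - 1‖ < 1)
    (heq : ‖lam₀ - lam₁‖ = ‖x₀ - x₁‖) :
    ‖(Qconj p a h lam₀)^[M] x₀ - (Qconj p a h lam₁)^[M] x₁‖ = (p : ℝ) ^ M * ‖lam₀ - lam₁‖ := by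
  classical
  obtain ⟨C, hCρ, hCb⟩ := hQnorm
  have hp2 : 2 ≤ p := hp.two_le
  have hp1 : (1 : ℝ) < (p : ℝ) := by exact_mod_cast hp2.trans_lt' one_lt_two
  have hpos : (0 : ℝ) < (p : ℝ) := lt_trans one_pos hp1
  have hinvlt : (p : ℝ)⁻¹ < 1 := inv_lt_one_of_one_lt₀ hp1
  -- basic facts about C
  have hCa : ∀ i, ‖a i‖ ≤ C := by
    intro i
    have h1 : (1 : ℝ) ≤ rhat ^ i := one_le_pow₀ hrhat.le
    calc ‖a i‖ = ‖a i‖ * 1 := (mul_one _).symm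
      _ ≤ ‖a i‖ * rhat ^ i := by nlinarith [norm_nonneg (a i)]
      _ ≤ C := hCb i
  have hC0 : 0 ≤ C := le_trans (norm_nonneg (a 0)) (hCa 0)
  have hC1 : C < 1 := by
    refine hCρ.trans_le (Real.rpow_le_one_of_one_le_of_nonpos hp1.le ?_)
    apply div_nonpos_of_nonpos_of_nonneg <;> nlinarith
  -- summability
  have hsum : ∀ w : K, ‖w‖ ≤ 1 → Summable fun i => a i * w ^ i := by
    intro w hw
    refine Summable.of_norm_bounded
      ((summable_geometric_of_lt_one (by positivity)
        (inv_lt_one_of_one_lt₀ hrhat)).mul_left C) fun i => ?_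
    have hr : (0 : ℝ) < rhat ^ i := by positivity
    show ‖a i * w ^ i‖ ≤ C * rhat⁻¹ ^ i
    rw [norm_mul, norm_pow, inv_pow, ← div_eq_mul_inv, le_div_iff₀ hr]
    calc ‖a i‖ * ‖w‖ ^ i * rhat ^ i ≤ ‖a i‖ * 1 * rhat ^ i := by
          have h2 := pow_le_one₀ (norm_nonneg w) hw (n := i)
          exact mul_le_mul_of_nonneg_right
            (mul_le_mul_of_nonneg_left h2 (norm_nonneg _)) hr.le
      _ = ‖a i‖ * rhat ^ i := by ring
      _ ≤ C := hCb i
  -- the fixed point is close to 1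
  have hQ1 : ‖Qser a 1‖ ≤ C := by
    refine IsUltrametricDist.norm_tsum_le_of_forall_le_of_nonneg hC0 fun i => ?_
    simpa using hCa i
  have hh1 : ∀ lam : K, ‖lam - 1‖ < 1 → ‖h lam - 1‖ ≤ (p : ℝ)⁻¹ := by
    intro lam hlam
    refine ((hfix lam hlam).1).trans ?_
    rw [div_le_iff₀ hpos, inv_mul_cancel₀ hpos.ne']
    nlinarith
  -- abbreviation for the expansion lemma
  have E : ∀ lam : K, ‖lam - 1‖ < 1 → ∀ w₀ w₁ : K, ‖w₀ - 1‖ ≤ (p : ℝ)⁻¹ →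
      ‖w₁ - 1‖ ≤ (p : ℝ)⁻¹ →
      ‖Qstar p a lam w₀ - Qstar p a lam w₁‖ = (p : ℝ) * ‖w₀ - w₁‖ :=
    fun lam hlam w₀ w₁ h₀ h₁ => aux_expand hp2 hpnorm hC0 hC1 hCa hsum hlam h₀ h₁
  -- Lipschitz bound for h
  have hΔh : (p : ℝ) * ‖h lam₀ - h lam₁‖ ≤ ‖lam₀ - lam₁‖ := by
    have e1 : ‖Qstar p a lam₀ (h lam₀) - Qstar p a lam₀ (h lam₁)‖
        = (p : ℝ) * ‖h lam₀ - h lam₁‖ :=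
      E lam₀ hlam₀ _ _ (hh1 lam₀ hlam₀) (hh1 lam₁ hlam₁)
    have e2 : Qstar p a lam₀ (h lam₀) - Qstar p a lam₀ (h lam₁)
        = (h lam₀ - h lam₁) + (Qstar p a lam₁ (h lam₁) - Qstar p a lam₀ (h lam₁)) := by
      rw [(hfix lam₀ hlam₀).2, (hfix lam₁ hlam₁).2]; ring
    have e3 : ‖Qstar p a lam₁ (h lam₁) - Qstar p a lam₀ (h lam₁)‖ ≤ ‖lam₀ - lam₁‖ := by
      rw [norm_sub_rev (Qstar p a lam₁ (h lam₁))]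
      exact aux_lamvar hp2 hpnorm a lam₀ lam₁ (hh1 lam₁ hlam₁)
    have e4 : (p : ℝ) * ‖h lam₀ - h lam₁‖ ≤ max ‖h lam₀ - h lam₁‖ ‖lam₀ - lam₁‖ := by
      rw [← e1, e2]
      exact (IsUltrametricDist.norm_add_le_max _ _).trans
        (max_le_max le_rfl e3)
    rcases max_cases ‖h lam₀ - h lam₁‖ ‖lam₀ - lam₁‖ with ⟨hmx, _⟩ | ⟨hmx, _⟩
    · rw [hmx] at e4
      have : ‖h lam₀ - h lam₁‖ = 0 := by nlinarith [norm_nonneg (h lam₀ - h lam₁)]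
      rw [this, mul_zero]; exact norm_nonneg _
    · rwa [hmx] at e4
  have hΔh' : ‖h lam₀ - h lam₁‖ ≤ ‖lam₀ - lam₁‖ := by
    nlinarith [norm_nonneg (h lam₀ - h lam₁)]
  -- the map sends the ball of radius p⁻ᵏ around 1 into the ball of radius p^{1-k}
  have ballmap : ∀ lam : K, ‖lam - 1‖ < 1 → ∀ y : K, ‖y - 1‖ ≤ (p : ℝ)⁻¹ →
      ‖Qconj p a h lam y - 1‖ = (p : ℝ) * ‖y - 1‖ := by
    intro lam hlam y hy
    have e0 : Qconj p a h lam y - 1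
        = Qstar p a lam (y + h lam - 1) - Qstar p a lam (h lam) := by
      rw [(hfix lam hlam).2]; unfold Qconj; ring
    have harg : ‖(y + h lam - 1) - 1‖ ≤ (p : ℝ)⁻¹ := by
      have : (y + h lam - 1) - 1 = (y - 1) + (h lam - 1) := by ring
      rw [this]
      exact (IsUltrametricDist.norm_add_le_max _ _).trans (max_le hy (hh1 lam hlam))
    have := E lam hlam (y + h lam - 1) (h lam) harg (hh1 lam hlam)
    rw [e0, this]
    congr 1
    congr 1
    ring
  -- the one-step lemma
  have step : ∀ y₀ y₁ : K, ‖y₀ - 1‖ ≤ (p : ℝ)⁻¹ → ‖y₁ - 1‖ ≤ (p : ℝ)⁻¹ →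
      ‖lam₀ - lam₁‖ ≤ ‖y₀ - y₁‖ → y₀ ≠ y₁ →
      ‖Qconj p a h lam₀ y₀ - Qconj p a h lam₁ y₁‖ = (p : ℝ) * ‖y₀ - y₁‖ := by
    intro y₀ y₁ hy₀ hy₁ hle hne
    have hd : 0 < ‖y₀ - y₁‖ := by rw [norm_pos_iff]; exact sub_ne_zero_of_ne hne
    have harg : ∀ (y : K), ‖y - 1‖ ≤ (p : ℝ)⁻¹ → ∀ lam : K, ‖lam - 1‖ < 1 →
        ‖(y + h lam - 1) - 1‖ ≤ (p : ℝ)⁻¹ := by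
      intro y hy lam hlam
      have : (y + h lam - 1) - 1 = (y - 1) + (h lam - 1) := by ring
      rw [this]
      exact (IsUltrametricDist.norm_add_le_max _ _).trans (max_le hy (hh1 lam hlam))
    -- part A: variation in the point
    have hA : ‖Qconj p a h lam₀ y₀ - Qconj p a h lam₀ y₁‖ = (p : ℝ) * ‖y₀ - y₁‖ := by
      have e0 : Qconj p a h lam₀ y₀ - Qconj p a h lam₀ y₁
          = Qstar p a lam₀ (y₀ + h lam₀ - 1) - Qstar p a lam₀ (y₁ + h lam₀ - 1) := by
        unfold Qconj; ring
      rw [e0, E lam₀ hlam₀ _ _ (harg y₀ hy₀ lam₀ hlam₀) (harg y₁ hy₁ lam₀ hlam₀)]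
      congr 1
      congr 1
      ring
    -- part B: variation in the parameter
    have hB : ‖Qconj p a h lam₀ y₁ - Qconj p a h lam₁ y₁‖ ≤ ‖lam₀ - lam₁‖ := by
      have e0 : Qconj p a h lam₀ y₁ - Qconj p a h lam₁ y₁
          = (Qstar p a lam₀ (y₁ + h lam₀ - 1) - Qstar p a lam₀ (y₁ + h lam₁ - 1))
            + ((Qstar p a lam₀ (y₁ + h lam₁ - 1) - Qstar p a lam₁ (y₁ + h lam₁ - 1))
            + (h lam₁ - h lam₀)) := by
        unfold Qconj; ring
      have t1 : ‖Qstar p a lam₀ (y₁ + h lam₀ - 1) - Qstar p a lam₀ (y₁ + h lam₁ - 1)‖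
          ≤ ‖lam₀ - lam₁‖ := by
        have := E lam₀ hlam₀ _ _ (harg y₁ hy₁ lam₀ hlam₀) (harg y₁ hy₁ lam₁ hlam₁)
        rw [this]
        have : (y₁ + h lam₀ - 1) - (y₁ + h lam₁ - 1) = h lam₀ - h lam₁ := by ring
        rw [this]
        exact hΔh
      have t2 : ‖Qstar p a lam₀ (y₁ + h lam₁ - 1) - Qstar p a lam₁ (y₁ + h lam₁ - 1)‖
          ≤ ‖lam₀ - lam₁‖ :=
        aux_lamvar hp2 hpnorm a lam₀ lam₁ (harg y₁ hy₁ lam₁ hlam₁)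
      have t3 : ‖h lam₁ - h lam₀‖ ≤ ‖lam₀ - lam₁‖ := by
        rw [norm_sub_rev]; exact hΔh'
      rw [e0]
      exact (IsUltrametricDist.norm_add_le_max _ _).trans
        (max_le t1 ((IsUltrametricDist.norm_add_le_max _ _).trans (max_le t2 t3)))
    have hBA : ‖Qconj p a h lam₀ y₁ - Qconj p a h lam₁ y₁‖
        < ‖Qconj p a h lam₀ y₀ - Qconj p a h lam₀ y₁‖ := by
      rw [hA]
      exact lt_of_le_of_lt (hB.trans hle) (lt_mul_of_one_lt_left hd hp1)
    have e0 : Qconj p a h lam₀ y₀ - Qconj p a h lam₁ y₁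
        = (Qconj p a h lam₀ y₀ - Qconj p a h lam₀ y₁)
          + (Qconj p a h lam₀ y₁ - Qconj p a h lam₁ y₁) := by ring
    rw [e0, IsUltrametricDist.norm_add_eq_max_of_norm_ne_norm hBA.ne', max_eq_left hBA.le, hA]
  -- degenerate case
  rcases eq_or_ne lam₀ lam₁ with rfl | hlamne
  · have : x₀ = x₁ := by
      have : ‖x₀ - x₁‖ = 0 := by rw [← heq]; simp
      rw [norm_eq_zero, sub_eq_zero] at this; exact this
    subst this
    simp
  have hΔpos : 0 < ‖lam₀ - lam₁‖ := by
    rw [norm_pos_iff]; exact sub_ne_zero_of_ne hlamne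
  -- main induction
  have main : ∀ j, j ≤ M →
      ‖(Qconj p a h lam₀)^[j] x₀ - 1‖ ≤ ((p : ℝ) ^ (M - j))⁻¹ ∧
      ‖(Qconj p a h lam₁)^[j] x₁ - 1‖ ≤ ((p : ℝ) ^ (M - j))⁻¹ ∧
      ‖(Qconj p a h lam₀)^[j] x₀ - (Qconj p a h lam₁)^[j] x₁‖
        = (p : ℝ) ^ j * ‖lam₀ - lam₁‖ := by
    intro j
    induction j with
    | zero =>
      intro _
      simp only [Function.iterate_zero, id_eq, pow_zero, one_mul, Nat.sub_zero]
      exact ⟨hx₀, hx₁, heq.symm⟩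
    | succ j ih =>
      intro hj1
      have hj : j ≤ M := Nat.le_of_succ_le hj1
      obtain ⟨ih₀, ih₁, ihd⟩ := ih hj
      have hMj : 1 ≤ M - j := by omega
      have hple : ((p : ℝ) ^ (M - j))⁻¹ ≤ (p : ℝ)⁻¹ := by
        apply inv_anti₀ hpos
        calc (p : ℝ) = (p : ℝ) ^ 1 := (pow_one _).symm
          _ ≤ (p : ℝ) ^ (M - j) := pow_le_pow_right₀ hp1.le hMj
      have hb₀ : ‖(Qconj p a h lam₀)^[j] x₀ - 1‖ ≤ (p : ℝ)⁻¹ := ih₀.trans hple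
      have hb₁ : ‖(Qconj p a h lam₁)^[j] x₁ - 1‖ ≤ (p : ℝ)⁻¹ := ih₁.trans hple
      have hdpos : 0 < ‖(Qconj p a h lam₀)^[j] x₀ - (Qconj p a h lam₁)^[j] x₁‖ := by
        rw [ihd]; positivity
      have hne : (Qconj p a h lam₀)^[j] x₀ ≠ (Qconj p a h lam₁)^[j] x₁ := by
        intro hcontra
        rw [hcontra] at hdpos; simp at hdpos
      have hle : ‖lam₀ - lam₁‖
          ≤ ‖(Qconj p a h lam₀)^[j] x₀ - (Qconj p a h lam₁)^[j] x₁‖ := by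
        rw [ihd]
        exact le_mul_of_one_le_left (norm_nonneg _) (one_le_pow₀ hp1.le)
      refine ⟨?_, ?_, ?_⟩
      · rw [Function.iterate_succ_apply',
          ballmap lam₀ hlam₀ _ hb₀]
        have hsub : M - j = (M - (j + 1)) + 1 := by omega
        rw [hsub, pow_succ, mul_inv] at ih₀
        calc (p : ℝ) * ‖(Qconj p a h lam₀)^[j] x₀ - 1‖
            ≤ (p : ℝ) * (((p : ℝ) ^ (M - (j + 1)))⁻¹ * (p : ℝ)⁻¹) := by
              exact mul_le_mul_of_nonneg_left ih₀ hpos.le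
          _ = ((p : ℝ) ^ (M - (j + 1)))⁻¹ := by
              rw [mul_comm (((p : ℝ) ^ (M - (j + 1)))⁻¹), ← mul_assoc,
                mul_inv_cancel₀ hpos.ne', one_mul]
      · rw [Function.iterate_succ_apply',
          ballmap lam₁ hlam₁ _ hb₁]
        have hsub : M - j = (M - (j + 1)) + 1 := by omega
        rw [hsub, pow_succ, mul_inv] at ih₁
        calc (p : ℝ) * ‖(Qconj p a h lam₁)^[j] x₁ - 1‖
            ≤ (p : ℝ) * (((p : ℝ) ^ (M - (j + 1)))⁻¹ * (p : ℝ)⁻¹) := by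
              exact mul_le_mul_of_nonneg_left ih₁ hpos.le
          _ = ((p : ℝ) ^ (M - (j + 1)))⁻¹ := by
              rw [mul_comm (((p : ℝ) ^ (M - (j + 1)))⁻¹), ← mul_assoc,
                mul_inv_cancel₀ hpos.ne', one_mul]
      · rw [Function.iterate_succ_apply', Function.iterate_succ_apply',
          step _ _ hb₀ hb₁ hle hne, ihd, pow_succ]
        ring
  exact (main M le_rfl).2.2
end
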